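/- arXiv:2211.08663 — 3 statements merged into one kernel-verified Lean document; each statement's English description precedes it below -/
import Mathlib

section
/- Let t be an odd integer, and for each index m define 2×2 integer matrices C_{4m+1} = [[3(4m+3)t(t²+2), (6m+4)],[1,0]], C_{4m+2} = [[t, (6m+5)],[1,0]], C_{4m+3} = [[3(4m+5)t, (6m+8)],[1,0]], C_{4m+4} = [[t, (6m+7)],[1,0]], and A_m = C_{4m+4}C_{4m+3}C_{4m+2}C_{4m+1}. Then for every integer n ≥ 0, all four entries of the product A_{4n+3}A_{4n+2}A_{4n+1}A_{4n} are divisible by 2⁷. -/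
set_option maxRecDepth 4000

/-- The transfer matrix `A_m = C_{4m+4}·C_{4m+3}·C_{4m+2}·C_{4m+1}` of the continued
fraction of family №5 with `a = 1`, where
`C_{4m+1} = [[3(4m+3)t(t²+2), 6m+4],[1,0]]`, `C_{4m+2} = [[t, 6m+5],[1,0]]`,
`C_{4m+3} = [[3(4m+5)t, 6m+8],[1,0]]`, `C_{4m+4} = [[t, 6m+7],[1,0]]`. -/
def Amat (t : ℤ) (m : ℕ) : Matrix (Fin 2) (Fin 2) ℤ :=
  !![t, 6 * (m : ℤ) + 7; 1, 0] *
  !![3 * (4 * (m : ℤ) + 5) * t, 6 * (m : ℤ) + 8; 1, 0] *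
  !![t, 6 * (m : ℤ) + 5; 1, 0] *
  !![3 * (4 * (m : ℤ) + 3) * t * (t ^ 2 + 2), 6 * (m : ℤ) + 4; 1, 0]

def am000 (k n : ℤ) : ℤ := ((((920 + (7800*n)) + ((15552*(n*n)) + ((6240*k) + (53088*(k*n))))) + ((((105984*k)*(n*n)) + (19200*(k*k))) + (((163680*k)*(k*n)) + (((327168*k)*(k*(n*n))) + ((34560*k)*(k*k)))))) + (((((294912*k)*(k*(k*n))) + ((589824*(k*k))*(k*(n*n)))) + (((38880*k)*(k*(k*k))) + (((331776*(k*k))*(k*(k*n))) + ((663552*(k*k))*((k*k)*(n*n)))))) + ((((25920*(k*k))*(k*(k*k))) + (((221184*(k*k))*((k*k)*(k*n))) + (((442368*k)*(k*k))*((k*k)*(n*n))))) + (((8640*(k*k))*((k*k)*(k*k))) + ((((73728*k)*(k*k))*((k*k)*(k*n))) + (((147456*k)*(k*k))*((k*k)*(k*(n*n)))))))))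

def am001 (k n : ℤ) : ℤ := (((120 + ((1104*n) + (2304*(n*n)))) + ((480*k) + ((4416*(k*n)) + ((9216*k)*(n*n))))) + (((720*(k*k)) + (((6624*k)*(k*n)) + ((13824*k)*(k*(n*n))))) + (((480*k)*(k*k)) + (((4416*k)*(k*(k*n))) + ((9216*(k*k))*(k*(n*n)))))))

def am010 (k n : ℤ) : ℤ := ((((696 + (5856*n)) + ((11520*(n*n)) + (3840*k))) + (((32544*(k*n)) + ((64512*k)*(n*n))) + ((9504*(k*k)) + (((80928*k)*(k*n)) + ((161280*k)*(k*(n*n))))))) + (((((13536*k)*(k*k)) + ((115392*k)*(k*(k*n)))) + (((230400*(k*k))*(k*(n*n))) + ((10800*k)*(k*(k*k))))) + ((((92160*(k*k))*(k*(k*n))) + ((184320*(k*k))*((k*k)*(n*n)))) + (((4320*(k*k))*(k*(k*k))) + (((36864*(k*k))*((k*k)*(k*n))) + (((73728*k)*(k*k))*((k*k)*(n*n))))))))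

def am011 (k n : ℤ) : ℤ := (((92 + (840*n)) + ((1728*(n*n)) + (240*k))) + (((2208*(k*n)) + ((4608*k)*(n*n))) + ((240*(k*k)) + (((2208*k)*(k*n)) + ((4608*k)*(k*(n*n)))))))

def Am0 (k n : ℤ) : Matrix (Fin 2) (Fin 2) ℤ :=
  !![am000 k n, am001 k n; am010 k n, am011 k n]

def am100 (k n : ℤ) : ℤ := ((((3842 + (15576*n)) + ((15552*(n*n)) + ((26136*k) + (106080*(k*n))))) + ((((105984*k)*(n*n)) + (80568*(k*k))) + (((327264*k)*(k*n)) + (((327168*k)*(k*(n*n))) + ((145152*k)*(k*k)))))) + (((((589824*k)*(k*(k*n))) + ((589824*(k*k))*(k*(n*n)))) + (((163296*k)*(k*(k*k))) + (((663552*(k*k))*(k*(k*n))) + ((663552*(k*k))*((k*k)*(n*n)))))) + ((((108864*(k*k))*(k*(k*k))) + (((442368*(k*k))*((k*k)*(k*n))) + (((442368*k)*(k*k))*((k*k)*(n*n))))) + (((36288*(k*k))*((k*k)*(k*k))) + ((((147456*k)*(k*k))*((k*k)*(k*n))) + (((147456*k)*(k*k))*((k*k)*(k*(n*n)))))))))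

def am101 (k n : ℤ) : ℤ := (((540 + ((2256*n) + (2304*(n*n)))) + ((2160*k) + ((9024*(k*n)) + ((9216*k)*(n*n))))) + (((3240*(k*k)) + (((13536*k)*(k*n)) + ((13824*k)*(k*(n*n))))) + (((2160*k)*(k*k)) + (((9024*k)*(k*(k*n))) + ((9216*(k*k))*(k*(n*n)))))))

def am110 (k n : ℤ) : ℤ := ((((2880 + (11616*n)) + ((11520*(n*n)) + (16008*k))) + (((64800*(k*n)) + ((64512*k)*(n*n))) + ((39816*(k*k)) + (((161568*k)*(k*n)) + ((161280*k)*(k*(n*n))))))) + (((((56784*k)*(k*k)) + ((230592*k)*(k*(k*n)))) + (((230400*(k*k))*(k*(n*n))) + ((45360*k)*(k*(k*k))))) + ((((184320*(k*k))*(k*(k*n))) + ((184320*(k*k))*((k*k)*(n*n)))) + (((18144*(k*k))*(k*(k*k))) + (((73728*(k*k))*((k*k)*(k*n))) + (((73728*k)*(k*k))*((k*k)*(n*n))))))))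

def am111 (k n : ℤ) : ℤ := (((410 + (1704*n)) + ((1728*(n*n)) + (1080*k))) + (((4512*(k*n)) + ((4608*k)*(n*n))) + ((1080*(k*k)) + (((4512*k)*(k*n)) + ((4608*k)*(k*(n*n)))))))

def Am1 (k n : ℤ) : Matrix (Fin 2) (Fin 2) ℤ :=
  !![am100 k n, am101 k n; am110 k n, am111 k n]

def am200 (k n : ℤ) : ℤ := ((((8708 + (23352*n)) + ((15552*(n*n)) + ((59280*k) + (159072*(k*n))))) + ((((105984*k)*(n*n)) + (182832*(k*k))) + (((490848*k)*(k*n)) + (((327168*k)*(k*(n*n))) + ((329472*k)*(k*k)))))) + (((((884736*k)*(k*(k*n))) + ((589824*(k*k))*(k*(n*n)))) + (((370656*k)*(k*(k*k))) + (((995328*(k*k))*(k*(k*n))) + ((663552*(k*k))*((k*k)*(n*n)))))) + ((((247104*(k*k))*(k*(k*k))) + (((663552*(k*k))*((k*k)*(k*n))) + (((442368*k)*(k*k))*((k*k)*(n*n))))) + (((82368*(k*k))*((k*k)*(k*k))) + ((((221184*k)*(k*k))*((k*k)*(k*n))) + (((147456*k)*(k*k))*((k*k)*(k*(n*n)))))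))))

def am201 (k n : ℤ) : ℤ := (((1248 + ((3408*n) + (2304*(n*n)))) + ((4992*k) + ((13632*(k*n)) + ((9216*k)*(n*n))))) + (((7488*(k*k)) + (((20448*k)*(k*n)) + ((13824*k)*(k*(n*n))))) + (((4992*k)*(k*k)) + (((13632*k)*(k*(k*n))) + ((9216*(k*k))*(k*(n*n)))))))

def am210 (k n : ℤ) : ℤ := ((((6504 + (17376*n)) + ((11520*(n*n)) + (36240*k))) + (((97056*(k*n)) + ((64512*k)*(n*n))) + ((90288*(k*k)) + (((242208*k)*(k*n)) + ((161280*k)*(k*(n*n))))))) + (((((128832*k)*(k*k)) + ((345792*k)*(k*(k*n)))) + (((230400*(k*k))*(k*(n*n))) + ((102960*k)*(k*(k*k))))) + ((((276480*(k*k))*(k*(k*n))) + ((184320*(k*k))*((k*k)*(n*n)))) + (((41184*(k*k))*(k*(k*k))) + (((110592*(k*k))*((k*k)*(k*n))) + (((73728*k)*(k*k))*((k*k)*(n*n))))))))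

def am211 (k n : ℤ) : ℤ := (((944 + (2568*n)) + ((1728*(n*n)) + (2496*k))) + (((6816*(k*n)) + ((4608*k)*(n*n))) + ((2496*(k*k)) + (((6816*k)*(k*n)) + ((4608*k)*(k*(n*n)))))))

def Am2 (k n : ℤ) : Matrix (Fin 2) (Fin 2) ℤ :=
  !![am200 k n, am201 k n; am210 k n, am211 k n]

def am300 (k n : ℤ) : ℤ := ((((15518 + (31128*n)) + ((15552*(n*n)) + ((105672*k) + (212064*(k*n))))) + ((((105984*k)*(n*n)) + (325992*(k*k))) + (((654432*k)*(k*n)) + (((327168*k)*(k*(n*n))) + ((587520*k)*(k*k)))))) + (((((1179648*k)*(k*(k*n))) + ((589824*(k*k))*(k*(n*n)))) + (((660960*k)*(k*(k*k))) + (((1327104*(k*k))*(k*(k*n))) + ((663552*(k*k))*((k*k)*(n*n)))))) + ((((440640*(k*k))*(k*(k*k))) + (((884736*(k*k))*((k*k)*(k*n))) + (((442368*k)*(k*k))*((k*k)*(n*n))))) + (((146880*(k*k))*((k*k)*(k*k))) + ((((294912*k)*(k*k))*((k*k)*(k*n))) + (((147456*k)*(k*k))*((k*k)*(k*(n*n)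))))))))

def am301 (k n : ℤ) : ℤ := (((2244 + ((4560*n) + (2304*(n*n)))) + ((8976*k) + ((18240*(k*n)) + ((9216*k)*(n*n))))) + (((13464*(k*k)) + (((27360*k)*(k*n)) + ((13824*k)*(k*(n*n))))) + (((8976*k)*(k*k)) + (((18240*k)*(k*(k*n))) + ((9216*(k*k))*(k*(n*n)))))))

def am310 (k n : ℤ) : ℤ := ((((11568 + (23136*n)) + ((11520*(n*n)) + (64536*k))) + (((129312*(k*n)) + ((64512*k)*(n*n))) + ((160920*(k*k)) + (((322848*k)*(k*n)) + ((161280*k)*(k*(n*n))))))) + (((((229680*k)*(k*k)) + ((460992*k)*(k*(k*n)))) + (((230400*(k*k))*(k*(n*n))) + ((183600*k)*(k*(k*k))))) + ((((368640*(k*k))*(k*(k*n))) + ((184320*(k*k))*((k*k)*(n*n)))) + (((73440*(k*k))*(k*(k*k))) + (((147456*(k*k))*((k*k)*(k*n))) + (((73728*k)*(k*k))*((k*k)*(n*n))))))))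

def am311 (k n : ℤ) : ℤ := (((1694 + (3432*n)) + ((1728*(n*n)) + (4488*k))) + (((9120*(k*n)) + ((4608*k)*(n*n))) + ((4488*(k*k)) + (((9120*k)*(k*n)) + ((4608*k)*(k*(n*n)))))))

def Am3 (k n : ℤ) : Matrix (Fin 2) (Fin 2) ℤ :=
  !![am300 k n, am301 k n; am310 k n, am311 k n]

def bm00 (k n : ℤ) : ℤ := ((((((488810 + (6128742*n)) + ((27073368*(n*n)) + ((50378112*n)*(n*n)))) + ((((33550848*n)*(n*(n*n))) + (6449520*k)) + ((80972400*(k*n)) + ((357971904*k)*(n*n))))) + (((((666413568*k)*(n*(n*n))) + ((443916288*(k*n))*(n*(n*n)))) + ((40832400*(k*k)) + ((513170256*k)*(k*n)))) + ((((2270100672*k)*(k*(n*n))) + ((4227697152*(k*k))*(n*(n*n)))) + (((2816778240*(k*k))*((n*n)*(n*n))) + ((164082240*k)*(k*k)))))) + ((((((2063743488*k)*(k*(k*n))) + ((9133737984*(k*k))*(k*(n*n)))) + (((17015242752*(k*k))*((k*n)*(n*n))) + (((11338776576*k)*(k*k))*((n*n)*(n*n))))) + ((((466210080*k)*(k*(k*k)))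 + ((5867112096*(k*k))*(k*(k*n)))) + (((25976049408*(k*k))*((k*k)*(n*n))) + (((48401915904*k)*(k*k))*((k*n)*(n*n)))))) + ((((((32259244032*k)*(k*k))*((k*n)*(n*(n*n)))) + ((987033600*(k*k))*(k*(k*k)))) + (((12426575040*(k*k))*((k*k)*(k*n))) + (((55031560704*k)*(k*k))*((k*k)*(n*n))))) + (((((102559039488*k)*(k*k))*((k*k)*(n*(n*n)))) + (((68361781248*k)*(k*(k*k)))*((k*n)*(n*(n*n))))) + (((1597639680*(k*k))*((k*k)*(k*k))) + (((20119496256*k)*(k*k))*((k*k)*(k*n)))))))) + ((((((((89115434496*k)*(k*k))*((k*k)*(k*(n*n)))) + (((166098124800*k)*(k*(k*k)))*((k*k)*(n*(n*n))))) + ((((110722940928*k)*(k*(k*k)))*((k*(k*n))*(n*(n*n)))) + (((1994388480*k)*(k*k))*((k*k)*(k*k))))) + (((((25120060416*k)*(k*k))*((k*k)*(k*(k*n)))) + (((111276343296*k)*(k*(k*k)))*((k*k)*(k*(n*n))))) + ((((207417507840*k)*(k*(k*k)))*((k*(k*k))*(n*(n*n)))) + (((138273619968*(k*k))*(k*(k*k)))*((k*(k*n))*(n*(n*n)))))))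 + ((((((1909474560*k)*(k*k))*((k*k)*(k*(k*k)))) + (((24052591872*k)*(k*(k*k)))*((k*k)*(k*(k*n))))) + ((((106553511936*k)*(k*(k*k)))*((k*(k*k))*(k*(n*n)))) + (((198621462528*(k*k))*(k*(k*k)))*((k*(k*k))*(n*(n*n)))))) + (((((132413128704*(k*k))*(k*(k*k)))*((k*(k*k))*((n*n)*(n*n)))) + (((1371686400*k)*(k*(k*k)))*((k*k)*(k*(k*k))))) + ((((17278894080*k)*(k*(k*k)))*((k*(k*k))*(k*(k*n)))) + (((76547358720*(k*k))*(k*(k*k)))*((k*(k*k))*(k*(n*n)))))))) + (((((((142690222080*(k*k))*(k*(k*k)))*((k*(k*k))*((k*n)*(n*n)))) + (((95126814720*(k*k))*((k*k)*(k*k)))*((k*(k*k))*((n*n)*(n*n))))) + ((((705438720*k)*(k*(k*k)))*((k*(k*k))*(k*(k*k)))) + (((8886288384*(k*k))*(k*(k*k)))*((k*(k*k))*(k*(k*n)))))) + (((((39367213056*(k*k))*(k*(k*k)))*((k*(k*k))*((k*k)*(n*n)))) + (((73383542784*(k*k))*((k*k)*(k*k)))*((k*(k*k))*((k*n)*(n*n)))))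 + ((((48922361856*(k*k))*((k*k)*(k*k)))*(((k*k)*(k*k))*((n*n)*(n*n)))) + (((235146240*(k*k))*(k*(k*k)))*((k*(k*k))*(k*(k*k))))))) + ((((((2962096128*(k*k))*(k*(k*k)))*((k*(k*k))*((k*k)*(k*n)))) + (((13122404352*(k*k))*((k*k)*(k*k)))*((k*(k*k))*((k*k)*(n*n))))) + ((((24461180928*(k*k))*((k*k)*(k*k)))*(((k*k)*(k*k))*((k*n)*(n*n)))) + ((((16307453952*k)*(k*k))*((k*k)*(k*k)))*(((k*k)*(k*k))*((n*n)*(n*n)))))) + (((((39191040*(k*k))*(k*(k*k)))*((k*(k*k))*((k*k)*(k*k)))) + (((493682688*(k*k))*((k*k)*(k*k)))*((k*(k*k))*((k*k)*(k*n))))) + ((((2187067392*(k*k))*((k*k)*(k*k)))*(((k*k)*(k*k))*((k*k)*(n*n)))) + (((((4076863488*k)*(k*k))*((k*k)*(k*k)))*(((k*k)*(k*k))*((k*n)*(n*n)))) + ((((2717908992*k)*(k*k))*((k*k)*(k*k)))*(((k*k)*(k*k))*((k*n)*(n*(n*n))))))))))))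

def bm01 (k n : ℤ) : ℤ := (((((63840 + ((846480*n) + (3869280*(n*n)))) + (((7361280*n)*(n*n)) + (((4976640*n)*(n*(n*n))) + (663600*k)))) + (((8800608*(k*n)) + (((40235904*k)*(n*n)) + ((76557312*k)*(n*(n*n))))) + (((51757056*(k*n))*(n*(n*n))) + ((3240720*(k*k)) + ((42981696*k)*(k*n)))))) + (((((196527168*k)*(k*(n*n))) + (((373953024*(k*k))*(n*(n*n))) + ((252813312*(k*k))*((n*n)*(n*n))))) + (((9780960*k)*(k*k)) + (((129728640*k)*(k*(k*n))) + ((593182080*(k*k))*(k*(n*n)))))) + ((((1128729600*(k*k))*((k*n)*(n*n))) + ((((763084800*k)*(k*k))*((n*n)*(n*n))) + ((20139840*k)*(k*(k*k))))) + ((((267124608*(k*k))*(k*(k*n))) + ((1221433344*(k*k))*((k*k)*(n*n)))) + ((((2324201472*k)*(k*k))*((k*n)*(n*n))) + (((1571291136*k)*(k*k))*((k*n)*(n*(n*n))))))))) + ((((((29393280*(k*k))*(k*(k*k))) + (((389857536*(k*k))*((k*k)*(k*n))) + (((1782632448*k)*(k*k))*((k*k)*(n*n))))) + ((((3392077824*k)*(k*k))*((k*k)*(n*(n*n))))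 + ((((2293235712*k)*(k*(k*k)))*((k*n)*(n*(n*n)))) + ((30481920*(k*k))*((k*k)*(k*k)))))) + (((((404296704*k)*(k*k))*((k*k)*(k*n))) + ((((1848655872*k)*(k*k))*((k*k)*(k*(n*n)))) + (((3517710336*k)*(k*(k*k)))*((k*k)*(n*(n*n)))))) + ((((2378170368*k)*(k*(k*k)))*((k*(k*n))*(n*(n*n)))) + ((((21772800*k)*(k*k))*((k*k)*(k*k))) + (((288783360*k)*(k*k))*((k*k)*(k*(k*n)))))))) + ((((((1320468480*k)*(k*(k*k)))*((k*k)*(k*(n*n)))) + ((((2512650240*k)*(k*(k*k)))*((k*(k*k))*(n*(n*n)))) + (((1698693120*(k*k))*(k*(k*k)))*((k*(k*n))*(n*(n*n)))))) + ((((9797760*k)*(k*k))*((k*k)*(k*(k*k)))) + ((((129952512*k)*(k*(k*k)))*((k*k)*(k*(k*n)))) + (((594210816*k)*(k*(k*k)))*((k*(k*k))*(k*(n*n))))))) + (((((1130692608*(k*k))*(k*(k*k)))*((k*(k*k))*(n*(n*n)))) + ((((764411904*(k*k))*(k*(k*k)))*((k*(k*k))*((n*n)*(n*n)))) + (((2177280*k)*(k*(k*k)))*((k*k)*(k*(k*k))))))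 + (((((28878336*k)*(k*(k*k)))*((k*(k*k))*(k*(k*n)))) + (((132046848*(k*k))*(k*(k*k)))*((k*(k*k))*(k*(n*n))))) + ((((251265024*(k*k))*(k*(k*k)))*((k*(k*k))*((k*n)*(n*n)))) + (((169869312*(k*k))*((k*k)*(k*k)))*((k*(k*k))*((n*n)*(n*n))))))))))

def bm10 (k n : ℤ) : ℤ := (((((366870 + ((4592208*n) + (20237184*(n*n)))) + ((((37532160*n)*(n*n)) + ((24883200*n)*(n*(n*n)))) + ((4378080*k) + (54900864*(k*n))))) + (((((242268480*k)*(n*n)) + ((449846784*k)*(n*(n*n)))) + (((298598400*(k*n))*(n*(n*n))) + (25076520*(k*k)))) + ((((314891424*k)*(k*n)) + ((1391067072*k)*(k*(n*n)))) + (((2585488896*(k*k))*(n*(n*n))) + ((1717936128*(k*k))*((n*n)*(n*n))))))) + (((((90942600*k)*(k*k)) + (((1143159360*k)*(k*(k*n))) + ((5054249088*(k*k))*(k*(n*n))))) + ((((9401398272*(k*k))*((k*n)*(n*n))) + (((6251986944*k)*(k*k))*((n*n)*(n*n)))) + (((231881580*k)*(k*(k*k))) + ((2916971136*(k*k))*(k*(k*n))))))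 + (((((12904955136*(k*k))*((k*k)*(n*n))) + (((24019255296*k)*(k*k))*((k*n)*(n*n)))) + ((((15983640576*k)*(k*k))*((k*n)*(n*(n*n)))) + ((436390920*(k*k))*(k*(k*k))))) + ((((5492548224*(k*k))*((k*k)*(k*n))) + (((24310964736*k)*(k*k))*((k*k)*(n*n)))) + ((((45270171648*k)*(k*k))*((k*k)*(n*(n*n)))) + (((30141186048*k)*(k*(k*k)))*((k*n)*(n*(n*n))))))))) + ((((((618846480*(k*k))*((k*k)*(k*k))) + ((((7791831936*k)*(k*k))*((k*k)*(k*n))) + (((34499727360*k)*(k*k))*((k*k)*(k*(n*n)))))) + (((((64266338304*k)*(k*(k*k)))*((k*k)*(n*(n*n)))) + (((42807066624*k)*(k*(k*k)))*((k*(k*n))*(n*(n*n))))) + ((((662346720*k)*(k*k))*((k*k)*(k*k))) + (((8341449984*k)*(k*k))*((k*k)*(k*(k*n))))))) + ((((((36941930496*k)*(k*(k*k)))*((k*k)*(k*(n*n)))) + (((68834230272*k)*(k*(k*k)))*((k*(k*k))*(n*(n*n))))) + ((((45864714240*(k*k))*(k*(k*k)))*((k*(k*n))*(n*(n*n)))) +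 (((525813120*k)*(k*k))*((k*k)*(k*(k*k)))))) + (((((6622850304*k)*(k*(k*k)))*((k*k)*(k*(k*n)))) + (((29335302144*k)*(k*(k*k)))*((k*(k*k))*(k*(n*n))))) + ((((54671376384*(k*k))*(k*(k*k)))*((k*(k*k))*(n*(n*n)))) + (((36436967424*(k*k))*(k*(k*k)))*((k*(k*k))*((n*n)*(n*n)))))))) + ((((((296472960*k)*(k*(k*k)))*((k*k)*(k*(k*k)))) + ((((3734456832*k)*(k*(k*k)))*((k*(k*k))*(k*(k*n)))) + (((16543014912*(k*k))*(k*(k*k)))*((k*(k*k))*(k*(n*n)))))) + (((((30834819072*(k*k))*(k*(k*k)))*((k*(k*k))*((k*n)*(n*n)))) + (((20554186752*(k*k))*((k*k)*(k*k)))*((k*(k*k))*((n*n)*(n*n))))) + ((((107775360*k)*(k*(k*k)))*((k*(k*k))*(k*(k*k)))) + (((1357627392*(k*k))*(k*(k*k)))*((k*(k*k))*(k*(k*n))))))) + ((((((6014435328*(k*k))*(k*(k*k)))*((k*(k*k))*((k*k)*(n*n)))) + (((11211374592*(k*k))*((k*k)*(k*k)))*((k*(k*k))*((k*n)*(n*n)))))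 + ((((7474249728*(k*k))*((k*k)*(k*k)))*(((k*k)*(k*k))*((n*n)*(n*n)))) + (((19595520*(k*k))*(k*(k*k)))*((k*(k*k))*(k*(k*k)))))) + (((((246841344*(k*k))*(k*(k*k)))*((k*(k*k))*((k*k)*(k*n)))) + (((1093533696*(k*k))*((k*k)*(k*k)))*((k*(k*k))*((k*k)*(n*n))))) + ((((2038431744*(k*k))*((k*k)*(k*k)))*(((k*k)*(k*k))*((k*n)*(n*n)))) + ((((1358954496*k)*(k*k))*((k*k)*(k*k)))*(((k*k)*(k*k))*((n*n)*(n*n))))))))))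

def bm11 (k n : ℤ) : ℤ := (((((47915 + (634326*n)) + ((2892600*(n*n)) + (((5484672*n)*(n*n)) + ((3691008*n)*(n*(n*n)))))) + (((437640*k) + ((5797392*(k*n)) + ((26459712*k)*(n*n)))) + (((50222592*k)*(n*(n*n))) + (((33841152*(k*n))*(n*(n*n))) + (1874040*(k*k)))))) + (((((24835632*k)*(k*n)) + ((113419584*k)*(k*(n*n)))) + (((215447040*(k*k))*(n*(n*n))) + (((145317888*(k*k))*((n*n)*(n*n))) + ((4919040*k)*(k*k))))) + ((((65207808*k)*(k*(k*n))) + (((297916416*(k*k))*(k*(n*n))) + ((566231040*(k*k))*((k*n)*(n*n))))) + ((((382205952*k)*(k*k))*((n*n)*(n*n))) + (((8663760*k)*(k*(k*k))) + ((114871392*(k*k))*(k*(k*n)))))))) + ((((((524973312*(k*k))*((k*k)*(n*n))) + (((998203392*k)*(k*k))*((k*n)*(n*n)))) + ((((674168832*k)*(k*k))*((k*n)*(n*(n*n)))) + (((10493280*(k*k))*(k*(k*k))) + ((139150656*(k*k))*((k*k)*(k*n)))))) + (((((636083712*k)*(k*k))*((k*k)*(n*n))) + ((((1209876480*k)*(k*k))*((k*k)*(n*(n*n))))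 + (((817496064*k)*(k*(k*k)))*((k*n)*(n*(n*n)))))) + (((8578080*(k*k))*((k*k)*(k*k))) + ((((113766336*k)*(k*k))*((k*k)*(k*n))) + (((520137216*k)*(k*k))*((k*k)*(k*(n*n)))))))) + ((((((989577216*k)*(k*(k*k)))*((k*k)*(n*(n*n)))) + ((((668860416*k)*(k*(k*k)))*((k*(k*n))*(n*(n*n)))) + (((4354560*k)*(k*k))*((k*k)*(k*k))))) + ((((57756672*k)*(k*k))*((k*k)*(k*(k*n)))) + ((((264093696*k)*(k*(k*k)))*((k*k)*(k*(n*n)))) + (((502530048*k)*(k*(k*k)))*((k*(k*k))*(n*(n*n))))))) + (((((339738624*(k*k))*(k*(k*k)))*((k*(k*n))*(n*(n*n)))) + ((((1088640*k)*(k*k))*((k*k)*(k*(k*k)))) + (((14439168*k)*(k*(k*k)))*((k*k)*(k*(k*n)))))) + ((((66023424*k)*(k*(k*k)))*((k*(k*k))*(k*(n*n)))) + ((((125632512*(k*k))*(k*(k*k)))*((k*(k*k))*(n*(n*n)))) + (((84934656*(k*k))*(k*(k*k)))*((k*(k*k))*((n*n)*(n*n))))))))))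

def Bm (k n : ℤ) : Matrix (Fin 2) (Fin 2) ℤ :=
  !![bm00 k n, bm01 k n; bm10 k n, bm11 k n]

def cm00 (k n : ℤ) : ℤ := ((((((18715715 + (87761118*n)) + ((152966808*(n*n)) + ((117479808*n)*(n*n)))) + ((((33550848*n)*(n*(n*n))) + (247475160*k)) + ((1160712624*(k*n)) + ((2023466688*k)*(n*n))))) + (((((1554246144*k)*(n*(n*n))) + ((443916288*(k*n))*(n*(n*n)))) + ((1569453480*(k*k)) + ((7362432912*k)*(k*n)))) + ((((12836813760*k)*(k*(n*n))) + ((9861253632*(k*k))*(n*(n*n)))) + (((2816778240*(k*k))*((n*n)*(n*n))) + ((6314967360*k)*(k*k)))))) + ((((((29628301824*k)*(k*(k*n))) + ((51664766976*(k*k))*(k*(n*n)))) + (((39692795904*(k*k))*((k*n)*(n*n))) + (((11338776576*k)*(k*k))*((n*n)*(n*n))))) + ((((17960220720*k)*(k*(k*k))) + ((84274220448*(k*k))*(k*(k*n)))) + (((146967789312*(k*k))*((k*k)*(n*n))) + (((112920403968*k)*(k*k))*((k*n)*(n*n)))))) + ((((((32259244032*k)*(k*k))*((k*n)*(n*(n*n))))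 + ((38050702560*(k*k))*(k*(k*k)))) + (((178558305984*(k*k))*((k*k)*(k*n))) + (((311412791808*k)*(k*k))*((k*k)*(n*n))))) + (((((239282601984*k)*(k*k))*((k*k)*(n*(n*n)))) + (((68361781248*k)*(k*(k*k)))*((k*n)*(n*(n*n))))) + (((61618695840*(k*k))*((k*k)*(k*k))) + (((289169994816*k)*(k*k))*((k*k)*(k*n)))))))) + ((((((((504347033088*k)*(k*k))*((k*k)*(k*(n*n)))) + (((387544006656*k)*(k*(k*k)))*((k*k)*(n*(n*n))))) + ((((110722940928*k)*(k*(k*k)))*((k*(k*n))*(n*(n*n)))) + (((76942794240*k)*(k*k))*((k*k)*(k*k))))) + (((((361096344576*k)*(k*k))*((k*k)*(k*(k*n)))) + (((629813035008*k)*(k*(k*k)))*((k*k)*(k*(n*n))))) + ((((483964747776*k)*(k*(k*k)))*((k*(k*k))*(n*(n*n)))) + (((138273619968*(k*k))*(k*(k*k)))*((k*(k*n))*(n*(n*n))))))) + ((((((73677651840*k)*(k*k))*((k*k)*(k*(k*k)))) + (((345778765056*k)*(k*(k*k)))*((k*k)*(k*(k*n))))) + ((((603105398784*k)*(k*(k*k)))*((k*(k*k))*(k*(n*n))))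 + (((463447719936*(k*k))*(k*(k*k)))*((k*(k*k))*(n*(n*n)))))) + (((((132413128704*(k*k))*(k*(k*k)))*((k*(k*k))*((n*n)*(n*n)))) + (((52929676800*k)*(k*(k*k)))*((k*k)*(k*(k*k))))) + ((((248407326720*k)*(k*(k*k)))*((k*(k*k))*(k*(k*n)))) + (((433272913920*(k*k))*(k*(k*k)))*((k*(k*k))*(k*(n*n)))))))) + (((((((332943851520*(k*k))*(k*(k*k)))*((k*(k*k))*((k*n)*(n*n)))) + (((95126814720*(k*k))*((k*k)*(k*k)))*((k*(k*k))*((n*n)*(n*n))))) + ((((27220976640*k)*(k*(k*k)))*((k*(k*k))*(k*(k*k)))) + (((127752339456*(k*k))*(k*(k*k)))*((k*(k*k))*(k*(k*n)))))) + (((((222826070016*(k*k))*(k*(k*k)))*((k*(k*k))*((k*k)*(n*n)))) + (((171228266496*(k*k))*((k*k)*(k*k)))*((k*(k*k))*((k*n)*(n*n))))) + ((((48922361856*(k*k))*((k*k)*(k*k)))*(((k*k)*(k*k))*((n*n)*(n*n)))) + (((9073658880*(k*k))*(k*(k*k)))*((k*(k*k))*(k*(k*k))))))) + ((((((42584113152*(k*k))*(k*(k*k)))*((k*(k*k))*((k*k)*(k*n))))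 + (((74275356672*(k*k))*((k*k)*(k*k)))*((k*(k*k))*((k*k)*(n*n))))) + ((((57076088832*(k*k))*((k*k)*(k*k)))*(((k*k)*(k*k))*((k*n)*(n*n)))) + ((((16307453952*k)*(k*k))*((k*k)*(k*k)))*(((k*k)*(k*k))*((n*n)*(n*n)))))) + (((((1512276480*(k*k))*(k*(k*k)))*((k*(k*k))*((k*k)*(k*k)))) + (((7097352192*(k*k))*((k*k)*(k*k)))*((k*(k*k))*((k*k)*(k*n))))) + ((((12379226112*(k*k))*((k*k)*(k*k)))*(((k*k)*(k*k))*((k*k)*(n*n)))) + (((((9512681472*k)*(k*k))*((k*k)*(k*k)))*(((k*k)*(k*k))*((k*n)*(n*n)))) + ((((2717908992*k)*(k*k))*((k*k)*(k*k)))*(((k*k)*(k*k))*((k*n)*(n*(n*n))))))))))))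

def cm01 (k n : ℤ) : ℤ := (((((2685600 + ((12725040*n) + (22376160*(n*n)))) + (((17314560*n)*(n*n)) + (((4976640*n)*(n*(n*n))) + (27927360*k)))) + (((132333024*(k*n)) + (((232707456*k)*(n*n)) + ((180071424*k)*(n*(n*n))))) + (((51757056*(k*n))*(n*(n*n))) + ((136408320*(k*k)) + ((646380288*k)*(k*n)))))) + (((((1136676672*k)*(k*(n*n))) + (((879579648*(k*k))*(n*(n*n))) + ((252813312*(k*k))*((n*n)*(n*n))))) + (((411724800*k)*(k*k)) + (((1951000320*k)*(k*(k*n))) + ((3430903680*(k*k))*(k*(n*n)))))) + ((((2654899200*(k*k))*((k*n)*(n*n))) + ((((763084800*k)*(k*k))*((n*n)*(n*n))) + ((847791360*k)*(k*(k*k))))) + ((((4017354624*(k*k))*(k*(k*n))) + ((7064672256*(k*k))*((k*k)*(n*n)))) + ((((5466783744*k)*(k*k))*((k*n)*(n*n))) + (((1571291136*k)*(k*k))*((k*n)*(n*(n*n))))))))) + ((((((1237317120*(k*k))*(k*(k*k))) + (((5863166208*(k*k))*((k*k)*(k*n))) + (((10310602752*k)*(k*k))*((k*k)*(n*n)))))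 + ((((7978549248*k)*(k*k))*((k*k)*(n*(n*n)))) + ((((2293235712*k)*(k*(k*k)))*((k*n)*(n*(n*n)))) + ((1283143680*(k*k))*((k*k)*(k*k)))))) + (((((6080320512*k)*(k*k))*((k*k)*(k*n))) + ((((10692476928*k)*(k*k))*((k*k)*(k*(n*n)))) + (((8274051072*k)*(k*(k*k)))*((k*k)*(n*(n*n)))))) + ((((2378170368*k)*(k*(k*k)))*((k*(k*n))*(n*(n*n)))) + ((((916531200*k)*(k*k))*((k*k)*(k*k))) + (((4343086080*k)*(k*k))*((k*k)*(k*(k*n)))))))) + ((((((7637483520*k)*(k*(k*k)))*((k*k)*(k*(n*n)))) + ((((5910036480*k)*(k*(k*k)))*((k*(k*k))*(n*(n*n)))) + (((1698693120*(k*k))*(k*(k*k)))*((k*(k*n))*(n*(n*n)))))) + ((((412439040*k)*(k*k))*((k*k)*(k*(k*k)))) + ((((1954388736*k)*(k*(k*k)))*((k*k)*(k*(k*n)))) + (((3436867584*k)*(k*(k*k)))*((k*(k*k))*(k*(n*n))))))) + (((((2659516416*(k*k))*(k*(k*k)))*((k*(k*k))*(n*(n*n)))) + ((((764411904*(k*k))*(k*(k*k)))*((k*(k*k))*((n*n)*(n*n))))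 + (((91653120*k)*(k*(k*k)))*((k*k)*(k*(k*k)))))) + (((((434308608*k)*(k*(k*k)))*((k*(k*k))*(k*(k*n)))) + (((763748352*(k*k))*(k*(k*k)))*((k*(k*k))*(k*(n*n))))) + ((((591003648*(k*k))*(k*(k*k)))*((k*(k*k))*((k*n)*(n*n)))) + (((169869312*(k*k))*((k*k)*(k*k)))*((k*(k*k))*((n*n)*(n*n))))))))))

def cm10 (k n : ℤ) : ℤ := (((((13968990 + ((65420112*n) + (113860224*(n*n)))) + ((((87298560*n)*(n*n)) + ((24883200*n)*(n*(n*n)))) + ((167288880*k) + (783853632*(k*n))))) + (((((1364936256*k)*(n*n)) + ((1047043584*k)*(n*(n*n)))) + (((298598400*(k*n))*(n*(n*n))) + (960846120*(k*k)))) + ((((4504043232*k)*(k*n)) + ((7846204608*k)*(k*(n*n)))) + (((6021361152*(k*k))*(n*(n*n))) + ((1717936128*(k*k))*((n*n)*(n*n))))))) + (((((3492008520*k)*(k*k)) + (((16374450624*k)*(k*(k*n))) + ((28534326912*(k*k))*(k*(n*n))))) + ((((21905372160*(k*k))*((k*n)*(n*n))) + (((6251986944*k)*(k*k))*((n*n)*(n*n))))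 + (((8917990380*k)*(k*(k*k))) + ((41828188032*(k*k))*(k*(k*n)))))) + (((((72909298944*(k*k))*((k*k)*(n*n))) + (((55986536448*k)*(k*k))*((k*n)*(n*n)))) + ((((15983640576*k)*(k*k))*((k*n)*(n*(n*n)))) + ((16803001800*(k*k))*(k*(k*k))))) + ((((78826734720*(k*k))*((k*k)*(k*n))) + (((137428001280*k)*(k*k))*((k*k)*(n*n)))) + ((((105552543744*k)*(k*k))*((k*k)*(n*(n*n)))) + (((30141186048*k)*(k*(k*k)))*((k*n)*(n*(n*n))))))))) + ((((((23848428240*(k*k))*((k*k)*(k*k))) + ((((111894846336*k)*(k*k))*((k*k)*(k*n))) + (((195109834752*k)*(k*k))*((k*k)*(k*(n*n)))))) + (((((149880471552*k)*(k*(k*k)))*((k*k)*(n*(n*n)))) + (((42807066624*k)*(k*(k*k)))*((k*(k*n))*(n*(n*n))))) + ((((25539377760*k)*(k*k))*((k*k)*(k*k))) + (((119841410304*k)*(k*k))*((k*k)*(k*(k*n))))))) + ((((((208990347264*k)*(k*(k*k)))*((k*k)*(k*(n*n)))) + (((160563658752*k)*(k*(k*k)))*((k*(k*k))*(n*(n*n)))))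 + ((((45864714240*(k*k))*(k*(k*k)))*((k*(k*n))*(n*(n*n)))) + (((20282296320*k)*(k*k))*((k*k)*(k*(k*k)))))) + (((((95180168448*k)*(k*(k*k)))*((k*k)*(k*(k*n)))) + (((165997817856*k)*(k*(k*k)))*((k*(k*k))*(k*(n*n))))) + ((((127545311232*(k*k))*(k*(k*k)))*((k*(k*k))*(n*(n*n)))) + (((36436967424*(k*k))*(k*(k*k)))*((k*(k*k))*((n*n)*(n*n)))))))) + ((((((11438444160*k)*(k*(k*k)))*((k*k)*(k*(k*k)))) + ((((53680679424*k)*(k*(k*k)))*((k*(k*k))*(k*(k*n)))) + (((93626523648*(k*k))*(k*(k*k)))*((k*(k*k))*(k*(n*n)))))) + (((((71943192576*(k*k))*(k*(k*k)))*((k*(k*k))*((k*n)*(n*n)))) + (((20554186752*(k*k))*((k*k)*(k*k)))*((k*(k*k))*((n*n)*(n*n))))) + ((((4158760320*k)*(k*(k*k)))*((k*(k*k))*(k*(k*k)))) + (((19517718528*(k*k))*(k*(k*k)))*((k*(k*k))*(k*(k*n))))))) + ((((((34042871808*(k*k))*(k*(k*k)))*((k*(k*k))*((k*k)*(n*n))))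 + (((26159874048*(k*k))*((k*k)*(k*k)))*((k*(k*k))*((k*n)*(n*n))))) + ((((7474249728*(k*k))*((k*k)*(k*k)))*(((k*k)*(k*k))*((n*n)*(n*n)))) + (((756138240*(k*k))*(k*(k*k)))*((k*(k*k))*(k*(k*k)))))) + (((((3548676096*(k*k))*(k*(k*k)))*((k*(k*k))*((k*k)*(k*n)))) + (((6189613056*(k*k))*((k*k)*(k*k)))*((k*(k*k))*((k*k)*(n*n))))) + ((((4756340736*(k*k))*((k*k)*(k*k)))*(((k*k)*(k*k))*((k*n)*(n*n)))) + ((((1358954496*k)*(k*k))*((k*k)*(k*k)))*(((k*k)*(k*k))*((n*n)*(n*n))))))))))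

def cm11 (k n : ℤ) : ℤ := (((((2004500 + (9485934*n)) + ((16656120*(n*n)) + (((12866688*n)*(n*n)) + ((3691008*n)*(n*(n*n)))))) + (((18344160*k) + ((86844624*(k*n)) + ((152555328*k)*(n*n)))) + (((117904896*k)*(n*(n*n))) + (((33841152*(k*n))*(n*(n*n))) + (78660000*(k*k)))))) + (((((372499440*k)*(k*n)) + ((654566976*k)*(k*(n*n)))) + (((506082816*(k*k))*(n*(n*n))) + (((145317888*(k*k))*((n*n)*(n*n))) + ((206668800*k)*(k*k))))) + ((((978900480*k)*(k*(k*n))) + (((1720571904*(k*k))*(k*(n*n))) + ((1330642944*(k*k))*((k*n)*(n*n))))) + ((((382205952*k)*(k*k))*((n*n)*(n*n))) + (((364253760*k)*(k*(k*k))) + ((1725581664*(k*k))*(k*(k*n)))))))) + ((((((3033531648*(k*k))*((k*k)*(n*n))) + (((2346541056*k)*(k*k))*((k*n)*(n*n)))) + ((((674168832*k)*(k*k))*((k*n)*(n*(n*n)))) + (((441417600*(k*k))*(k*(k*k))) + ((2091389760*(k*k))*((k*k)*(k*n)))))) + (((((3677142528*k)*(k*k))*((k*k)*(n*n))) + ((((2844868608*k)*(k*k))*((k*k)*(n*(n*n))))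 + (((817496064*k)*(k*(k*k)))*((k*n)*(n*(n*n)))))) + (((360996480*(k*k))*((k*k)*(k*k))) + ((((1710516672*k)*(k*k))*((k*k)*(k*n))) + (((3007793664*k)*(k*k))*((k*k)*(k*(n*n)))))))) + ((((((2327298048*k)*(k*(k*k)))*((k*k)*(n*(n*n)))) + ((((668860416*k)*(k*(k*k)))*((k*(k*n))*(n*(n*n)))) + (((183306240*k)*(k*k))*((k*k)*(k*k))))) + ((((868617216*k)*(k*k))*((k*k)*(k*(k*n)))) + ((((1527496704*k)*(k*(k*k)))*((k*k)*(k*(n*n)))) + (((1182007296*k)*(k*(k*k)))*((k*(k*k))*(n*(n*n))))))) + (((((339738624*(k*k))*(k*(k*k)))*((k*(k*n))*(n*(n*n)))) + ((((45826560*k)*(k*k))*((k*k)*(k*(k*k)))) + (((217154304*k)*(k*(k*k)))*((k*k)*(k*(k*n)))))) + ((((381874176*k)*(k*(k*k)))*((k*(k*k))*(k*(n*n)))) + ((((295501824*(k*k))*(k*(k*k)))*((k*(k*k))*(n*(n*n)))) + (((84934656*(k*k))*(k*(k*k)))*((k*(k*k))*((n*n)*(n*n))))))))))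

def Cm (k n : ℤ) : Matrix (Fin 2) (Fin 2) ℤ :=
  !![cm00 k n, cm01 k n; cm10 k n, cm11 k n]

def wm00 (k n : ℤ) : ℤ := (((((((5066847360575 + ((87301784949855*n) + (620164274254038*(n*n)))) + ((((2390597177125680*n)*(n*n)) + ((5502745258226208*n)*(n*(n*n)))) + (((7783277258557440*(n*n))*(n*(n*n))) + ((6633133992087552*(n*n))*((n*n)*(n*n)))))) + (((((3124700633825280*n)*(n*n))*((n*n)*(n*n))) + ((((624747064983552*n)*(n*n))*((n*n)*(n*(n*n)))) + (131839596688800*k))) + (((2272751528911440*(k*n)) + ((16150368913797600*k)*(n*n))) + (((62270575969658112*k)*(n*(n*n))) + ((143359470954395136*(k*n))*(n*(n*n))))))) + (((((202795887098327040*(k*n))*((n*n)*(n*n))) + ((((172842317812039680*k)*(n*n))*((n*n)*(n*n))) + (((81426006995632128*k)*(n*n))*((n*n)*(n*(n*n)))))) + (((((16280716862029824*k)*(n*(n*n)))*((n*n)*(n*(n*n)))) + (1683562974693600*(k*k))) + (((29035537177147440*k)*(k*n)) + ((206390768286918816*k)*(k*(n*n)))))) + ((((795939929594095104*(k*k))*(n*(n*n)))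 + (((1832680908137737728*(k*k))*((n*n)*(n*n))) + (((2592772420709560320*k)*(k*n))*((n*n)*(n*n))))) + (((((2209973209489833984*k)*(k*n))*((n*n)*(n*(n*n)))) + (((1041170662421692416*k)*(k*(n*n)))*((n*n)*(n*(n*n))))) + ((((208183597939556352*k)*(k*(n*n)))*((n*(n*n))*(n*(n*n)))) + ((14038887215152800*k)*(k*k))))))) + ((((((242216610923315520*k)*(k*(k*n))) + (((1722181131977778432*(k*k))*(k*(n*n))) + ((6642753387442163712*(k*k))*((k*n)*(n*n))))) + (((((15297158898146377728*k)*(k*k))*((n*n)*(n*n))) + (((21643547475746488320*k)*(k*k))*((n*n)*(n*(n*n))))) + ((((18449293509135433728*k)*(k*(k*n)))*((n*n)*(n*(n*n)))) + (((8692302070759292928*k)*(k*(k*n)))*((n*(n*n))*(n*(n*n))))))) + (((((1738092733249093632*(k*k))*(k*(n*n)))*((n*(n*n))*(n*(n*n)))) + (((85810348416592800*k)*(k*(k*k))) + ((1481018383117404000*(k*k))*(k*(k*n))))) + ((((10532607784711569216*(k*k))*((k*k)*(n*n))) + (((40632642453424976640*k)*(k*k))*((k*n)*(n*n)))) + ((((93580927320258717696*k)*(k*k))*((k*n)*(n*(n*n))))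 + (((132416082846614568960*k)*(k*(k*k)))*((n*n)*(n*(n*n)))))))) + ((((((112880210541296615424*k)*(k*(k*k)))*((n*(n*n))*(n*(n*n)))) + ((((53185258470160465920*(k*k))*(k*(k*n)))*((n*(n*n))*(n*(n*n)))) + (((10635112946696454144*(k*k))*(k*(k*n)))*((n*(n*n))*((n*n)*(n*n)))))) + ((((409100466682908000*(k*k))*(k*(k*k))) + ((7062871864402120320*(k*k))*((k*k)*(k*n)))) + ((((50239437758282544768*k)*(k*k))*((k*k)*(n*n))) + (((193840803225393891840*k)*(k*k))*((k*k)*(n*(n*n))))))) + (((((446479140310775083008*k)*(k*(k*k)))*((k*n)*(n*(n*n)))) + ((((631809547958271836160*k)*(k*(k*k)))*((k*(n*n))*(n*(n*n)))) + (((538624694350664957952*(k*k))*(k*(k*k)))*((n*(n*n))*(n*(n*n)))))) + (((((253791076535752458240*(k*k))*(k*(k*k)))*((n*(n*n))*((n*n)*(n*n)))) + (((50750334997062746112*(k*k))*((k*k)*(k*n)))*((n*(n*n))*((n*n)*(n*n))))) + (((1580497203047162400*(k*k))*((k*k)*(k*k))) + (((27293462989502947200*k)*(k*k))*((k*k)*(k*n)))))))))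 + ((((((((194177419856863597440*k)*(k*k))*((k*k)*(k*(n*n)))) + ((((749294681851732262400*k)*(k*(k*k)))*((k*k)*(n*(n*n)))) + (((1726024223065498030080*k)*(k*(k*k)))*((k*(k*n))*(n*(n*n)))))) + (((((2442641400865316044800*(k*k))*(k*(k*k)))*((k*(n*n))*(n*(n*n)))) + (((2082476771119560130560*(k*k))*(k*(k*k)))*((k*(n*n))*((n*n)*(n*n))))) + ((((981262364510571724800*(k*k))*((k*k)*(k*k)))*((n*(n*n))*((n*n)*(n*n)))) + (((196226839755431608320*(k*k))*((k*k)*(k*k)))*(((n*n)*(n*n))*((n*n)*(n*n))))))) + (((((5074862839164518400*k)*(k*k))*((k*k)*(k*k))) + ((((87657182581296522240*k)*(k*k))*((k*k)*(k*(k*n)))) + (((623726230213654972416*k)*(k*(k*k)))*((k*k)*(k*(n*n)))))) + (((((2407101333261038788608*k)*(k*(k*k)))*((k*(k*k))*(n*(n*n)))) + (((5545260033694427381760*(k*k))*(k*(k*k)))*((k*(k*n))*(n*(n*n))))) + ((((7848001052662313779200*(k*k))*(k*(k*k)))*((k*(k*n))*((n*n)*(n*n)))) + (((6691098445319654866944*(k*k))*((k*k)*(k*k)))*((k*(n*n))*((n*n)*(n*n))))))))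 + ((((((3152939307765891858432*(k*k))*((k*k)*(k*k)))*(((k*n)*(n*n))*((n*n)*(n*n)))) + (((((630519501143251353600*k)*(k*k))*((k*k)*(k*k)))*(((n*n)*(n*n))*((n*n)*(n*n)))) + (((13782117162387974400*k)*(k*k))*((k*k)*(k*(k*k)))))) + (((((238102357147193905920*k)*(k*(k*k)))*((k*k)*(k*(k*n)))) + (((1694444661937343089152*k)*(k*(k*k)))*((k*(k*k))*(k*(n*n))))) + ((((6539850305754484819968*(k*k))*(k*(k*k)))*((k*(k*k))*(n*(n*n)))) + (((15066908160456290697216*(k*k))*(k*(k*k)))*((k*(k*k))*((n*n)*(n*n))))))) + (((((21324672148835816570880*(k*k))*((k*k)*(k*k)))*((k*(k*n))*((n*n)*(n*n)))) + ((((18181778044691675086848*(k*k))*((k*k)*(k*k)))*(((k*k)*(n*n))*((n*n)*(n*n)))) + ((((8567737673087327404032*k)*(k*k))*((k*k)*(k*k)))*(((k*n)*(n*n))*((n*n)*(n*n)))))) + ((((((1713395661607727529984*k)*(k*k))*((k*k)*(k*k)))*(((k*n)*(n*n))*((n*n)*(n*(n*n))))) + (((32048347249350432000*k)*(k*(k*k)))*((k*k)*(k*(k*k)))))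 + ((((553765115748970621440*k)*(k*(k*k)))*((k*(k*k))*(k*(k*n)))) + (((3941287916098245543936*(k*k))*(k*(k*k)))*((k*(k*k))*(k*(n*n))))))))) + (((((((15212929316961508392960*(k*k))*(k*(k*k)))*((k*(k*k))*((k*n)*(n*n)))) + ((((35050471311423595216896*(k*k))*((k*k)*(k*k)))*((k*(k*k))*((n*n)*(n*n)))) + (((49610112858110998609920*(k*k))*((k*k)*(k*k)))*(((k*k)*(k*n))*((n*n)*(n*n)))))) + ((((((42299740107771167637504*k)*(k*k))*((k*k)*(k*k)))*(((k*k)*(n*n))*((n*n)*(n*n)))) + ((((19933227145669430476800*k)*(k*k))*((k*k)*(k*k)))*(((k*k)*(n*n))*((n*n)*(n*(n*n)))))) + (((((3986361447738815545344*k)*(k*k))*((k*k)*(k*(k*k))))*(((k*n)*(n*n))*((n*n)*(n*(n*n))))) + (((64359913965124377600*k)*(k*(k*k)))*((k*(k*k))*(k*(k*k))))))) + (((((1112234802165049927680*(k*k))*(k*(k*k)))*((k*(k*k))*(k*(k*n)))) + ((((7916813460319939633152*(k*k))*(k*(k*k)))*((k*(k*k))*((k*k)*(n*n)))) + (((30560055049389658963968*(k*k))*((k*k)*(k*k)))*((k*(k*k))*((k*n)*(n*n))))))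 + (((((70413526420036593647616*(k*k))*((k*k)*(k*k)))*(((k*k)*(k*k))*((n*n)*(n*n)))) + ((((99666194833348252139520*k)*(k*k))*((k*k)*(k*k)))*(((k*k)*(k*n))*((n*n)*(n*n))))) + (((((84981989307129998082048*k)*(k*k))*((k*k)*(k*k)))*(((k*k)*(k*n))*((n*n)*(n*(n*n))))) + ((((40047508314417405100032*k)*(k*k))*((k*k)*(k*(k*k))))*(((k*k)*(n*n))*((n*n)*(n*(n*n))))))))) + (((((((8009052074675256950784*k)*(k*k))*((k*k)*(k*(k*k))))*(((k*k)*(n*(n*n)))*((n*n)*(n*(n*n))))) + ((((112261102178223398400*(k*k))*(k*(k*k)))*((k*(k*k))*(k*(k*k)))) + (((1940266474307737574400*(k*k))*(k*(k*k)))*((k*(k*k))*((k*k)*(k*n)))))) + (((((13811788164177696043008*(k*k))*((k*k)*(k*k)))*((k*(k*k))*((k*k)*(n*n)))) + (((53318501650141080256512*(k*k))*((k*k)*(k*k)))*(((k*k)*(k*k))*((k*n)*(n*n))))) + (((((122856308916826831847424*k)*(k*k))*((k*k)*(k*k)))*(((k*k)*(k*k))*((n*n)*(n*n)))) + ((((173901053728044299059200*k)*(k*k))*((k*k)*(k*k)))*(((k*k)*(k*k))*((n*n)*(n*(n*n))))))))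 + ((((((148282860494554285473792*k)*(k*k))*((k*k)*(k*(k*k))))*(((k*k)*(k*n))*((n*n)*(n*(n*n))))) + (((((69879040371894767321088*k)*(k*k))*((k*k)*(k*(k*k))))*(((k*k)*(k*(n*n)))*((n*n)*(n*(n*n))))) + ((((13975204043988481867776*k)*(k*(k*k)))*((k*k)*(k*(k*k))))*(((k*k)*(n*(n*n)))*((n*n)*(n*(n*n))))))) + (((((170652886978942368000*(k*k))*(k*(k*k)))*((k*(k*k))*((k*k)*(k*k)))) + (((2949767432209399104000*(k*k))*((k*k)*(k*k)))*((k*(k*k))*((k*k)*(k*n))))) + ((((20999300110735537907712*(k*k))*((k*k)*(k*k)))*(((k*k)*(k*k))*((k*k)*(n*n)))) + ((((81068641976314766721024*k)*(k*k))*((k*k)*(k*k)))*(((k*k)*(k*k))*((k*n)*(n*n))))))))))) + ((((((((((186804327117150262001664*k)*(k*k))*((k*k)*(k*k)))*(((k*k)*(k*k))*((k*n)*(n*(n*n))))) + (((((264424940500543718031360*k)*(k*k))*((k*k)*(k*(k*k))))*(((k*k)*(k*k))*((n*n)*(n*(n*n))))) + ((((225475434660141075529728*k)*(k*k))*((k*k)*(k*(k*k))))*(((k*k)*(k*(k*n)))*((n*n)*(n*(n*n)))))))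 + ((((((106257931685455447719936*k)*(k*(k*k)))*((k*k)*(k*(k*k))))*(((k*k)*(k*(n*n)))*((n*n)*(n*(n*n))))) + ((((21250898404771759128576*k)*(k*(k*k)))*((k*k)*(k*(k*k))))*(((k*k)*(k*(n*n)))*((n*(n*n))*(n*(n*n)))))) + ((((226378697532686899200*(k*k))*((k*k)*(k*k)))*((k*(k*k))*((k*k)*(k*k)))) + (((3913305122109858508800*(k*k))*((k*k)*(k*k)))*(((k*k)*(k*k))*((k*k)*(k*n))))))) + ((((((27860174162671299084288*k)*(k*k))*((k*k)*(k*k)))*(((k*k)*(k*k))*((k*k)*(n*n)))) + (((((107559342558516934213632*k)*(k*k))*((k*k)*(k*k)))*(((k*k)*(k*k))*((k*k)*(n*(n*n))))) + ((((247852859092231702708224*k)*(k*k))*((k*k)*(k*(k*k))))*(((k*k)*(k*k))*((k*n)*(n*(n*n))))))) + ((((((350847295440580037836800*k)*(k*k))*((k*k)*(k*(k*k))))*(((k*k)*(k*(k*k)))*((n*n)*(n*(n*n))))) + ((((299172401382545908826112*k)*(k*(k*k)))*((k*k)*(k*(k*k))))*(((k*k)*(k*(k*n)))*((n*n)*(n*(n*n))))))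 + (((((140990120176186785005568*k)*(k*(k*k)))*((k*k)*(k*(k*k))))*(((k*k)*(k*(k*n)))*((n*(n*n))*(n*(n*n))))) + ((((28197362960590203518976*k)*(k*(k*k)))*((k*(k*k))*(k*(k*k))))*(((k*k)*(k*(n*n)))*((n*(n*n))*(n*(n*n))))))))) + ((((((261880653974997657600*(k*k))*((k*k)*(k*k)))*(((k*k)*(k*k))*((k*k)*(k*k)))) + (((((4527291411766931558400*k)*(k*k))*((k*k)*(k*k)))*(((k*k)*(k*k))*((k*k)*(k*n)))) + ((((32232708550132336410624*k)*(k*k))*((k*k)*(k*k)))*(((k*k)*(k*k))*((k*k)*(k*(n*n))))))) + ((((((124443997286846679613440*k)*(k*k))*((k*k)*(k*(k*k))))*(((k*k)*(k*k))*((k*k)*(n*(n*n))))) + ((((286766923558358335094784*k)*(k*k))*((k*k)*(k*(k*k))))*(((k*k)*(k*(k*k)))*((k*n)*(n*(n*n)))))) + (((((405938431582329152471040*k)*(k*(k*k)))*((k*k)*(k*(k*k))))*(((k*k)*(k*(k*k)))*((n*n)*(n*(n*n))))) + ((((346153551585891147841536*k)*(k*(k*k)))*((k*k)*(k*(k*k))))*(((k*k)*(k*(k*k)))*((n*(n*n))*(n*(n*n))))))))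 + ((((((163132298956382404608000*k)*(k*(k*k)))*((k*(k*k))*(k*(k*k))))*(((k*k)*(k*(k*n)))*((n*(n*n))*(n*(n*n))))) + (((((32625928499123271499776*k)*(k*(k*k)))*((k*(k*k))*(k*(k*k))))*(((k*(k*k))*(k*(n*n)))*((n*(n*n))*(n*(n*n))))) + ((((263474022874167705600*k)*(k*k))*((k*k)*(k*k)))*(((k*k)*(k*k))*((k*k)*(k*k)))))) + ((((((4555053084959385845760*k)*(k*k))*((k*k)*(k*k)))*(((k*k)*(k*k))*((k*k)*(k*(k*n))))) + ((((32431406110252930695168*k)*(k*k))*((k*k)*(k*(k*k))))*(((k*k)*(k*k))*((k*k)*(k*(n*n)))))) + (((((125213968924388817371136*k)*(k*k))*((k*k)*(k*(k*k))))*(((k*k)*(k*(k*k)))*((k*k)*(n*(n*n))))) + ((((288545985619687014137856*k)*(k*(k*k)))*((k*k)*(k*(k*k))))*(((k*k)*(k*(k*k)))*((k*n)*(n*(n*n)))))))))) + ((((((((408461816881205036974080*k)*(k*(k*k)))*((k*k)*(k*(k*k))))*(((k*k)*(k*(k*k)))*((k*(n*n))*(n*(n*n))))) + (((((348308535079738741358592*k)*(k*(k*k)))*((k*(k*k))*(k*(k*k))))*(((k*k)*(k*(k*k)))*((n*(n*n))*(n*(n*n)))))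 + ((((164149053439206966165504*k)*(k*(k*k)))*((k*(k*k))*(k*(k*k))))*(((k*(k*k))*(k*(k*n)))*((n*(n*n))*(n*(n*n))))))) + ((((((32829458649726849122304*(k*k))*(k*(k*k)))*((k*(k*k))*(k*(k*k))))*(((k*(k*k))*(k*(n*n)))*((n*(n*n))*(n*(n*n))))) + ((((229385545106593075200*k)*(k*k))*((k*k)*(k*k)))*(((k*k)*(k*k))*((k*k)*(k*(k*k)))))) + (((((3965855343040129720320*k)*(k*k))*((k*k)*(k*(k*k))))*(((k*k)*(k*k))*((k*k)*(k*(k*n))))) + ((((28237062199208084176896*k)*(k*k))*((k*k)*(k*(k*k))))*(((k*k)*(k*(k*k)))*((k*k)*(k*(n*n)))))))) + ((((((109021907652032524713984*k)*(k*(k*k)))*((k*k)*(k*(k*k))))*(((k*k)*(k*(k*k)))*((k*k)*(n*(n*n))))) + (((((251235674664057320767488*k)*(k*(k*k)))*((k*k)*(k*(k*k))))*(((k*k)*(k*(k*k)))*((k*(k*n))*(n*(n*n))))) + ((((355649058489951458426880*k)*(k*(k*k)))*((k*(k*k))*(k*(k*k))))*(((k*k)*(k*(k*k)))*((k*(n*n))*(n*(n*n)))))))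 + ((((((303275479052155411759104*k)*(k*(k*k)))*((k*(k*k))*(k*(k*k))))*(((k*(k*k))*(k*(k*k)))*((n*(n*n))*(n*(n*n))))) + ((((142926864028977768431616*(k*k))*(k*(k*k)))*((k*(k*k))*(k*(k*k))))*(((k*(k*k))*(k*(k*n)))*((n*(n*n))*(n*(n*n)))))) + (((((28585184703462833651712*(k*k))*(k*(k*k)))*((k*(k*k))*(k*(k*k))))*(((k*(k*k))*(k*(k*n)))*((n*(n*n))*((n*n)*(n*n))))) + ((((171481141018233446400*k)*(k*k))*((k*k)*(k*(k*k))))*(((k*k)*(k*k))*((k*k)*(k*(k*k))))))))) + (((((((2964816239080066007040*k)*(k*k))*((k*k)*(k*(k*k))))*(((k*k)*(k*(k*k)))*((k*k)*(k*(k*n))))) + (((((21109969954717314711552*k)*(k*(k*k)))*((k*k)*(k*(k*k))))*(((k*k)*(k*(k*k)))*((k*k)*(k*(n*n))))) + ((((81505507027803231485952*k)*(k*(k*k)))*((k*k)*(k*(k*k))))*(((k*k)*(k*(k*k)))*((k*(k*k))*(n*(n*n))))))) + ((((((187827064339172853547008*k)*(k*(k*k)))*((k*(k*k))*(k*(k*k))))*(((k*k)*(k*(k*k)))*((k*(k*n))*(n*(n*n)))))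 + ((((265889552456317560422400*k)*(k*(k*k)))*((k*(k*k))*(k*(k*k))))*(((k*(k*k))*(k*(k*k)))*((k*(n*n))*(n*(n*n)))))) + (((((226735224958523705131008*(k*k))*(k*(k*k)))*((k*(k*k))*(k*(k*k))))*(((k*(k*k))*(k*(k*k)))*((n*(n*n))*(n*(n*n))))) + ((((106855573490205865279488*(k*k))*(k*(k*k)))*((k*(k*k))*(k*(k*k))))*(((k*(k*k))*(k*(k*k)))*((n*(n*n))*((n*n)*(n*n)))))))) + ((((((21371036427271853309952*(k*k))*(k*(k*k)))*((k*(k*k))*((k*k)*(k*k))))*(((k*(k*k))*(k*(k*n)))*((n*(n*n))*((n*n)*(n*n))))) + (((((108832757576301158400*k)*(k*k))*((k*k)*(k*(k*k))))*(((k*k)*(k*(k*k)))*((k*k)*(k*(k*k))))) + ((((1881689195280142909440*k)*(k*(k*k)))*((k*k)*(k*(k*k))))*(((k*k)*(k*(k*k)))*((k*k)*(k*(k*n))))))) + ((((((13398073987100512223232*k)*(k*(k*k)))*((k*k)*(k*(k*k))))*(((k*k)*(k*(k*k)))*((k*(k*k))*(k*(n*n))))) + ((((51730298800991379652608*k)*(k*(k*k)))*((k*(k*k))*(k*(k*k))))*(((k*k)*(k*(k*k)))*((k*(k*k))*(n*(n*n))))))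 + (((((119211619365314453569536*k)*(k*(k*k)))*((k*(k*k))*(k*(k*k))))*(((k*(k*k))*(k*(k*k)))*((k*(k*n))*(n*(n*n))))) + ((((168757649207639943413760*(k*k))*(k*(k*k)))*((k*(k*k))*(k*(k*k))))*(((k*(k*k))*(k*(k*k)))*((k*(n*n))*(n*(n*n))))))))))) + (((((((((143907206723478610771968*(k*k))*(k*(k*k)))*((k*(k*k))*(k*(k*k))))*(((k*(k*k))*(k*(k*k)))*((k*(n*n))*((n*n)*(n*n))))) + (((((67820623092150951739392*(k*k))*(k*(k*k)))*((k*(k*k))*((k*k)*(k*k))))*(((k*(k*k))*(k*(k*k)))*((n*(n*n))*((n*n)*(n*n))))) + ((((13564100692342487384064*(k*k))*(k*(k*k)))*((k*(k*k))*((k*k)*(k*k))))*(((k*(k*k))*((k*k)*(k*n)))*((n*(n*n))*((n*n)*(n*n))))))) + ((((((57688862662906675200*k)*(k*(k*k)))*((k*k)*(k*(k*k))))*(((k*k)*(k*(k*k)))*((k*k)*(k*(k*k))))) + ((((997433979638747627520*k)*(k*(k*k)))*((k*k)*(k*(k*k))))*(((k*k)*(k*(k*k)))*((k*(k*k))*(k*(k*n))))))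 + (((((7102010421774926217216*k)*(k*(k*k)))*((k*(k*k))*(k*(k*k))))*(((k*k)*(k*(k*k)))*((k*(k*k))*(k*(n*n))))) + ((((27421158619030770155520*k)*(k*(k*k)))*((k*(k*k))*(k*(k*k))))*(((k*(k*k))*(k*(k*k)))*((k*(k*k))*(n*(n*n)))))))) + ((((((63191806300641973764096*(k*k))*(k*(k*k)))*((k*(k*k))*(k*(k*k))))*(((k*(k*k))*(k*(k*k)))*((k*(k*n))*(n*(n*n))))) + (((((89455422261999320432640*(k*k))*(k*(k*k)))*((k*(k*k))*(k*(k*k))))*(((k*(k*k))*(k*(k*k)))*((k*(k*n))*((n*n)*(n*n))))) + ((((76282782253300762804224*(k*k))*(k*(k*k)))*((k*(k*k))*((k*k)*(k*k))))*(((k*(k*k))*(k*(k*k)))*((k*(n*n))*((n*n)*(n*n))))))) + ((((((35950617992894443683840*(k*k))*(k*(k*k)))*((k*(k*k))*((k*k)*(k*k))))*(((k*(k*k))*((k*k)*(k*k)))*((n*(n*n))*((n*n)*(n*n))))) + ((((7190118789315028844544*(k*k))*((k*k)*(k*k)))*((k*(k*k))*((k*k)*(k*k))))*(((k*(k*k))*((k*k)*(k*n)))*((n*(n*n))*((n*n)*(n*n))))))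 + (((((24936056571550924800*k)*(k*(k*k)))*((k*k)*(k*(k*k))))*(((k*k)*(k*(k*k)))*((k*(k*k))*(k*(k*k))))) + ((((431143450905110446080*k)*(k*(k*k)))*((k*(k*k))*(k*(k*k))))*(((k*k)*(k*(k*k)))*((k*(k*k))*(k*(k*n))))))))) + (((((((3069871429769776594944*k)*(k*(k*k)))*((k*(k*k))*(k*(k*k))))*(((k*(k*k))*(k*(k*k)))*((k*(k*k))*(k*(n*n))))) + (((((11852925726044190670848*(k*k))*(k*(k*k)))*((k*(k*k))*(k*(k*k))))*(((k*(k*k))*(k*(k*k)))*((k*(k*k))*(n*(n*n))))) + ((((27314997945321419440128*(k*k))*(k*(k*k)))*((k*(k*k))*(k*(k*k))))*(((k*(k*k))*(k*(k*k)))*((k*(k*k))*((n*n)*(n*n))))))) + ((((((38667629692245497610240*(k*k))*(k*(k*k)))*((k*(k*k))*((k*k)*(k*k))))*(((k*(k*k))*(k*(k*k)))*((k*(k*n))*((n*n)*(n*n))))) + ((((32973706657913987137536*(k*k))*(k*(k*k)))*((k*(k*k))*((k*k)*(k*k))))*(((k*(k*k))*((k*k)*(k*k)))*((k*(n*n))*((n*n)*(n*n))))))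 + (((((15539888159270079823872*(k*k))*((k*k)*(k*k)))*((k*(k*k))*((k*k)*(k*k))))*(((k*(k*k))*((k*k)*(k*k)))*((n*(n*n))*((n*n)*(n*n))))) + ((((3107977150927629975552*(k*k))*((k*k)*(k*k)))*((k*(k*k))*((k*k)*(k*k))))*(((k*(k*k))*((k*k)*(k*k)))*(((n*n)*(n*n))*((n*n)*(n*n)))))))) + ((((((8475279386679705600*k)*(k*(k*k)))*((k*(k*k))*(k*(k*k))))*(((k*k)*(k*(k*k)))*((k*(k*k))*(k*(k*k))))) + (((((146537438375376322560*k)*(k*(k*k)))*((k*(k*k))*(k*(k*k))))*(((k*(k*k))*(k*(k*k)))*((k*(k*k))*(k*(k*n))))) + ((((1043391667982982709248*(k*k))*(k*(k*k)))*((k*(k*k))*(k*(k*k))))*(((k*(k*k))*(k*(k*k)))*((k*(k*k))*(k*(n*n))))))) + ((((((4028589395708655697920*(k*k))*(k*(k*k)))*((k*(k*k))*(k*(k*k))))*(((k*(k*k))*(k*(k*k)))*((k*(k*k))*((k*n)*(n*n))))) + ((((9283864799263397511168*(k*k))*(k*(k*k)))*((k*(k*k))*((k*k)*(k*k))))*(((k*(k*k))*(k*(k*k)))*((k*(k*k))*((n*n)*(n*n))))))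 + (((((13142419627843277291520*(k*k))*(k*(k*k)))*((k*(k*k))*((k*k)*(k*k))))*(((k*(k*k))*((k*k)*(k*k)))*((k*(k*n))*((n*n)*(n*n))))) + ((((11207162232094926569472*(k*k))*((k*k)*(k*k)))*((k*(k*k))*((k*k)*(k*k))))*(((k*(k*k))*((k*k)*(k*k)))*((k*(n*n))*((n*n)*(n*n)))))))))) + ((((((((5281725941488036085760*(k*k))*((k*k)*(k*k)))*((k*(k*k))*((k*k)*(k*k))))*(((k*(k*k))*((k*k)*(k*k)))*(((k*n)*(n*n))*((n*n)*(n*n))))) + (((((1056345188297607217152*(k*k))*((k*k)*(k*k)))*(((k*k)*(k*k))*((k*k)*(k*k))))*(((k*(k*k))*((k*k)*(k*k)))*(((n*n)*(n*n))*((n*n)*(n*n))))) + ((((2133636768674611200*k)*(k*(k*k)))*((k*(k*k))*(k*(k*k))))*(((k*(k*k))*(k*(k*k)))*((k*(k*k))*(k*(k*k))))))) + ((((((36890543926668165120*(k*k))*(k*(k*k)))*((k*(k*k))*(k*(k*k))))*(((k*(k*k))*(k*(k*k)))*((k*(k*k))*(k*(k*n))))) + ((((262672028303408234496*(k*k))*(k*(k*k)))*((k*(k*k))*(k*(k*k))))*(((k*(k*k))*(k*(k*k)))*((k*(k*k))*((k*k)*(n*n))))))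 + (((((1014190337381200035840*(k*k))*(k*(k*k)))*((k*(k*k))*((k*k)*(k*k))))*(((k*(k*k))*(k*(k*k)))*((k*(k*k))*((k*n)*(n*n))))) + ((((2337196732681694478336*(k*k))*(k*(k*k)))*((k*(k*k))*((k*k)*(k*k))))*(((k*(k*k))*((k*k)*(k*k)))*((k*(k*k))*((n*n)*(n*n)))))))) + ((((((3308581165051454423040*(k*k))*((k*k)*(k*k)))*((k*(k*k))*((k*k)*(k*k))))*(((k*(k*k))*((k*k)*(k*k)))*((k*(k*n))*((n*n)*(n*n))))) + (((((2821383498988932562944*(k*k))*((k*k)*(k*k)))*((k*(k*k))*((k*k)*(k*k))))*(((k*(k*k))*((k*k)*(k*k)))*(((k*k)*(n*n))*((n*n)*(n*n))))) + ((((1329665271983002091520*(k*k))*((k*k)*(k*k)))*(((k*k)*(k*k))*((k*k)*(k*k))))*(((k*(k*k))*((k*k)*(k*k)))*(((k*n)*(n*n))*((n*n)*(n*n))))))) + ((((((265933054396600418304*(k*k))*((k*k)*(k*k)))*(((k*k)*(k*k))*((k*k)*(k*k))))*((((k*k)*(k*k))*((k*k)*(k*k)))*(((n*n)*(n*n))*((n*n)*(n*n)))))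 + ((((355606128112435200*(k*k))*(k*(k*k)))*((k*(k*k))*(k*(k*k))))*(((k*(k*k))*(k*(k*k)))*((k*(k*k))*(k*(k*k)))))) + (((((6148423987778027520*(k*k))*(k*(k*k)))*((k*(k*k))*(k*(k*k))))*(((k*(k*k))*(k*(k*k)))*((k*(k*k))*((k*k)*(k*n))))) + ((((43778671383901372416*(k*k))*(k*(k*k)))*((k*(k*k))*((k*k)*(k*k))))*(((k*(k*k))*(k*(k*k)))*((k*(k*k))*((k*k)*(n*n))))))))) + (((((((169031722896866672640*(k*k))*(k*(k*k)))*((k*(k*k))*((k*k)*(k*k))))*(((k*(k*k))*((k*k)*(k*k)))*((k*(k*k))*((k*n)*(n*n))))) + (((((389532788780282413056*(k*k))*((k*k)*(k*k)))*((k*(k*k))*((k*k)*(k*k))))*(((k*(k*k))*((k*k)*(k*k)))*((k*(k*k))*((n*n)*(n*n))))) + ((((551430194175242403840*(k*k))*((k*k)*(k*k)))*((k*(k*k))*((k*k)*(k*k))))*(((k*(k*k))*((k*k)*(k*k)))*(((k*k)*(k*n))*((n*n)*(n*n))))))) + ((((((470230583164822093824*(k*k))*((k*k)*(k*k)))*(((k*k)*(k*k))*((k*k)*(k*k))))*(((k*(k*k))*((k*k)*(k*k)))*(((k*k)*(n*n))*((n*n)*(n*n)))))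 + ((((221610878663833681920*(k*k))*((k*k)*(k*k)))*(((k*k)*(k*k))*((k*k)*(k*k))))*((((k*k)*(k*k))*((k*k)*(k*k)))*(((k*n)*(n*n))*((n*n)*(n*n)))))) + ((((((44322175732766736384*k)*(k*k))*((k*k)*(k*k)))*(((k*k)*(k*k))*((k*k)*(k*k))))*((((k*k)*(k*k))*((k*k)*(k*k)))*(((n*n)*(n*n))*((n*n)*(n*n))))) + ((((29633844009369600*(k*k))*(k*(k*k)))*((k*(k*k))*(k*(k*k))))*(((k*(k*k))*(k*(k*k)))*((k*(k*k))*((k*k)*(k*k)))))))) + (((((((512368665648168960*(k*k))*(k*(k*k)))*((k*(k*k))*((k*k)*(k*k))))*(((k*(k*k))*(k*(k*k)))*((k*(k*k))*((k*k)*(k*n))))) + ((((3648222615325114368*(k*k))*(k*(k*k)))*((k*(k*k))*((k*k)*(k*k))))*(((k*(k*k))*((k*k)*(k*k)))*((k*(k*k))*((k*k)*(n*n)))))) + (((((14085976908072222720*(k*k))*((k*k)*(k*k)))*((k*(k*k))*((k*k)*(k*k))))*(((k*(k*k))*((k*k)*(k*k)))*((k*(k*k))*((k*n)*(n*n)))))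 + ((((32461065731690201088*(k*k))*((k*k)*(k*k)))*((k*(k*k))*((k*k)*(k*k))))*(((k*(k*k))*((k*k)*(k*k)))*(((k*k)*(k*k))*((n*n)*(n*n))))))) + ((((((45952516181270200320*(k*k))*((k*k)*(k*k)))*(((k*k)*(k*k))*((k*k)*(k*k))))*(((k*(k*k))*((k*k)*(k*k)))*(((k*k)*(k*n))*((n*n)*(n*n))))) + ((((39185881930401841152*(k*k))*((k*k)*(k*k)))*(((k*k)*(k*k))*((k*k)*(k*k))))*((((k*k)*(k*k))*((k*k)*(k*k)))*(((k*k)*(n*n))*((n*n)*(n*n)))))) + ((((((18467573221986140160*k)*(k*k))*((k*k)*(k*k)))*(((k*k)*(k*k))*((k*k)*(k*k))))*((((k*k)*(k*k))*((k*k)*(k*k)))*(((k*n)*(n*n))*((n*n)*(n*n))))) + (((((3693514644397228032*k)*(k*k))*((k*k)*(k*k)))*(((k*k)*(k*k))*((k*k)*(k*k))))*((((k*k)*(k*k))*((k*k)*(k*k)))*(((k*n)*(n*n))*((n*n)*(n*(n*n))))))))))))))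

def wm01 (k n : ℤ) : ℤ := (((((((661745884800 + ((11879207201760*n) + (86691058956000*(n*n)))) + (((340444352393280*n)*(n*n)) + (((794142598429440*n)*(n*(n*n))) + ((1134342209525760*(n*n))*(n*(n*n)))))) + ((((973915409203200*(n*n))*((n*n)*(n*n))) + ((((461417657794560*n)*(n*n))*((n*n)*(n*n))) + (((92669655121920*n)*(n*n))*((n*n)*(n*(n*n)))))) + ((15366014063400*k) + ((275862433138800*(k*n)) + ((2013326296383744*k)*(n*n)))))) + (((((7907057768987136*k)*(n*(n*n))) + (((18445456564227072*(k*n))*(n*(n*n))) + ((26348186366484480*(k*n))*((n*n)*(n*n))))) + ((((22622354602131456*k)*(n*n))*((n*n)*(n*n))) + ((((10718043660877824*k)*(n*n))*((n*n)*(n*(n*n)))) + (((2152577806368768*k)*(n*(n*n)))*((n*n)*(n*(n*n))))))) + (((174430937280600*(k*k)) + (((3131708196367440*k)*(k*n)) + ((22857518430249408*k)*(k*(n*n))))) + (((89774222454145152*(k*k))*(n*(n*n))) + (((209431924505362944*(k*k))*((n*n)*(n*n))) + (((299168656789524480*k)*(k*n))*((n*n)*(n*n)))))))) + (((((((256868405538619392*k)*(k*n))*((n*n)*(n*(n*n))))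 + ((((121700397344882688*k)*(k*(n*n)))*((n*n)*(n*(n*n)))) + (((24441920805666816*k)*(k*(n*n)))*((n*(n*n))*(n*(n*n)))))) + (((1287332650203600*k)*(k*k)) + (((23113635511670880*k)*(k*(k*n))) + ((168707961578166912*(k*k))*(k*(n*n)))))) + ((((662635116704994048*(k*k))*((k*n)*(n*n))) + ((((1545888560039341056*k)*(k*k))*((n*n)*(n*n))) + (((2208311236596326400*k)*(k*k))*((n*n)*(n*(n*n)))))) + ((((1896096797975052288*k)*(k*(k*n)))*((n*n)*(n*(n*n)))) + ((((898347774298816512*k)*(k*(k*n)))*((n*(n*n))*(n*(n*n)))) + (((180421310319427584*(k*k))*(k*(n*n)))*((n*(n*n))*(n*(n*n)))))))) + (((((6928957633197600*k)*(k*(k*k))) + (((124411323642586560*(k*k))*(k*(k*n))) + ((908116643976468480*(k*k))*((k*k)*(n*n))))) + ((((3566913162363694080*k)*(k*k))*((k*n)*(n*n))) + ((((8321574565145640960*k)*(k*k))*((k*n)*(n*(n*n)))) + (((11887599868340797440*k)*(k*(k*k)))*((n*n)*(n*(n*n))))))) + (((((10207010419003883520*k)*(k*(k*k)))*((n*(n*n))*(n*(n*n))))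 + ((((4835980422854737920*(k*k))*(k*(k*n)))*((n*(n*n))*(n*(n*n)))) + (((971242930113085440*(k*k))*(k*(k*n)))*((n*(n*n))*((n*n)*(n*n)))))) + ((((28920312658036800*(k*k))*(k*(k*k))) + ((519284757469034880*(k*k))*((k*k)*(k*n)))) + ((((3790511342465522688*k)*(k*k))*((k*k)*(n*n))) + (((14888723824865544192*k)*(k*k))*((k*k)*(n*(n*n)))))))))) + ((((((((34735790313591865344*k)*(k*(k*k)))*((k*n)*(n*(n*n)))) + ((((49621586763839569920*k)*(k*(k*k)))*((k*(n*n))*(n*(n*n)))) + (((42606715928850726912*(k*k))*(k*(k*k)))*((n*(n*n))*(n*(n*n)))))) + ((((20186707243573444608*(k*k))*(k*(k*k)))*((n*(n*n))*((n*n)*(n*n)))) + ((((4054234090759520256*(k*k))*((k*k)*(k*n)))*((n*(n*n))*((n*n)*(n*n)))) + ((97161387897974400*(k*k))*((k*k)*(k*k)))))) + (((((1744632279033396480*k)*(k*k))*((k*k)*(k*n))) + ((((12735138464848364544*k)*(k*k))*((k*k)*(k*(n*n)))) + (((50022990047170215936*k)*(k*(k*k)))*((k*k)*(n*(n*n))))))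 + ((((116706272789081751552*k)*(k*(k*k)))*((k*(k*n))*(n*(n*n)))) + ((((166721307599996190720*(k*k))*(k*(k*k)))*((k*(n*n))*(n*(n*n)))) + (((143153081435717369856*(k*k))*(k*(k*k)))*((k*(n*n))*((n*n)*(n*n)))))))) + ((((((67824900568371953664*(k*k))*((k*k)*(k*k)))*((n*(n*n))*((n*n)*(n*n)))) + ((((13621737352643739648*(k*k))*((k*k)*(k*k)))*(((n*n)*(n*n))*((n*n)*(n*n)))) + (((269195591214950400*k)*(k*k))*((k*k)*(k*k))))) + ((((4833742351200814080*k)*(k*k))*((k*k)*(k*(k*n)))) + ((((35284875132082710528*k)*(k*(k*k)))*((k*k)*(k*(n*n)))) + (((138598652081443479552*k)*(k*(k*k)))*((k*(k*k))*(n*(n*n))))))) + (((((323360504669564043264*(k*k))*(k*(k*k)))*((k*(k*n))*(n*(n*n)))) + ((((461940790267171307520*(k*k))*(k*(k*k)))*((k*(k*n))*((n*n)*(n*n)))) + (((396640853656099356672*(k*k))*((k*k)*(k*k)))*((k*(n*n))*((n*n)*(n*n)))))) + (((((187925901951734120448*(k*k))*((k*k)*(k*k)))*(((k*n)*(n*n))*((n*n)*(n*n))))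 + ((((37742440559344091136*k)*(k*k))*((k*k)*(k*k)))*(((n*n)*(n*n))*((n*n)*(n*n))))) + ((((625120649040888000*k)*(k*k))*((k*k)*(k*(k*k)))) + (((11224915859522424960*k)*(k*(k*k)))*((k*k)*(k*(k*n))))))))) + (((((((81939224048510241792*k)*(k*(k*k)))*((k*(k*k))*(k*(n*n)))) + ((((321858759049856391168*(k*k))*(k*(k*k)))*((k*(k*k))*(n*(n*n)))) + (((750923427571708133376*(k*k))*(k*(k*k)))*((k*(k*k))*((n*n)*(n*n)))))) + ((((1072745417602288189440*(k*k))*((k*k)*(k*k)))*((k*(k*n))*((n*n)*(n*n)))) + ((((921104405201323819008*(k*k))*((k*k)*(k*k)))*(((k*k)*(n*n))*((n*n)*(n*n)))) + ((((436413889964861816832*k)*(k*k))*((k*k)*(k*k)))*(((k*n)*(n*n))*((n*n)*(n*n))))))) + ((((((87647977900892749824*k)*(k*k))*((k*k)*(k*k)))*(((k*n)*(n*n))*((n*n)*(n*(n*n))))) + ((((1229836045232995200*k)*(k*(k*k)))*((k*k)*(k*(k*k)))) + (((22083552532819825920*k)*(k*(k*k)))*((k*(k*k))*(k*(k*n))))))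 + ((((161205607161450178560*(k*k))*(k*(k*k)))*((k*(k*k))*(k*(n*n)))) + ((((633221538979004559360*(k*k))*(k*(k*k)))*((k*(k*k))*((k*n)*(n*n)))) + (((1477364214575587000320*(k*k))*((k*k)*(k*k)))*((k*(k*k))*((n*n)*(n*n)))))))) + ((((((2110521157232936878080*(k*k))*((k*k)*(k*k)))*(((k*k)*(k*n))*((n*n)*(n*n)))) + (((((1812185331413223997440*k)*(k*k))*((k*k)*(k*k)))*(((k*k)*(n*n))*((n*n)*(n*n)))) + ((((858603500287442288640*k)*(k*k))*((k*k)*(k*k)))*(((k*k)*(n*n))*((n*n)*(n*(n*n))))))) + (((((172439196710448660480*k)*(k*k))*((k*k)*(k*(k*k))))*(((k*n)*(n*n))*((n*n)*(n*(n*n))))) + ((((2063569362331276800*k)*(k*(k*k)))*((k*(k*k))*(k*(k*k)))) + (((37054621668099824640*(k*k))*(k*(k*k)))*((k*(k*k))*(k*(k*n))))))) + (((((270492462143629774848*(k*k))*(k*(k*k)))*((k*(k*k))*((k*k)*(n*n)))) + ((((1062507542858290593792*(k*k))*((k*k)*(k*k)))*((k*(k*k))*((k*n)*(n*n)))) + (((2478933815863338860544*(k*k))*((k*k)*(k*k)))*(((k*k)*(k*k))*((n*n)*(n*n))))))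 + ((((((3541341333485896335360*k)*(k*k))*((k*k)*(k*k)))*(((k*k)*(k*n))*((n*n)*(n*n)))) + ((((3040753011777079345152*k)*(k*k))*((k*k)*(k*k)))*(((k*k)*(k*n))*((n*n)*(n*(n*n)))))) + (((((1440692872065274871808*k)*(k*k))*((k*k)*(k*(k*k))))*(((k*k)*(n*n))*((n*n)*(n*(n*n))))) + ((((289344175142816710656*k)*(k*k))*((k*k)*(k*(k*k))))*(((k*k)*(n*(n*n)))*((n*n)*(n*(n*n)))))))))))) + (((((((((2963077228227916800*(k*k))*(k*(k*k)))*((k*(k*k))*(k*(k*k)))) + ((((53206814263611525120*(k*k))*(k*(k*k)))*((k*(k*k))*((k*k)*(k*n)))) + (((388401596196591329280*(k*k))*((k*k)*(k*k)))*((k*(k*k))*((k*k)*(n*n)))))) + ((((1525663190433026211840*(k*k))*((k*k)*(k*k)))*(((k*k)*(k*k))*((k*n)*(n*n)))) + (((((3559526237516810158080*k)*(k*k))*((k*k)*(k*k)))*(((k*k)*(k*k))*((n*n)*(n*n)))) + ((((5085053148842352967680*k)*(k*k))*((k*k)*(k*k)))*(((k*k)*(k*k))*((n*n)*(n*(n*n))))))))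 + ((((((4366255372751937208320*k)*(k*k))*((k*k)*(k*(k*k))))*(((k*k)*(k*n))*((n*n)*(n*(n*n))))) + (((((2068709592844845711360*k)*(k*k))*((k*k)*(k*(k*k))))*(((k*k)*(k*(n*n)))*((n*n)*(n*(n*n))))) + ((((415473056303567339520*k)*(k*(k*k)))*((k*k)*(k*(k*k))))*(((k*k)*(n*(n*n)))*((n*n)*(n*(n*n))))))) + ((((3642449444336102400*(k*k))*(k*(k*k)))*((k*(k*k))*((k*k)*(k*k)))) + ((((65406118120601057280*(k*k))*((k*k)*(k*k)))*((k*(k*k))*((k*k)*(k*n)))) + (((477455252739625525248*(k*k))*((k*k)*(k*k)))*(((k*k)*(k*k))*((k*k)*(n*n)))))))) + (((((((1875472924910140588032*k)*(k*k))*((k*k)*(k*k)))*(((k*k)*(k*k))*((k*n)*(n*n)))) + (((((4375671230874201882624*k)*(k*k))*((k*k)*(k*k)))*(((k*k)*(k*k))*((k*n)*(n*(n*n))))) + ((((6250981789461192376320*k)*(k*k))*((k*k)*(k*(k*k))))*(((k*k)*(k*k))*((n*n)*(n*(n*n))))))) + (((((5367376122297767165952*k)*(k*k))*((k*k)*(k*(k*k))))*(((k*k)*(k*(k*n)))*((n*n)*(n*(n*n)))))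 + (((((2543035959275283283968*k)*(k*(k*k)))*((k*k)*(k*(k*k))))*(((k*k)*(k*(n*n)))*((n*n)*(n*(n*n))))) + ((((510735255419303755776*k)*(k*(k*k)))*((k*k)*(k*(k*k))))*(((k*k)*(k*(n*n)))*((n*(n*n))*(n*(n*n)))))))) + (((((3823544653338009600*(k*k))*((k*k)*(k*k)))*((k*(k*k))*((k*k)*(k*k)))) + ((((68658023421037854720*(k*k))*((k*k)*(k*k)))*(((k*k)*(k*k))*((k*k)*(k*n)))) + ((((501194023735286956032*k)*(k*k))*((k*k)*(k*k)))*(((k*k)*(k*k))*((k*k)*(n*n)))))) + (((((1968721327827150962688*k)*(k*k))*((k*k)*(k*k)))*(((k*k)*(k*k))*((k*k)*(n*(n*n))))) + (((((4593231288704660668416*k)*(k*k))*((k*k)*(k*(k*k))))*(((k*k)*(k*k))*((k*n)*(n*(n*n))))) + ((((6561784985487597895680*k)*(k*k))*((k*k)*(k*(k*k))))*(((k*k)*(k*(k*k)))*((n*n)*(n*(n*n)))))))))) + ((((((((5634246898609205280768*k)*(k*(k*k)))*((k*k)*(k*(k*k))))*(((k*k)*(k*(k*n)))*((n*n)*(n*(n*n)))))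 + (((((2669478240999872397312*k)*(k*(k*k)))*((k*k)*(k*(k*k))))*(((k*k)*(k*(k*n)))*((n*(n*n))*(n*(n*n))))) + ((((536129521204995293184*k)*(k*(k*k)))*((k*(k*k))*(k*(k*k))))*(((k*k)*(k*(n*n)))*((n*(n*n))*(n*(n*n))))))) + ((((3407604559527168000*(k*k))*((k*k)*(k*k)))*(((k*k)*(k*k))*((k*k)*(k*k)))) + (((((61189154192717107200*k)*(k*k))*((k*k)*(k*k)))*(((k*k)*(k*k))*((k*k)*(k*n)))) + ((((446672448980077363200*k)*(k*k))*((k*k)*(k*k)))*(((k*k)*(k*k))*((k*k)*(k*(n*n)))))))) + ((((((1754557621340258304000*k)*(k*k))*((k*k)*(k*(k*k))))*(((k*k)*(k*k))*((k*k)*(n*(n*n))))) + (((((4093565899887083520000*k)*(k*k))*((k*k)*(k*(k*k))))*(((k*k)*(k*(k*k)))*((k*n)*(n*(n*n))))) + ((((5847975248654027980800*k)*(k*(k*k)))*((k*k)*(k*(k*k))))*(((k*k)*(k*(k*k)))*((n*n)*(n*(n*n))))))) + (((((5021337836818582732800*k)*(k*(k*k)))*((k*k)*(k*(k*k))))*(((k*k)*(k*(k*k)))*((n*(n*n))*(n*(n*n)))))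 + (((((2379085063963803648000*k)*(k*(k*k)))*((k*(k*k))*(k*(k*k))))*(((k*k)*(k*(k*n)))*((n*(n*n))*(n*(n*n))))) + ((((477807878955073536000*k)*(k*(k*k)))*((k*(k*k))*(k*(k*k))))*(((k*(k*k))*(k*(n*n)))*((n*(n*n))*(n*(n*n))))))))) + (((((((2553411225267302400*k)*(k*k))*((k*k)*(k*k)))*(((k*k)*(k*k))*((k*k)*(k*k)))) + (((((45850710342883368960*k)*(k*k))*((k*k)*(k*k)))*(((k*k)*(k*k))*((k*k)*(k*(k*n))))) + ((((334703943613898588160*k)*(k*k))*((k*k)*(k*(k*k))))*(((k*k)*(k*k))*((k*k)*(k*(n*n))))))) + (((((1314738367569808588800*k)*(k*k))*((k*k)*(k*(k*k))))*(((k*k)*(k*(k*k)))*((k*k)*(n*(n*n))))) + (((((3067421921157788467200*k)*(k*(k*k)))*((k*k)*(k*(k*k))))*(((k*k)*(k*(k*k)))*((k*n)*(n*(n*n))))) + ((((4382049481262565949440*k)*(k*(k*k)))*((k*k)*(k*(k*k))))*(((k*k)*(k*(k*k)))*((k*(n*n))*(n*(n*n)))))))) + ((((((3762627335439400304640*k)*(k*(k*k)))*((k*(k*k))*(k*(k*k))))*(((k*k)*(k*(k*k)))*((n*(n*n))*(n*(n*n)))))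 + (((((1782714271567498444800*k)*(k*(k*k)))*((k*(k*k))*(k*(k*k))))*(((k*(k*k))*(k*(k*n)))*((n*(n*n))*(n*(n*n))))) + ((((358034665419413913600*(k*k))*(k*(k*k)))*((k*(k*k))*(k*(k*k))))*(((k*(k*k))*(k*(n*n)))*((n*(n*n))*(n*(n*n))))))) + ((((((1584793282751078400*k)*(k*k))*((k*k)*(k*k)))*(((k*k)*(k*k))*((k*k)*(k*(k*k))))) + ((((28457578120143421440*k)*(k*k))*((k*k)*(k*(k*k))))*(((k*k)*(k*k))*((k*k)*(k*(k*n)))))) + (((((207736450897832312832*k)*(k*k))*((k*k)*(k*(k*k))))*(((k*k)*(k*(k*k)))*((k*k)*(k*(n*n))))) + ((((816002000300286148608*k)*(k*(k*k)))*((k*k)*(k*(k*k))))*(((k*k)*(k*(k*k)))*((k*k)*(n*(n*n))))))))))) + (((((((((1903817916552163885056*k)*(k*(k*k)))*((k*k)*(k*(k*k))))*(((k*k)*(k*(k*k)))*((k*(k*n))*(n*(n*n))))) + (((((2719751183322065141760*k)*(k*(k*k)))*((k*(k*k))*(k*(k*k))))*(((k*k)*(k*(k*k)))*((k*(n*n))*(n*(n*n)))))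 + ((((2335302296017009901568*k)*(k*(k*k)))*((k*(k*k))*(k*(k*k))))*(((k*(k*k))*(k*(k*k)))*((n*(n*n))*(n*(n*n))))))) + (((((1106454711927771758592*(k*k))*(k*(k*k)))*((k*(k*k))*(k*(k*k))))*(((k*(k*k))*(k*(k*n)))*((n*(n*n))*(n*(n*n))))) + (((((222216845910180102144*(k*k))*(k*(k*k)))*((k*(k*k))*(k*(k*k))))*(((k*(k*k))*(k*(k*n)))*((n*(n*n))*((n*n)*(n*n))))) + ((((796409557751808000*k)*(k*k))*((k*k)*(k*(k*k))))*(((k*k)*(k*k))*((k*k)*(k*(k*k)))))))) + ((((((14300847594462412800*k)*(k*k))*((k*k)*(k*(k*k))))*(((k*k)*(k*(k*k)))*((k*k)*(k*(k*n))))) + (((((104394242952163491840*k)*(k*(k*k)))*((k*k)*(k*(k*k))))*(((k*k)*(k*(k*k)))*((k*k)*(k*(n*n))))) + ((((410067230380743720960*k)*(k*(k*k)))*((k*k)*(k*(k*k))))*(((k*k)*(k*(k*k)))*((k*(k*k))*(n*(n*n))))))) + (((((956729689268520222720*k)*(k*(k*k)))*((k*(k*k))*(k*(k*k))))*(((k*k)*(k*(k*k)))*((k*(k*n))*(n*(n*n)))))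 + (((((1366762378841240371200*k)*(k*(k*k)))*((k*(k*k))*(k*(k*k))))*(((k*(k*k))*(k*(k*k)))*((k*(n*n))*(n*(n*n))))) + ((((1173564457289420636160*(k*k))*(k*(k*k)))*((k*(k*k))*(k*(k*k))))*(((k*(k*k))*(k*(k*k)))*((n*(n*n))*(n*(n*n))))))))) + (((((((556029052741264343040*(k*k))*(k*(k*k)))*((k*(k*k))*(k*(k*k))))*(((k*(k*k))*(k*(k*k)))*((n*(n*n))*((n*n)*(n*n))))) + (((((111671106826697441280*(k*k))*(k*(k*k)))*((k*(k*k))*((k*k)*(k*k))))*(((k*(k*k))*(k*(k*n)))*((n*(n*n))*((n*n)*(n*n))))) + ((((312801686765568000*k)*(k*k))*((k*k)*(k*(k*k))))*(((k*k)*(k*(k*k)))*((k*k)*(k*(k*k))))))) + (((((5616870373018828800*k)*(k*(k*k)))*((k*k)*(k*(k*k))))*(((k*k)*(k*(k*k)))*((k*k)*(k*(k*n))))) + (((((41002389996715376640*k)*(k*(k*k)))*((k*k)*(k*(k*k))))*(((k*k)*(k*(k*k)))*((k*(k*k))*(k*(n*n))))) + ((((161059997462204252160*k)*(k*(k*k)))*((k*(k*k))*(k*(k*k))))*(((k*k)*(k*(k*k)))*((k*(k*k))*(n*(n*n))))))))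 + ((((((375769800436214661120*k)*(k*(k*k)))*((k*(k*k))*(k*(k*k))))*(((k*(k*k))*(k*(k*k)))*((k*(k*n))*(n*(n*n))))) + (((((536816231482864435200*(k*k))*(k*(k*k)))*((k*(k*k))*(k*(k*k))))*(((k*(k*k))*(k*(k*k)))*((k*(n*n))*(n*(n*n))))) + ((((460934877281632911360*(k*k))*(k*(k*k)))*((k*(k*k))*(k*(k*k))))*(((k*(k*k))*(k*(k*k)))*((k*(n*n))*((n*n)*(n*n))))))) + ((((((218388671877705891840*(k*k))*(k*(k*k)))*((k*(k*k))*((k*k)*(k*k))))*(((k*(k*k))*(k*(k*k)))*((n*(n*n))*((n*n)*(n*n))))) + ((((43860486402217082880*(k*k))*(k*(k*k)))*((k*(k*k))*((k*k)*(k*k))))*(((k*(k*k))*((k*k)*(k*n)))*((n*(n*n))*((n*n)*(n*n)))))) + (((((90547856695296000*k)*(k*(k*k)))*((k*k)*(k*(k*k))))*(((k*k)*(k*(k*k)))*((k*k)*(k*(k*k))))) + ((((1625936160610713600*k)*(k*(k*k)))*((k*k)*(k*(k*k))))*(((k*k)*(k*(k*k)))*((k*(k*k))*(k*(k*n))))))))))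 + ((((((((11869112893786030080*k)*(k*(k*k)))*((k*(k*k))*(k*(k*k))))*(((k*k)*(k*(k*k)))*((k*(k*k))*(k*(n*n))))) + (((((46622630844322283520*k)*(k*(k*k)))*((k*(k*k))*(k*(k*k))))*(((k*(k*k))*(k*(k*k)))*((k*(k*k))*(n*(n*n))))) + ((((108775468547325296640*(k*k))*(k*(k*k)))*((k*(k*k))*(k*(k*k))))*(((k*(k*k))*(k*(k*k)))*((k*(k*n))*(n*(n*n))))))) + (((((155394172271355494400*(k*k))*(k*(k*k)))*((k*(k*k))*(k*(k*k))))*(((k*(k*k))*(k*(k*k)))*((k*(k*n))*((n*n)*(n*n))))) + (((((133428517107841105920*(k*k))*(k*(k*k)))*((k*(k*k))*((k*k)*(k*k))))*(((k*(k*k))*(k*(k*k)))*((k*(n*n))*((n*n)*(n*n))))) + ((((63217773438283284480*(k*k))*(k*(k*k)))*((k*(k*k))*((k*k)*(k*k))))*(((k*(k*k))*((k*k)*(k*k)))*((n*(n*n))*((n*n)*(n*n)))))))) + ((((((12696456590115471360*(k*k))*((k*k)*(k*k)))*((k*(k*k))*((k*k)*(k*k))))*(((k*(k*k))*((k*k)*(k*n)))*((n*(n*n))*((n*n)*(n*n)))))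 + (((((17286409005465600*k)*(k*(k*k)))*((k*k)*(k*(k*k))))*(((k*k)*(k*(k*k)))*((k*(k*k))*(k*(k*k))))) + ((((310405994298408960*k)*(k*(k*k)))*((k*(k*k))*(k*(k*k))))*(((k*k)*(k*(k*k)))*((k*(k*k))*(k*(k*n))))))) + (((((2265921552450060288*k)*(k*(k*k)))*((k*(k*k))*(k*(k*k))))*(((k*(k*k))*(k*(k*k)))*((k*(k*k))*(k*(n*n))))) + (((((8900684070279708672*(k*k))*(k*(k*k)))*((k*(k*k))*(k*(k*k))))*(((k*(k*k))*(k*(k*k)))*((k*(k*k))*(n*(n*n))))) + ((((20766225813580283904*(k*k))*(k*(k*k)))*((k*(k*k))*(k*(k*k))))*(((k*(k*k))*(k*(k*k)))*((k*(k*k))*((n*n)*(n*n))))))))) + (((((((29666160160895139840*(k*k))*(k*(k*k)))*((k*(k*k))*((k*k)*(k*k))))*(((k*(k*k))*(k*(k*k)))*((k*(k*n))*((n*n)*(n*n))))) + (((((25472716902406029312*(k*k))*(k*(k*k)))*((k*(k*k))*((k*k)*(k*k))))*(((k*(k*k))*((k*k)*(k*k)))*((k*(n*n))*((n*n)*(n*n)))))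 + ((((12068847656399536128*(k*k))*((k*k)*(k*k)))*((k*(k*k))*((k*k)*(k*k))))*(((k*(k*k))*((k*k)*(k*k)))*((n*(n*n))*((n*n)*(n*n))))))) + (((((2423868985385680896*(k*k))*((k*k)*(k*k)))*((k*(k*k))*((k*k)*(k*k))))*(((k*(k*k))*((k*k)*(k*k)))*(((n*n)*(n*n))*((n*n)*(n*n))))) + (((((1646324667187200*k)*(k*(k*k)))*((k*(k*k))*(k*(k*k))))*(((k*k)*(k*(k*k)))*((k*(k*k))*(k*(k*k))))) + ((((29562475647467520*k)*(k*(k*k)))*((k*(k*k))*(k*(k*k))))*(((k*(k*k))*(k*(k*k)))*((k*(k*k))*(k*(k*n)))))))) + ((((((215802052614291456*(k*k))*(k*(k*k)))*((k*(k*k))*(k*(k*k))))*(((k*(k*k))*(k*(k*k)))*((k*(k*k))*(k*(n*n))))) + (((((847684197169496064*(k*k))*(k*(k*k)))*((k*(k*k))*(k*(k*k))))*(((k*(k*k))*(k*(k*k)))*((k*(k*k))*((k*n)*(n*n))))) + ((((1977735791769550848*(k*k))*(k*(k*k)))*((k*(k*k))*((k*k)*(k*k))))*(((k*(k*k))*(k*(k*k)))*((k*(k*k))*((n*n)*(n*n)))))))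 + ((((((2825348586751918080*(k*k))*(k*(k*k)))*((k*(k*k))*((k*k)*(k*k))))*(((k*(k*k))*((k*k)*(k*k)))*((k*(k*n))*((n*n)*(n*n))))) + ((((2425973038324383744*(k*k))*((k*k)*(k*k)))*((k*(k*k))*((k*k)*(k*k))))*(((k*(k*k))*((k*k)*(k*k)))*((k*(n*n))*((n*n)*(n*n)))))) + (((((1149414062514241536*(k*k))*((k*k)*(k*k)))*((k*(k*k))*((k*k)*(k*k))))*(((k*(k*k))*((k*k)*(k*k)))*(((k*n)*(n*n))*((n*n)*(n*n))))) + ((((230844665274826752*(k*k))*((k*k)*(k*k)))*(((k*k)*(k*k))*((k*k)*(k*k))))*(((k*(k*k))*((k*k)*(k*k)))*(((n*n)*(n*n))*((n*n)*(n*n)))))))))))))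

def wm10 (k n : ℤ) : ℤ := (((((((3781786458450 + ((65137763099940*n) + (462512029542768*(n*n)))) + (((1781888515712640*n)*(n*n)) + (((4098803001292800*n)*(n*(n*n))) + ((5792724033638400*(n*n))*(n*(n*n)))))) + ((((4931891749158912*(n*n))*((n*n)*(n*n))) + ((((2320602613678080*n)*(n*n))*((n*n)*(n*n))) + (((463348275609600*n)*(n*n))*((n*n)*(n*(n*n)))))) + (((93685770578400*k) + (1614568345398000*(k*n))) + (((11468861726083776*k)*(n*n)) + ((44198547421534848*k)*(n*(n*n))))))) + (((((101692380339509760*(k*n))*(n*(n*n))) + (((143748210521272320*(k*n))*((n*n)*(n*n))) + (((122408817581850624*k)*(n*n))*((n*n)*(n*n))))) + (((((57607060870397952*k)*(n*n))*((n*n)*(n*(n*n)))) + (((11504246272819200*k)*(n*(n*n)))*((n*n)*(n*(n*n))))) + ((1139213817541800*(k*k)) + ((19642835225640240*k)*(k*n))))) + ((((139579345115109504*k)*(k*(n*n))) + (((538052314101844608*(k*k))*(n*(n*n))) + ((1238220661100576256*(k*k))*((n*n)*(n*n))))) + (((((1750620061149327360*k)*(k*n))*((n*n)*(n*n))) + (((1490990132856324096*k)*(k*n))*((n*n)*(n*(n*n)))))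 + ((((701790502461898752*k)*(k*(n*n)))*((n*n)*(n*(n*n)))) + (((140171583720259584*k)*(k*(n*n)))*((n*(n*n))*(n*(n*n))))))))) + ((((((9044648539126200*k)*(k*k)) + (((156019694273178960*k)*(k*(k*n))) + ((1108998512267518656*(k*k))*(k*(n*n))))) + (((4275990201329784576*(k*k))*((k*n)*(n*n))) + ((((9842226526773900288*k)*(k*k))*((n*n)*(n*n))) + (((13917430836610375680*k)*(k*k))*((n*n)*(n*(n*n))))))) + (((((11855172352161153024*k)*(k*(k*n)))*((n*n)*(n*(n*n)))) + ((((5580901534438785024*k)*(k*(k*n)))*((n*(n*n))*(n*(n*n)))) + (((1114862540493422592*(k*k))*(k*(n*n)))*((n*(n*n))*(n*(n*n)))))) + ((((52610145246558900*k)*(k*(k*k))) + ((907866120746224440*(k*k))*(k*(k*n)))) + (((6454926324882171360*(k*k))*((k*k)*(n*n))) + (((24893581021926446592*k)*(k*k))*((k*n)*(n*n))))))) + ((((((57308355452681625600*k)*(k*k))*((k*n)*(n*(n*n)))) + ((((81049084670417633280*k)*(k*(k*k)))*((n*n)*(n*(n*n)))) + (((69048865520943759360*k)*(k*(k*k)))*((n*(n*n))*(n*(n*n))))))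 + (((((32509564089551290368*(k*k))*(k*(k*n)))*((n*(n*n))*(n*(n*n)))) + (((6495120499566182400*(k*k))*(k*(k*n)))*((n*(n*n))*((n*n)*(n*n))))) + (((238487951095594200*(k*k))*(k*(k*k))) + ((4116819730319732880*(k*k))*((k*k)*(k*n)))))) + (((((29277527572108908864*k)*(k*k))*((k*k)*(n*n))) + ((((112930164211388073984*k)*(k*k))*((k*k)*(n*(n*n)))) + (((260019583811903397888*k)*(k*(k*k)))*((k*n)*(n*(n*n)))))) + (((((367784867414561587200*k)*(k*(k*k)))*((k*(n*n))*(n*(n*n)))) + (((313369018321366941696*(k*k))*(k*(k*k)))*((n*(n*n))*(n*(n*n))))) + ((((147558233469370761216*(k*k))*(k*(k*k)))*((n*(n*n))*((n*n)*(n*n)))) + (((29484484377257705472*(k*k))*((k*k)*(k*n)))*((n*(n*n))*((n*n)*(n*n)))))))))) + (((((((875010602123658000*(k*k))*((k*k)*(k*k))) + ((((15108895527692928480*k)*(k*k))*((k*k)*(k*n))) + (((107471924674702471296*k)*(k*k))*((k*k)*(k*(n*n)))))) + ((((414610468485674130432*k)*(k*(k*k)))*((k*k)*(n*(n*n)))) +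 ((((954760130987815821312*k)*(k*(k*k)))*((k*(k*n))*(n*(n*n)))) + (((1350620854974229708800*(k*k))*(k*(k*k)))*((k*(n*n))*(n*(n*n))))))) + (((((1150916997377345716224*(k*k))*(k*(k*k)))*((k*(n*n))*((n*n)*(n*n)))) + ((((541999935566955675648*(k*k))*((k*k)*(k*k)))*((n*(n*n))*((n*n)*(n*n)))) + (((108312502930199543808*(k*k))*((k*k)*(k*k)))*(((n*n)*(n*n))*((n*n)*(n*n)))))) + (((((2663990840633522400*k)*(k*k))*((k*k)*(k*k))) + (((46010726506222332480*k)*(k*k))*((k*k)*(k*(k*n))))) + ((((327340118515512340224*k)*(k*(k*k)))*((k*k)*(k*(n*n)))) + (((1263005727421704726528*k)*(k*(k*k)))*((k*(k*k))*(n*(n*n)))))))) + ((((((2908776414548909703168*(k*k))*(k*(k*k)))*((k*(k*n))*(n*(n*n)))) + ((((4115240199820783779840*(k*k))*(k*(k*k)))*((k*(k*n))*((n*n)*(n*n)))) + (((3507107789789101817856*(k*k))*((k*k)*(k*k)))*((k*(n*n))*((n*n)*(n*n)))))) + (((((1651762507221766766592*(k*k))*((k*k)*(k*k)))*(((k*n)*(n*n))*((n*n)*(n*n))))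 + ((((330119974343946534912*k)*(k*k))*((k*k)*(k*k)))*(((n*n)*(n*n))*((n*n)*(n*n))))) + ((((6845914526316465600*k)*(k*k))*((k*k)*(k*(k*k)))) + (((118263184125343758720*k)*(k*(k*k)))*((k*k)*(k*(k*n))))))) + (((((841505288507758181376*k)*(k*(k*k)))*((k*(k*k))*(k*(n*n)))) + ((((3247250749081734555648*(k*k))*(k*(k*k)))*((k*(k*k))*(n*(n*n)))) + (((7479379983157400567808*(k*k))*(k*(k*k)))*((k*(k*k))*((n*n)*(n*n)))))) + (((((10582564383947998494720*(k*k))*((k*k)*(k*k)))*((k*(k*n))*((n*n)*(n*n)))) + (((9019524623296484081664*(k*k))*((k*k)*(k*k)))*(((k*k)*(n*n))*((n*n)*(n*n))))) + (((((4248358624324717903872*k)*(k*k))*((k*k)*(k*k)))*(((k*n)*(n*n))*((n*n)*(n*n)))) + ((((849153312800366395392*k)*(k*k))*((k*k)*(k*k)))*(((k*n)*(n*n))*((n*n)*(n*(n*n)))))))))) + (((((((15025734435180268800*k)*(k*(k*k)))*((k*k)*(k*(k*k)))) + ((((259616263754203130880*k)*(k*(k*k)))*((k*(k*k))*(k*(k*n))))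 + (((1847552139719938022400*(k*k))*(k*(k*k)))*((k*(k*k))*(k*(n*n)))))) + ((((7130194805643707731968*(k*k))*(k*(k*k)))*((k*(k*k))*((k*n)*(n*n)))) + ((((16424427884984837406720*(k*k))*((k*k)*(k*k)))*((k*(k*k))*((n*n)*(n*n)))) + (((23240812471078020710400*(k*k))*((k*k)*(k*k)))*(((k*k)*(k*n))*((n*n)*(n*n))))))) + ((((((19809734473982284922880*k)*(k*k))*((k*k)*(k*k)))*(((k*k)*(n*n))*((n*n)*(n*n)))) + (((((9331496831819628675072*k)*(k*k))*((k*k)*(k*k)))*(((k*k)*(n*n))*((n*n)*(n*(n*n))))) + ((((1865319331234138030080*k)*(k*k))*((k*k)*(k*(k*k))))*(((k*n)*(n*n))*((n*n)*(n*(n*n))))))) + (((((28393855438764816000*k)*(k*(k*k)))*((k*(k*k))*(k*(k*k)))) + (((490666509567587854080*(k*k))*(k*(k*k)))*((k*(k*k))*(k*(k*n))))) + ((((3492208068971217583104*(k*k))*(k*(k*k)))*((k*(k*k))*((k*k)*(n*n)))) + (((13478577103605627813888*(k*k))*((k*k)*(k*k)))*((k*(k*k))*((k*n)*(n*n))))))))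 + ((((((31050374951978654957568*(k*k))*((k*k)*(k*k)))*(((k*k)*(k*k))*((n*n)*(n*n)))) + (((((43939926088174786314240*k)*(k*k))*((k*k)*(k*k)))*(((k*k)*(k*n))*((n*n)*(n*n)))) + ((((37455659953119062654976*k)*(k*k))*((k*k)*(k*k)))*(((k*k)*(k*n))*((n*n)*(n*(n*n))))))) + ((((((17644999863986848530432*k)*(k*k))*((k*k)*(k*(k*k))))*(((k*k)*(n*n))*((n*n)*(n*(n*n))))) + ((((3527418272604814835712*k)*(k*k))*((k*k)*(k*(k*k))))*(((k*k)*(n*(n*n)))*((n*n)*(n*(n*n)))))) + ((((46429517379819974400*(k*k))*(k*(k*k)))*((k*(k*k))*(k*(k*k)))) + (((802437329861648939520*(k*k))*(k*(k*k)))*((k*(k*k))*((k*k)*(k*n))))))) + (((((5711707342810916038656*(k*k))*((k*k)*(k*k)))*((k*(k*k))*((k*k)*(n*n)))) + ((((22046684746202965868544*(k*k))*((k*k)*(k*k)))*(((k*k)*(k*k))*((k*n)*(n*n)))) + ((((50792008562999948869632*k)*(k*k))*((k*k)*(k*k)))*(((k*k)*(k*k))*((n*n)*(n*n)))))) + ((((((71881204457182781767680*k)*(k*k))*((k*k)*(k*k)))*(((k*k)*(k*k))*((n*n)*(n*(n*n)))))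 + ((((61277458644308940816384*k)*(k*k))*((k*k)*(k*(k*k))))*(((k*k)*(k*n))*((n*n)*(n*(n*n)))))) + (((((28869096279669573943296*k)*(k*k))*((k*k)*(k*(k*k))))*(((k*k)*(k*(n*n)))*((n*n)*(n*(n*n))))) + ((((5771632256343959666688*k)*(k*(k*k)))*((k*k)*(k*(k*k))))*(((k*k)*(n*(n*n)))*((n*n)*(n*(n*n)))))))))))) + (((((((((65866413850536499200*(k*k))*(k*(k*k)))*((k*(k*k))*((k*k)*(k*k)))) + ((((1138481779740690677760*(k*k))*((k*k)*(k*k)))*((k*(k*k))*((k*k)*(k*n)))) + (((8104291994049580892160*(k*k))*((k*k)*(k*k)))*(((k*k)*(k*k))*((k*k)*(n*n)))))) + (((((31283878032139373641728*k)*(k*k))*((k*k)*(k*k)))*(((k*k)*(k*k))*((k*n)*(n*n)))) + (((((72077176213827115548672*k)*(k*k))*((k*k)*(k*k)))*(((k*k)*(k*k))*((k*n)*(n*(n*n))))) + ((((102009736852635616542720*k)*(k*k))*((k*k)*(k*(k*k))))*(((k*k)*(k*k))*((n*n)*(n*(n*n)))))))) + ((((((86966315923500422922240*k)*(k*k))*((k*k)*(k*(k*k))))*(((k*k)*(k*(k*n)))*((n*n)*(n*(n*n)))))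 + (((((40974031665798926303232*k)*(k*(k*k)))*((k*k)*(k*(k*k))))*(((k*k)*(k*(n*n)))*((n*n)*(n*(n*n))))) + ((((8192214128667591180288*k)*(k*(k*k)))*((k*k)*(k*(k*k))))*(((k*k)*(k*(n*n)))*((n*(n*n))*(n*(n*n))))))) + (((((81090484454256076800*(k*k))*((k*k)*(k*k)))*((k*(k*k))*((k*k)*(k*k)))) + (((1401742883899398205440*(k*k))*((k*k)*(k*k)))*(((k*k)*(k*k))*((k*k)*(k*n))))) + (((((9978960918419924336640*k)*(k*k))*((k*k)*(k*k)))*(((k*k)*(k*k))*((k*k)*(n*n)))) + ((((38522483370315200987136*k)*(k*k))*((k*k)*(k*k)))*(((k*k)*(k*k))*((k*k)*(n*(n*n))))))))) + (((((((88759069756284072886272*k)*(k*k))*((k*k)*(k*(k*k))))*(((k*k)*(k*k))*((k*n)*(n*(n*n))))) + (((((125625341256659600670720*k)*(k*k))*((k*k)*(k*(k*k))))*(((k*k)*(k*(k*k)))*((n*n)*(n*(n*n))))) + ((((107104517892813870858240*k)*(k*(k*k)))*((k*k)*(k*(k*k))))*(((k*k)*(k*(k*n)))*((n*n)*(n*(n*n)))))))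 + ((((((50464709201256895217664*k)*(k*(k*k)))*((k*k)*(k*(k*k))))*(((k*k)*(k*(k*n)))*((n*(n*n))*(n*(n*n))))) + ((((10090314099807945228288*k)*(k*(k*k)))*((k*(k*k))*(k*(k*k))))*(((k*k)*(k*(n*n)))*((n*(n*n))*(n*(n*n)))))) + ((((86471180545381632000*(k*k))*((k*k)*(k*k)))*(((k*k)*(k*k))*((k*k)*(k*k)))) + ((((1494853267074688512000*k)*(k*k))*((k*k)*(k*k)))*(((k*k)*(k*k))*((k*k)*(k*n))))))) + ((((((10642361164310908846080*k)*(k*k))*((k*k)*(k*k)))*(((k*k)*(k*k))*((k*k)*(k*(n*n))))) + (((((41085275218386988695552*k)*(k*k))*((k*k)*(k*(k*k))))*(((k*k)*(k*k))*((k*k)*(n*(n*n))))) + ((((94667855024543886213120*k)*(k*k))*((k*k)*(k*(k*k))))*(((k*k)*(k*(k*k)))*((k*n)*(n*(n*n))))))) + ((((((133993812342358325329920*k)*(k*(k*k)))*((k*k)*(k*(k*k))))*(((k*k)*(k*(k*k)))*((n*n)*(n*(n*n))))) + ((((114244068463216731095040*k)*(k*(k*k)))*((k*k)*(k*(k*k))))*(((k*k)*(k*(k*k)))*((n*(n*n))*(n*(n*n))))))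 + (((((53831116616808328593408*k)*(k*(k*k)))*((k*(k*k))*(k*(k*k))))*(((k*k)*(k*(k*n)))*((n*(n*n))*(n*(n*n))))) + ((((10763957607769760071680*k)*(k*(k*k)))*((k*(k*k))*(k*(k*k))))*(((k*(k*k))*(k*(n*n)))*((n*(n*n))*(n*(n*n)))))))))) + ((((((((79518926666853273600*k)*(k*k))*((k*k)*(k*k)))*(((k*k)*(k*k))*((k*k)*(k*k)))) + (((((1374737241798740090880*k)*(k*k))*((k*k)*(k*k)))*(((k*k)*(k*k))*((k*k)*(k*(k*n))))) + ((((9787612604191887163392*k)*(k*k))*((k*k)*(k*(k*k))))*(((k*k)*(k*k))*((k*k)*(k*(n*n))))))) + (((((37786835259802676625408*k)*(k*k))*((k*k)*(k*(k*k))))*(((k*k)*(k*(k*k)))*((k*k)*(n*(n*n))))) + (((((87070627799265536114688*k)*(k*(k*k)))*((k*k)*(k*(k*k))))*(((k*k)*(k*(k*k)))*((k*n)*(n*(n*n))))) + ((((123244884601689625067520*k)*(k*(k*k)))*((k*k)*(k*(k*k))))*(((k*k)*(k*(k*k)))*((k*(n*n))*(n*(n*n)))))))) + ((((((105083303352309255241728*k)*(k*(k*k)))*((k*(k*k))*(k*(k*k))))*(((k*k)*(k*(k*k)))*((n*(n*n))*(n*(n*n)))))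 + (((((49516593584267184832512*k)*(k*(k*k)))*((k*(k*k))*(k*(k*k))))*(((k*(k*k))*(k*(k*n)))*((n*(n*n))*(n*(n*n))))) + ((((9901672528377620201472*(k*k))*(k*(k*k)))*((k*(k*k))*(k*(k*k))))*(((k*(k*k))*(k*(n*n)))*((n*(n*n))*(n*(n*n))))))) + ((((((62607026091722112000*k)*(k*k))*((k*k)*(k*k)))*(((k*k)*(k*k))*((k*k)*(k*(k*k))))) + ((((1082401887343896576000*k)*(k*k))*((k*k)*(k*(k*k))))*(((k*k)*(k*k))*((k*k)*(k*(k*n)))))) + (((((7706533994767280701440*k)*(k*k))*((k*k)*(k*(k*k))))*(((k*k)*(k*(k*k)))*((k*k)*(k*(n*n))))) + ((((29753300398246968950784*k)*(k*(k*k)))*((k*k)*(k*(k*k))))*(((k*k)*(k*(k*k)))*((k*k)*(n*(n*n))))))))) + (((((((68561200962806564782080*k)*(k*(k*k)))*((k*k)*(k*(k*k))))*(((k*k)*(k*(k*k)))*((k*(k*n))*(n*(n*n))))) + (((((97048371583822268989440*k)*(k*(k*k)))*((k*(k*k))*(k*(k*k))))*(((k*k)*(k*(k*k)))*((k*(n*n))*(n*(n*n)))))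 + ((((82749749234757953126400*k)*(k*(k*k)))*((k*(k*k))*(k*(k*k))))*(((k*(k*k))*(k*(k*k)))*((n*(n*n))*(n*(n*n))))))) + ((((((38994089689985304231936*(k*k))*(k*(k*k)))*((k*(k*k))*(k*(k*k))))*(((k*(k*k))*(k*(k*n)))*((n*(n*n))*(n*(n*n))))) + ((((7797824584546800107520*(k*k))*(k*(k*k)))*((k*(k*k))*(k*(k*k))))*(((k*(k*k))*(k*(k*n)))*((n*(n*n))*((n*n)*(n*n)))))) + (((((41743932864976742400*k)*(k*k))*((k*k)*(k*(k*k))))*(((k*k)*(k*k))*((k*k)*(k*(k*k))))) + ((((721722637082498826240*k)*(k*k))*((k*k)*(k*(k*k))))*(((k*k)*(k*(k*k)))*((k*k)*(k*(k*n)))))))) + ((((((5138671503811111944192*k)*(k*(k*k)))*((k*k)*(k*(k*k))))*(((k*k)*(k*(k*k)))*((k*k)*(k*(n*n))))) + (((((19839760234218384261120*k)*(k*(k*k)))*((k*k)*(k*(k*k))))*(((k*k)*(k*(k*k)))*((k*(k*k))*(n*(n*n))))) + ((((45718232134797238468608*k)*(k*(k*k)))*((k*(k*k))*(k*(k*k))))*(((k*k)*(k*(k*k)))*((k*(k*n))*(n*(n*n)))))))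 + ((((((64715708512385818951680*k)*(k*(k*k)))*((k*(k*k))*(k*(k*k))))*(((k*(k*k))*(k*(k*k)))*((k*(n*n))*(n*(n*n))))) + ((((55182284182653656629248*(k*k))*(k*(k*k)))*((k*(k*k))*(k*(k*k))))*(((k*(k*k))*(k*(k*k)))*((n*(n*n))*(n*(n*n)))))) + (((((26004272813680267100160*(k*k))*(k*(k*k)))*((k*(k*k))*(k*(k*k))))*(((k*(k*k))*(k*(k*k)))*((n*(n*n))*((n*n)*(n*n))))) + ((((5200367624770239332352*(k*k))*(k*(k*k)))*((k*(k*k))*((k*k)*(k*k))))*(((k*(k*k))*(k*(k*n)))*((n*(n*n))*((n*n)*(n*n))))))))))) + (((((((((23197810092891033600*k)*(k*k))*((k*k)*(k*(k*k))))*(((k*k)*(k*(k*k)))*((k*k)*(k*(k*k))))) + (((((401080565222499778560*k)*(k*(k*k)))*((k*k)*(k*(k*k))))*(((k*k)*(k*(k*k)))*((k*k)*(k*(k*n))))) + ((((2855743796676482039808*k)*(k*(k*k)))*((k*k)*(k*(k*k))))*(((k*k)*(k*(k*k)))*((k*(k*k))*(k*(n*n))))))) + (((((11025847448687635070976*k)*(k*(k*k)))*((k*(k*k))*(k*(k*k))))*(((k*k)*(k*(k*k)))*((k*(k*k))*(n*(n*n)))))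 + (((((25408128053750035120128*k)*(k*(k*k)))*((k*(k*k))*(k*(k*k))))*(((k*(k*k))*(k*(k*k)))*((k*(k*n))*(n*(n*n))))) + ((((35966771835848601108480*(k*k))*(k*(k*k)))*((k*(k*k))*(k*(k*k))))*(((k*(k*k))*(k*(k*k)))*((k*(n*n))*(n*(n*n)))))))) + ((((((30669099601199861071872*(k*k))*(k*(k*k)))*((k*(k*k))*(k*(k*k))))*(((k*(k*k))*(k*(k*k)))*((k*(n*n))*((n*n)*(n*n))))) + (((((14452966873667242819584*(k*k))*(k*(k*k)))*((k*(k*k))*((k*k)*(k*k))))*(((k*(k*k))*(k*(k*k)))*((n*(n*n))*((n*n)*(n*n))))) + ((((2890406053906105761792*(k*k))*(k*(k*k)))*((k*(k*k))*((k*k)*(k*k))))*(((k*(k*k))*((k*k)*(k*n)))*((n*(n*n))*((n*n)*(n*n))))))) + ((((((10494290800401408000*k)*(k*(k*k)))*((k*k)*(k*(k*k))))*(((k*k)*(k*(k*k)))*((k*k)*(k*(k*k))))) + ((((181443949019711078400*k)*(k*(k*k)))*((k*k)*(k*(k*k))))*(((k*k)*(k*(k*k)))*((k*(k*k))*(k*(k*n))))))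 + (((((1291918014179337830400*k)*(k*(k*k)))*((k*(k*k))*(k*(k*k))))*(((k*k)*(k*(k*k)))*((k*(k*k))*(k*(n*n))))) + ((((4988074682102902161408*k)*(k*(k*k)))*((k*(k*k))*(k*(k*k))))*(((k*(k*k))*(k*(k*k)))*((k*(k*k))*(n*(n*n))))))))) + (((((((11494750565667302277120*(k*k))*(k*(k*k)))*((k*(k*k))*(k*(k*k))))*(((k*(k*k))*(k*(k*k)))*((k*(k*n))*(n*(n*n))))) + (((((16271781837433554862080*(k*k))*(k*(k*k)))*((k*(k*k))*(k*(k*k))))*(((k*(k*k))*(k*(k*k)))*((k*(k*n))*((n*n)*(n*n))))) + ((((13875303347452253306880*(k*k))*(k*(k*k)))*((k*(k*k))*((k*k)*(k*k))))*(((k*(k*k))*(k*(k*k)))*((k*(n*n))*((n*n)*(n*n))))))) + ((((((6538942058053691768832*(k*k))*(k*(k*k)))*((k*(k*k))*((k*k)*(k*k))))*(((k*(k*k))*((k*k)*(k*k)))*((n*(n*n))*((n*n)*(n*n))))) + ((((1307735028781893550080*(k*k))*((k*k)*(k*k)))*((k*(k*k))*((k*k)*(k*k))))*(((k*(k*k))*((k*k)*(k*n)))*((n*(n*n))*((n*n)*(n*n))))))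 + (((((3727763259649228800*k)*(k*(k*k)))*((k*k)*(k*(k*k))))*(((k*k)*(k*(k*k)))*((k*(k*k))*(k*(k*k))))) + ((((64452605317828116480*k)*(k*(k*k)))*((k*(k*k))*(k*(k*k))))*(((k*k)*(k*(k*k)))*((k*(k*k))*(k*(k*n)))))))) + ((((((458919077494379249664*k)*(k*(k*k)))*((k*(k*k))*(k*(k*k))))*(((k*(k*k))*(k*(k*k)))*((k*(k*k))*(k*(n*n))))) + (((((1771894375961421938688*(k*k))*(k*(k*k)))*((k*(k*k))*(k*(k*k))))*(((k*(k*k))*(k*(k*k)))*((k*(k*k))*(n*(n*n))))) + ((((4083276916431299543040*(k*k))*(k*(k*k)))*((k*(k*k))*(k*(k*k))))*(((k*(k*k))*(k*(k*k)))*((k*(k*k))*((n*n)*(n*n))))))) + ((((((5780289410339532963840*(k*k))*(k*(k*k)))*((k*(k*k))*((k*k)*(k*k))))*(((k*(k*k))*(k*(k*k)))*((k*(k*n))*((n*n)*(n*n))))) + ((((4929048044561064001536*(k*k))*(k*(k*k)))*((k*(k*k))*((k*k)*(k*k))))*(((k*(k*k))*((k*k)*(k*k)))*((k*(n*n))*((n*n)*(n*n))))))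 + (((((2322924941598473060352*(k*k))*((k*k)*(k*k)))*((k*(k*k))*((k*k)*(k*k))))*(((k*(k*k))*((k*k)*(k*k)))*((n*(n*n))*((n*n)*(n*n))))) + ((((464574888865588838400*(k*k))*((k*k)*(k*k)))*((k*(k*k))*((k*k)*(k*k))))*(((k*(k*k))*((k*k)*(k*k)))*(((n*n)*(n*n))*((n*n)*(n*n)))))))))) + ((((((((979805283545088000*k)*(k*(k*k)))*((k*(k*k))*(k*(k*k))))*(((k*k)*(k*(k*k)))*((k*(k*k))*(k*(k*k))))) + (((((16940782731018240000*k)*(k*(k*k)))*((k*(k*k))*(k*(k*k))))*(((k*(k*k))*(k*(k*k)))*((k*(k*k))*(k*(k*n))))) + ((((120623272282092994560*(k*k))*(k*(k*k)))*((k*(k*k))*(k*(k*k))))*(((k*(k*k))*(k*(k*k)))*((k*(k*k))*(k*(n*n))))))) + (((((465731191808181927936*(k*k))*(k*(k*k)))*((k*(k*k))*(k*(k*k))))*(((k*(k*k))*(k*(k*k)))*((k*(k*k))*((k*n)*(n*n))))) + (((((1073270985027068362752*(k*k))*(k*(k*k)))*((k*(k*k))*((k*k)*(k*k))))*(((k*(k*k))*(k*(k*k)))*((k*(k*k))*((n*n)*(n*n)))))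 + ((((1519335969520783196160*(k*k))*(k*(k*k)))*((k*(k*k))*((k*k)*(k*k))))*(((k*(k*k))*((k*k)*(k*k)))*((k*(k*n))*((n*n)*(n*n)))))))) + ((((((1295602157800359198720*(k*k))*((k*k)*(k*k)))*((k*(k*k))*((k*k)*(k*k))))*(((k*(k*k))*((k*k)*(k*k)))*((k*(n*n))*((n*n)*(n*n))))) + (((((610588948915776651264*(k*k))*((k*k)*(k*k)))*((k*(k*k))*((k*k)*(k*k))))*(((k*(k*k))*((k*k)*(k*k)))*(((k*n)*(n*n))*((n*n)*(n*n))))) + ((((122116827930383351808*(k*k))*((k*k)*(k*k)))*(((k*k)*(k*k))*((k*k)*(k*k))))*(((k*(k*k))*((k*k)*(k*k)))*(((n*n)*(n*n))*((n*n)*(n*n))))))) + ((((((170394603053875200*k)*(k*(k*k)))*((k*(k*k))*(k*(k*k))))*(((k*(k*k))*(k*(k*k)))*((k*(k*k))*(k*(k*k))))) + ((((2946119827476971520*(k*k))*(k*(k*k)))*((k*(k*k))*(k*(k*k))))*(((k*(k*k))*(k*(k*k)))*((k*(k*k))*(k*(k*n)))))) + (((((20977280038119407616*(k*k))*(k*(k*k)))*((k*(k*k))*(k*(k*k))))*(((k*(k*k))*(k*(k*k)))*((k*(k*k))*((k*k)*(n*n)))))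 + ((((80994367221415280640*(k*k))*(k*(k*k)))*((k*(k*k))*((k*k)*(k*k))))*(((k*(k*k))*(k*(k*k)))*((k*(k*k))*((k*n)*(n*n))))))))) + (((((((186651127957218656256*(k*k))*(k*(k*k)))*((k*(k*k))*((k*k)*(k*k))))*(((k*(k*k))*((k*k)*(k*k)))*((k*(k*k))*((n*n)*(n*n))))) + (((((264226968042303651840*(k*k))*((k*k)*(k*k)))*((k*(k*k))*((k*k)*(k*k))))*(((k*(k*k))*((k*k)*(k*k)))*((k*(k*n))*((n*n)*(n*n))))) + ((((225318821099810586624*(k*k))*((k*k)*(k*k)))*((k*(k*k))*((k*k)*(k*k))))*(((k*(k*k))*((k*k)*(k*k)))*(((k*k)*(n*n))*((n*n)*(n*n))))))) + ((((((106188546026420305920*(k*k))*((k*k)*(k*k)))*(((k*k)*(k*k))*((k*k)*(k*k))))*(((k*(k*k))*((k*k)*(k*k)))*(((k*n)*(n*n))*((n*n)*(n*n))))) + ((((21237709205284061184*(k*k))*((k*k)*(k*k)))*(((k*k)*(k*k))*((k*k)*(k*k))))*((((k*k)*(k*k))*((k*k)*(k*k)))*(((n*n)*(n*n))*((n*n)*(n*n))))))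 + (((((14816922004684800*(k*k))*(k*(k*k)))*((k*(k*k))*(k*(k*k))))*(((k*(k*k))*(k*(k*k)))*((k*(k*k))*(k*(k*k))))) + ((((256184332824084480*(k*k))*(k*(k*k)))*((k*(k*k))*(k*(k*k))))*(((k*(k*k))*(k*(k*k)))*((k*(k*k))*((k*k)*(k*n)))))))) + ((((((1824111307662557184*(k*k))*(k*(k*k)))*((k*(k*k))*((k*k)*(k*k))))*(((k*(k*k))*(k*(k*k)))*((k*(k*k))*((k*k)*(n*n))))) + (((((7042988454036111360*(k*k))*(k*(k*k)))*((k*(k*k))*((k*k)*(k*k))))*(((k*(k*k))*((k*k)*(k*k)))*((k*(k*k))*((k*n)*(n*n))))) + ((((16230532865845100544*(k*k))*((k*k)*(k*k)))*((k*(k*k))*((k*k)*(k*k))))*(((k*(k*k))*((k*k)*(k*k)))*((k*(k*k))*((n*n)*(n*n))))))) + ((((((22976258090635100160*(k*k))*((k*k)*(k*k)))*((k*(k*k))*((k*k)*(k*k))))*(((k*(k*k))*((k*k)*(k*k)))*(((k*k)*(k*n))*((n*n)*(n*n))))) + ((((19592940965200920576*(k*k))*((k*k)*(k*k)))*(((k*k)*(k*k))*((k*k)*(k*k))))*(((k*(k*k))*((k*k)*(k*k)))*(((k*k)*(n*n))*((n*n)*(n*n))))))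 + (((((9233786610993070080*(k*k))*((k*k)*(k*k)))*(((k*k)*(k*k))*((k*k)*(k*k))))*((((k*k)*(k*k))*((k*k)*(k*k)))*(((k*n)*(n*n))*((n*n)*(n*n))))) + (((((1846757322198614016*k)*(k*k))*((k*k)*(k*k)))*(((k*k)*(k*k))*((k*k)*(k*k))))*((((k*k)*(k*k))*((k*k)*(k*k)))*(((n*n)*(n*n))*((n*n)*(n*n)))))))))))))

def wm11 (k n : ℤ) : ℤ := (((((((493912969550 + (8863457799945*n)) + ((64654527996702*(n*n)) + (((253763437595760*n)*(n*n)) + ((591540198382368*n)*(n*(n*n)))))) + ((((844250268303360*(n*n))*(n*(n*n))) + (((724137301168128*(n*n))*((n*n)*(n*n))) + (((342680362352640*n)*(n*n))*((n*n)*(n*n))))) + ((((68729134252032*n)*(n*n))*((n*n)*(n*(n*n)))) + ((10852876834800*k) + (194782966346640*(k*n)))))) + (((((1421036090280864*k)*(n*n)) + (((5578188576185088*k)*(n*(n*n))) + ((13004857088838144*(k*n))*(n*(n*n))))) + (((18563080115589120*(k*n))*((n*n)*(n*n))) + ((((15924257282359296*k)*(n*n))*((n*n)*(n*n))) + (((7536861921411072*k)*(n*n))*((n*n)*(n*(n*n)))))))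 + (((((1511856921378816*k)*(n*(n*n)))*((n*n)*(n*(n*n)))) + ((116588273802000*(k*k)) + ((2092681410996720*k)*(k*n)))) + (((15268770665337312*k)*(k*(n*n))) + (((59943174750706176*(k*k))*(n*(n*n))) + ((139765581434294784*(k*k))*((n*n)*(n*n)))))))) + (((((((199523583432806400*k)*(k*n))*((n*n)*(n*n))) + ((((171181039910289408*k)*(k*n))*((n*n)*(n*(n*n)))) + (((81029553552359424*k)*(k*(n*n)))*((n*n)*(n*(n*n)))))) + ((((16256445255254016*k)*(k*(n*n)))*((n*(n*n))*(n*(n*n)))) + (((813939532005600*k)*(k*k)) + ((14610792852388800*k)*(k*(k*n)))))) + ((((106613560481197824*(k*k))*(k*(n*n))) + (((418588539383328768*(k*k))*((k*n)*(n*n))) + (((976086821633163264*k)*(k*k))*((n*n)*(n*n))))) + ((((1393558620367749120*k)*(k*k))*((n*n)*(n*(n*n)))) + ((((1195728789864185856*k)*(k*(k*n)))*((n*n)*(n*(n*n)))) + (((566070962408128512*k)*(k*(k*n)))*((n*(n*n))*(n*(n*n)))))))) + ((((((113581873384390656*(k*k))*(k*(n*n)))*((n*(n*n))*(n*(n*n))))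 + (((4140473783846400*k)*(k*(k*k))) + ((74328998330302560*(k*k))*(k*(k*n))))) + (((542409752187421632*(k*k))*((k*k)*(n*n))) + ((((2129780740532440320*k)*(k*k))*((k*n)*(n*n))) + (((4966729438922201088*k)*(k*k))*((k*n)*(n*(n*n))))))) + (((((7091602865887887360*k)*(k*(k*k)))*((n*n)*(n*(n*n)))) + ((((6085446622261936128*k)*(k*(k*k)))*((n*(n*n))*(n*(n*n)))) + (((2881215340279234560*(k*k))*(k*(k*n)))*((n*(n*n))*(n*(n*n)))))) + ((((578181815391485952*(k*k))*(k*(k*n)))*((n*(n*n))*((n*n)*(n*n)))) + (((16309915041420000*(k*k))*(k*(k*k))) + ((292806870497406720*(k*k))*((k*k)*(k*n))))))))) + ((((((((2136856675932526464*k)*(k*k))*((k*k)*(n*n))) + (((8390927431919531520*k)*(k*k))*((k*k)*(n*(n*n))))) + ((((19569289172688654336*k)*(k*(k*k)))*((k*n)*(n*(n*n)))) + ((((27943532169732587520*k)*(k*(k*k)))*((k*(n*n))*(n*(n*n)))) + (((23980890211853008896*(k*k))*(k*(k*k)))*((n*(n*n))*(n*(n*n))))))) + (((((11355046797996195840*(k*k))*(k*(k*k)))*((n*(n*n))*((n*n)*(n*n))))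 + ((((2278889669686984704*(k*k))*((k*k)*(k*n)))*((n*(n*n))*((n*n)*(n*n)))) + ((51612006312266400*(k*k))*((k*k)*(k*k))))) + ((((926611168368072960*k)*(k*k))*((k*k)*(k*n))) + ((((6762576082830415488*k)*(k*k))*((k*k)*(k*(n*n)))) + (((26556425102832468480*k)*(k*(k*k)))*((k*k)*(n*(n*n)))))))) + ((((((61938412370753974272*k)*(k*(k*k)))*((k*(k*n))*(n*(n*n)))) + ((((88449354117228625920*(k*k))*(k*(k*k)))*((k*(n*n))*(n*(n*n)))) + (((75912030254845919232*(k*k))*(k*(k*k)))*((k*(n*n))*((n*n)*(n*n)))))) + ((((35947646949355683840*(k*k))*((k*k)*(k*k)))*((n*(n*n))*((n*n)*(n*n)))) + ((((7215162536553873408*(k*k))*((k*k)*(k*k)))*(((n*n)*(n*n))*((n*n)*(n*n)))) + (((134339361790233600*k)*(k*k))*((k*k)*(k*k)))))) + (((((2411926706569835520*k)*(k*k))*((k*k)*(k*(k*n)))) + ((((17603367725882529792*k)*(k*(k*k)))*((k*k)*(k*(n*n)))) + (((69130968137753812992*k)*(k*(k*k)))*((k*(k*k))*(n*(n*n))))))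 + ((((161244566193067130880*(k*k))*(k*(k*k)))*((k*(k*n))*(n*(n*n)))) + ((((230273868650887249920*(k*k))*(k*(k*k)))*((k*(k*n))*((n*n)*(n*n)))) + (((197646479241655615488*(k*k))*((k*k)*(k*k)))*((k*(n*n))*((n*n)*(n*n))))))))) + (((((((93601226321735712768*(k*k))*((k*k)*(k*k)))*(((k*n)*(n*n))*((n*n)*(n*n)))) + (((((18788605674274160640*k)*(k*k))*((k*k)*(k*k)))*(((n*n)*(n*n))*((n*n)*(n*n)))) + (((292102998015628800*k)*(k*k))*((k*k)*(k*(k*k)))))) + ((((5244551969922835200*k)*(k*(k*k)))*((k*k)*(k*(k*n)))) + ((((38278447666333945344*k)*(k*(k*k)))*((k*(k*k))*(k*(n*n)))) + (((150330755443131758592*(k*k))*(k*(k*k)))*((k*(k*k))*(n*(n*n))))))) + (((((350654553073928798208*(k*k))*(k*(k*k)))*((k*(k*k))*((n*n)*(n*n)))) + ((((500796355960577064960*(k*k))*((k*k)*(k*k)))*((k*(k*n))*((n*n)*(n*n)))) + (((429863992997053464576*(k*k))*((k*k)*(k*k)))*(((k*k)*(n*n))*((n*n)*(n*n)))))) + (((((203588340450745909248*k)*(k*k))*((k*k)*(k*k)))*(((k*n)*(n*n))*((n*n)*(n*n))))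 + (((((40869541099887132672*k)*(k*k))*((k*k)*(k*k)))*(((k*n)*(n*n))*((n*n)*(n*(n*n))))) + (((535854463842297600*k)*(k*(k*k)))*((k*k)*(k*(k*k)))))))) + ((((((9621191202720837120*k)*(k*(k*k)))*((k*(k*k))*(k*(k*n)))) + ((((70224208462830016512*(k*k))*(k*(k*k)))*((k*(k*k))*(k*(n*n)))) + (((275800312711072972800*(k*k))*(k*(k*k)))*((k*(k*k))*((k*n)*(n*n)))))) + ((((643343995161718161408*(k*k))*((k*k)*(k*k)))*((k*(k*k))*((n*n)*(n*n)))) + ((((918849926317945651200*(k*k))*((k*k)*(k*k)))*(((k*k)*(k*n))*((n*n)*(n*n)))) + ((((788746325278303715328*k)*(k*k))*((k*k)*(k*k)))*(((k*k)*(n*n))*((n*n)*(n*n))))))) + ((((((373581784983200071680*k)*(k*k))*((k*k)*(k*k)))*(((k*k)*(n*n))*((n*n)*(n*(n*n))))) + (((((75000338391710564352*k)*(k*k))*((k*k)*(k*(k*k))))*(((k*n)*(n*n))*((n*n)*(n*(n*n))))) + (((834043846949913600*k)*(k*(k*k)))*((k*(k*k))*(k*(k*k)))))) + ((((14975418509705963520*(k*k))*(k*(k*k)))*((k*(k*k))*(k*(k*n))))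 + ((((109306832921532407808*(k*k))*(k*(k*k)))*((k*(k*k))*((k*k)*(n*n)))) + (((429306762287970680832*(k*k))*((k*k)*(k*k)))*((k*(k*k))*((k*n)*(n*n))))))))))) + (((((((((1001454230993866850304*(k*k))*((k*k)*(k*k)))*(((k*k)*(k*k))*((n*n)*(n*n)))) + ((((1430375187203626106880*k)*(k*k))*((k*k)*(k*k)))*(((k*k)*(k*n))*((n*n)*(n*n))))) + (((((1227900740012964052992*k)*(k*k))*((k*k)*(k*k)))*(((k*k)*(k*n))*((n*n)*(n*(n*n))))) + (((((581614914151139770368*k)*(k*k))*((k*k)*(k*(k*k))))*(((k*k)*(n*n))*((n*n)*(n*(n*n))))) + ((((116772571038452023296*k)*(k*k))*((k*k)*(k*(k*k))))*(((k*k)*(n*(n*n)))*((n*n)*(n*(n*n)))))))) + (((((1103731089478617600*(k*k))*(k*(k*k)))*((k*(k*k))*(k*(k*k)))) + ((((19818019553276482560*(k*k))*(k*(k*k)))*((k*(k*k))*((k*k)*(k*n)))) + (((144656355324095631360*(k*k))*((k*k)*(k*k)))*((k*(k*k))*((k*k)*(n*n)))))) + ((((568157706988510445568*(k*k))*((k*k)*(k*k)))*(((k*k)*(k*k))*((k*n)*(n*n))))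 + (((((1325395409101548945408*k)*(k*k))*((k*k)*(k*k)))*(((k*k)*(k*k))*((n*n)*(n*n)))) + ((((1893128012052320747520*k)*(k*k))*((k*k)*(k*k)))*(((k*k)*(k*k))*((n*n)*(n*(n*n))))))))) + (((((((1625218343262329241600*k)*(k*k))*((k*k)*(k*(k*k))))*(((k*k)*(k*n))*((n*n)*(n*(n*n))))) + (((((769849027276100861952*k)*(k*k))*((k*k)*(k*(k*k))))*(((k*k)*(k*(n*n)))*((n*n)*(n*(n*n))))) + ((((154573835845691768832*k)*(k*(k*k)))*((k*k)*(k*(k*k))))*(((k*k)*(n*(n*n)))*((n*n)*(n*(n*n))))))) + ((((1240267990260499200*(k*k))*(k*(k*k)))*((k*(k*k))*((k*k)*(k*k)))) + ((((22269908913044129280*(k*k))*((k*k)*(k*k)))*((k*(k*k))*((k*k)*(k*n)))) + (((162556173779853146112*(k*k))*((k*k)*(k*k)))*(((k*k)*(k*k))*((k*k)*(n*n))))))) + ((((((638475885427207274496*k)*(k*k))*((k*k)*(k*k)))*(((k*k)*(k*k))*((k*n)*(n*n)))) + (((((1489473421749135212544*k)*(k*k))*((k*k)*(k*k)))*(((k*k)*(k*k))*((k*n)*(n*(n*n)))))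 + ((((2127557258774367436800*k)*(k*k))*((k*k)*(k*(k*k))))*(((k*k)*(k*k))*((n*n)*(n*(n*n))))))) + (((((1826541410188523470848*k)*(k*k))*((k*k)*(k*(k*k))))*(((k*k)*(k*(k*n)))*((n*n)*(n*(n*n))))) + (((((865252315352398823424*k)*(k*(k*k)))*((k*k)*(k*(k*k))))*(((k*k)*(k*(n*n)))*((n*n)*(n*(n*n))))) + ((((173738395389810180096*k)*(k*(k*k)))*((k*k)*(k*(k*k))))*(((k*k)*(k*(n*n)))*((n*(n*n))*(n*(n*n)))))))))) + (((((((1177774815996979200*(k*k))*((k*k)*(k*k)))*((k*(k*k))*((k*k)*(k*k)))) + ((((21148048956247511040*(k*k))*((k*k)*(k*k)))*(((k*k)*(k*k))*((k*k)*(k*n)))) + ((((154369719514355318784*k)*(k*k))*((k*k)*(k*k)))*(((k*k)*(k*k))*((k*k)*(n*n)))))) + (((((606333609149946789888*k)*(k*k))*((k*k)*(k*k)))*(((k*k)*(k*k))*((k*k)*(n*(n*n))))) + (((((1414523825010386141184*k)*(k*k))*((k*k)*(k*(k*k))))*(((k*k)*(k*k))*((k*n)*(n*(n*n))))) + ((((2020557452178704302080*k)*(k*k))*((k*k)*(k*(k*k))))*(((k*k)*(k*(k*k)))*((n*n)*(n*(n*n))))))))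 + ((((((1734739309643647942656*k)*(k*(k*k)))*((k*k)*(k*(k*k))))*(((k*k)*(k*(k*n)))*((n*n)*(n*(n*n))))) + (((((821797483781598216192*k)*(k*(k*k)))*((k*k)*(k*(k*k))))*(((k*k)*(k*(k*n)))*((n*(n*n))*(n*(n*n))))) + ((((165020571403473125376*k)*(k*(k*k)))*((k*(k*k))*(k*(k*k))))*(((k*k)*(k*(n*n)))*((n*(n*n))*(n*(n*n))))))) + ((((936751674187929600*(k*k))*((k*k)*(k*k)))*(((k*k)*(k*k))*((k*k)*(k*k)))) + (((((16820425714996408320*k)*(k*k))*((k*k)*(k*k)))*(((k*k)*(k*k))*((k*k)*(k*n)))) + ((((122782001744582295552*k)*(k*k))*((k*k)*(k*k)))*(((k*k)*(k*k))*((k*k)*(k*(n*n))))))))) + (((((((482271602329510871040*k)*(k*k))*((k*k)*(k*(k*k))))*(((k*k)*(k*k))*((k*k)*(n*(n*n))))) + (((((1125121549685917483008*k)*(k*k))*((k*k)*(k*(k*k))))*(((k*k)*(k*(k*k)))*((k*n)*(n*(n*n))))) + ((((1607205316754984140800*k)*(k*(k*k)))*((k*k)*(k*(k*k))))*(((k*k)*(k*(k*k)))*((n*n)*(n*(n*n)))))))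 + (((((1379899385605036965888*k)*(k*(k*k)))*((k*k)*(k*(k*k))))*(((k*k)*(k*(k*k)))*((n*(n*n))*(n*(n*n))))) + (((((653722391096737136640*k)*(k*(k*k)))*((k*(k*k))*(k*(k*k))))*(((k*k)*(k*(k*n)))*((n*(n*n))*(n*(n*n))))) + ((((131275770372556849152*k)*(k*(k*k)))*((k*(k*k))*(k*(k*k))))*(((k*(k*k))*(k*(n*n)))*((n*(n*n))*(n*(n*n)))))))) + ((((((615144369763123200*k)*(k*k))*((k*k)*(k*k)))*(((k*k)*(k*k))*((k*k)*(k*k)))) + (((((11045704212212613120*k)*(k*k))*((k*k)*(k*k)))*(((k*k)*(k*k))*((k*k)*(k*(k*n))))) + ((((80629925016461377536*k)*(k*k))*((k*k)*(k*(k*k))))*(((k*k)*(k*k))*((k*k)*(k*(n*n))))))) + (((((316708487445897805824*k)*(k*k))*((k*k)*(k*(k*k))))*(((k*k)*(k*(k*k)))*((k*k)*(n*(n*n))))) + (((((738882512498278268928*k)*(k*(k*k)))*((k*k)*(k*(k*k))))*(((k*k)*(k*(k*k)))*((k*n)*(n*(n*n))))) + ((((1055496653805327482880*k)*(k*(k*k)))*((k*k)*(k*(k*k))))*(((k*k)*(k*(k*k)))*((k*(n*n))*(n*(n*n)))))))))))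 + (((((((((906242201940041662464*k)*(k*(k*k)))*((k*(k*k))*(k*(k*k))))*(((k*k)*(k*(k*k)))*((n*(n*n))*(n*(n*n))))) + (((((429342221828018405376*k)*(k*(k*k)))*((k*(k*k))*(k*(k*k))))*(((k*(k*k))*(k*(k*n)))*((n*(n*n))*(n*(n*n))))) + ((((86220482480147791872*(k*k))*(k*(k*k)))*((k*(k*k))*(k*(k*k))))*(((k*(k*k))*(k*(n*n)))*((n*(n*n))*(n*(n*n))))))) + (((((326208338007552000*k)*(k*k))*((k*k)*(k*k)))*(((k*k)*(k*k))*((k*k)*(k*(k*k))))) + (((((5857532011076198400*k)*(k*k))*((k*k)*(k*(k*k))))*(((k*k)*(k*k))*((k*k)*(k*(k*n))))) + ((((42758440058257735680*k)*(k*k))*((k*k)*(k*(k*k))))*(((k*k)*(k*(k*k)))*((k*k)*(k*(n*n)))))))) + ((((((167954164866588082176*k)*(k*(k*k)))*((k*k)*(k*(k*k))))*(((k*k)*(k*(k*k)))*((k*k)*(n*(n*n))))) + (((((391843990067767934976*k)*(k*(k*k)))*((k*k)*(k*(k*k))))*(((k*k)*(k*(k*k)))*((k*(k*n))*(n*(n*n)))))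 + ((((559761169477439324160*k)*(k*(k*k)))*((k*(k*k))*(k*(k*k))))*(((k*k)*(k*(k*k)))*((k*(n*n))*(n*(n*n))))))) + (((((480617775903056855040*k)*(k*(k*k)))*((k*(k*k))*(k*(k*k))))*(((k*(k*k))*(k*(k*k)))*((n*(n*n))*(n*(n*n))))) + (((((227703915395325886464*(k*k))*(k*(k*k)))*((k*(k*k))*(k*(k*k))))*(((k*(k*k))*(k*(k*n)))*((n*(n*n))*(n*(n*n))))) + ((((45728885411785211904*(k*k))*(k*(k*k)))*((k*(k*k))*(k*(k*k))))*(((k*(k*k))*(k*(k*n)))*((n*(n*n))*((n*n)*(n*n))))))))) + (((((((134913885410304000*k)*(k*k))*((k*k)*(k*(k*k))))*(((k*k)*(k*k))*((k*k)*(k*(k*k))))) + (((((2422584315205632000*k)*(k*k))*((k*k)*(k*(k*k))))*(((k*k)*(k*(k*k)))*((k*k)*(k*(k*n))))) + ((((17684370063460270080*k)*(k*(k*k)))*((k*k)*(k*(k*k))))*(((k*k)*(k*(k*k)))*((k*k)*(k*(n*n))))))) + (((((69464506890807410688*k)*(k*(k*k)))*((k*k)*(k*(k*k))))*(((k*k)*(k*(k*k)))*((k*(k*k))*(n*(n*n)))))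 + (((((162065591008543899648*k)*(k*(k*k)))*((k*(k*k))*(k*(k*k))))*(((k*k)*(k*(k*k)))*((k*(k*n))*(n*(n*n))))) + ((((231519171575996743680*k)*(k*(k*k)))*((k*(k*k))*(k*(k*k))))*(((k*(k*k))*(k*(k*k)))*((k*(n*n))*(n*(n*n)))))))) + ((((((198788761237145518080*(k*k))*(k*(k*k)))*((k*(k*k))*(k*(k*k))))*(((k*(k*k))*(k*(k*k)))*((n*(n*n))*(n*(n*n))))) + (((((94182819958181855232*(k*k))*(k*(k*k)))*((k*(k*k))*(k*(k*k))))*(((k*(k*k))*(k*(k*k)))*((n*(n*n))*((n*n)*(n*n))))) + ((((18914834760956116992*(k*k))*(k*(k*k)))*((k*(k*k))*((k*k)*(k*k))))*(((k*(k*k))*(k*(k*n)))*((n*(n*n))*((n*n)*(n*n))))))) + (((((41057238942720000*k)*(k*k))*((k*k)*(k*(k*k))))*(((k*k)*(k*(k*k)))*((k*k)*(k*(k*k))))) + (((((737248566107750400*k)*(k*(k*k)))*((k*k)*(k*(k*k))))*(((k*k)*(k*(k*k)))*((k*k)*(k*(k*n))))) + ((((5381795840110755840*k)*(k*(k*k)))*((k*k)*(k*(k*k))))*(((k*k)*(k*(k*k)))*((k*(k*k))*(k*(n*n))))))))))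 + ((((((((21139944998606733312*k)*(k*(k*k)))*((k*(k*k))*(k*(k*k))))*(((k*k)*(k*(k*k)))*((k*(k*k))*(n*(n*n))))) + (((((49321437926189432832*k)*(k*(k*k)))*((k*(k*k))*(k*(k*k))))*(((k*(k*k))*(k*(k*k)))*((k*(k*n))*(n*(n*n))))) + ((((70459038354238341120*(k*k))*(k*(k*k)))*((k*(k*k))*(k*(k*k))))*(((k*(k*k))*(k*(k*k)))*((k*(n*n))*(n*(n*n))))))) + (((((60498879910930022400*(k*k))*(k*(k*k)))*((k*(k*k))*(k*(k*k))))*(((k*(k*k))*(k*(k*k)))*((k*(n*n))*((n*n)*(n*n))))) + (((((28663813762940141568*(k*k))*(k*(k*k)))*((k*(k*k))*((k*k)*(k*k))))*(((k*(k*k))*(k*(k*k)))*((n*(n*n))*((n*n)*(n*n))))) + ((((5756688840290992128*(k*k))*(k*(k*k)))*((k*(k*k))*((k*k)*(k*k))))*(((k*(k*k))*((k*k)*(k*n)))*((n*(n*n))*((n*n)*(n*n)))))))) + ((((((8231623335936000*k)*(k*(k*k)))*((k*k)*(k*(k*k))))*(((k*k)*(k*(k*k)))*((k*k)*(k*(k*k)))))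 + (((((147812378237337600*k)*(k*(k*k)))*((k*k)*(k*(k*k))))*(((k*k)*(k*(k*k)))*((k*(k*k))*(k*(k*n))))) + ((((1079010263071457280*k)*(k*(k*k)))*((k*(k*k))*(k*(k*k))))*(((k*k)*(k*(k*k)))*((k*(k*k))*(k*(n*n))))))) + (((((4238420985847480320*k)*(k*(k*k)))*((k*(k*k))*(k*(k*k))))*(((k*(k*k))*(k*(k*k)))*((k*(k*k))*(n*(n*n))))) + (((((9888678958847754240*(k*k))*(k*(k*k)))*((k*(k*k))*(k*(k*k))))*(((k*(k*k))*(k*(k*k)))*((k*(k*n))*(n*(n*n))))) + ((((14126742933759590400*(k*k))*(k*(k*k)))*((k*(k*k))*(k*(k*k))))*(((k*(k*k))*(k*(k*k)))*((k*(k*n))*((n*n)*(n*n))))))))) + (((((((12129865191621918720*(k*k))*(k*(k*k)))*((k*(k*k))*((k*k)*(k*k))))*(((k*(k*k))*(k*(k*k)))*((k*(n*n))*((n*n)*(n*n))))) + (((((5747070312571207680*(k*k))*(k*(k*k)))*((k*(k*k))*((k*k)*(k*k))))*(((k*(k*k))*((k*k)*(k*k)))*((n*(n*n))*((n*n)*(n*n)))))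 + ((((1154223326374133760*(k*k))*((k*k)*(k*k)))*((k*(k*k))*((k*k)*(k*k))))*(((k*(k*k))*((k*k)*(k*n)))*((n*(n*n))*((n*n)*(n*n))))))) + (((((823162333593600*k)*(k*(k*k)))*((k*k)*(k*(k*k))))*(((k*k)*(k*(k*k)))*((k*(k*k))*(k*(k*k))))) + (((((14781237823733760*k)*(k*(k*k)))*((k*(k*k))*(k*(k*k))))*(((k*k)*(k*(k*k)))*((k*(k*k))*(k*(k*n))))) + ((((107901026307145728*k)*(k*(k*k)))*((k*(k*k))*(k*(k*k))))*(((k*(k*k))*(k*(k*k)))*((k*(k*k))*(k*(n*n)))))))) + ((((((423842098584748032*(k*k))*(k*(k*k)))*((k*(k*k))*(k*(k*k))))*(((k*(k*k))*(k*(k*k)))*((k*(k*k))*(n*(n*n))))) + (((((988867895884775424*(k*k))*(k*(k*k)))*((k*(k*k))*(k*(k*k))))*(((k*(k*k))*(k*(k*k)))*((k*(k*k))*((n*n)*(n*n))))) + ((((1412674293375959040*(k*k))*(k*(k*k)))*((k*(k*k))*((k*k)*(k*k))))*(((k*(k*k))*(k*(k*k)))*((k*(k*n))*((n*n)*(n*n)))))))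 + (((((1212986519162191872*(k*k))*(k*(k*k)))*((k*(k*k))*((k*k)*(k*k))))*(((k*(k*k))*((k*k)*(k*k)))*((k*(n*n))*((n*n)*(n*n))))) + (((((574707031257120768*(k*k))*((k*k)*(k*k)))*((k*(k*k))*((k*k)*(k*k))))*(((k*(k*k))*((k*k)*(k*k)))*((n*(n*n))*((n*n)*(n*n))))) + ((((115422332637413376*(k*k))*((k*k)*(k*k)))*((k*(k*k))*((k*k)*(k*k))))*(((k*(k*k))*((k*k)*(k*k)))*(((n*n)*(n*n))*((n*n)*(n*n)))))))))))))

def Wm (k n : ℤ) : Matrix (Fin 2) (Fin 2) ℤ :=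
  !![wm00 k n, wm01 k n; wm10 k n, wm11 k n]


set_option maxHeartbeats 1000000 in
lemma hAm0 (k : ℤ) (n : ℕ) : Amat (2*k+1) (4*n+0) = Am0 k n := by
  ext i j
  fin_cases i <;> fin_cases j <;>
  · simp only [Amat, Am0, am000, am001, am010, am011]
    push_cast
    simp only [ Matrix.mul_fin_two, Matrix.smul_apply, smul_eq_mul,
      Matrix.cons_val', Matrix.cons_val_zero, Matrix.cons_val_one, Matrix.head_cons,
      Matrix.head_fin_const, Matrix.empty_val', Matrix.cons_val_fin_one]
    ring


set_option maxHeartbeats 1000000 in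
lemma hAm1 (k : ℤ) (n : ℕ) : Amat (2*k+1) (4*n+1) = Am1 k n := by
  ext i j
  fin_cases i <;> fin_cases j <;>
  · simp only [Amat, Am1, am100, am101, am110, am111]
    push_cast
    simp only [ Matrix.mul_fin_two, Matrix.smul_apply, smul_eq_mul,
      Matrix.cons_val', Matrix.cons_val_zero, Matrix.cons_val_one, Matrix.head_cons,
      Matrix.head_fin_const, Matrix.empty_val', Matrix.cons_val_fin_one]
    ring


set_option maxHeartbeats 1000000 in
lemma hAm2 (k : ℤ) (n : ℕ) : Amat (2*k+1) (4*n+2) = Am2 k n := by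
  ext i j
  fin_cases i <;> fin_cases j <;>
  · simp only [Amat, Am2, am200, am201, am210, am211]
    push_cast
    simp only [ Matrix.mul_fin_two, Matrix.smul_apply, smul_eq_mul,
      Matrix.cons_val', Matrix.cons_val_zero, Matrix.cons_val_one, Matrix.head_cons,
      Matrix.head_fin_const, Matrix.empty_val', Matrix.cons_val_fin_one]
    ring


set_option maxHeartbeats 1000000 in
lemma hAm3 (k : ℤ) (n : ℕ) : Amat (2*k+1) (4*n+3) = Am3 k n := by
  ext i j
  fin_cases i <;> fin_cases j <;>
  · simp only [Amat, Am3, am300, am301, am310, am311]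
    push_cast
    simp only [ Matrix.mul_fin_two, Matrix.smul_apply, smul_eq_mul,
      Matrix.cons_val', Matrix.cons_val_zero, Matrix.cons_val_one, Matrix.head_cons,
      Matrix.head_fin_const, Matrix.empty_val', Matrix.cons_val_fin_one]
    ring


lemma smul2 (r a b c d : ℤ) : r • !![a, b; c, d] = !![r*a, r*b; r*c, r*d] := by
  ext i j
  fin_cases i <;> fin_cases j <;> simp

set_option maxHeartbeats 2000000 in
lemma sB00 (k n : ℤ) : am100 k n * am000 k n + am101 k n * am010 k n = 8 * bm00 k n := by
  simp only [am100, am000, am101, am010, bm00]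
  ring

set_option maxHeartbeats 2000000 in
lemma sB01 (k n : ℤ) : am100 k n * am001 k n + am101 k n * am011 k n = 8 * bm01 k n := by
  simp only [am100, am001, am101, am011, bm01]
  ring

set_option maxHeartbeats 2000000 in
lemma sB10 (k n : ℤ) : am110 k n * am000 k n + am111 k n * am010 k n = 8 * bm10 k n := by
  simp only [am110, am000, am111, am010, bm10]
  ring

set_option maxHeartbeats 2000000 in
lemma sB11 (k n : ℤ) : am110 k n * am001 k n + am111 k n * am011 k n = 8 * bm11 k n := by
  simp only [am110, am001, am111, am011, bm11]
  ring

set_option maxHeartbeats 2000000 in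
lemma sC00 (k n : ℤ) : am300 k n * am200 k n + am301 k n * am210 k n = 8 * cm00 k n := by
  simp only [am300, am200, am301, am210, cm00]
  ring

set_option maxHeartbeats 2000000 in
lemma sC01 (k n : ℤ) : am300 k n * am201 k n + am301 k n * am211 k n = 8 * cm01 k n := by
  simp only [am300, am201, am301, am211, cm01]
  ring

set_option maxHeartbeats 2000000 in
lemma sC10 (k n : ℤ) : am310 k n * am200 k n + am311 k n * am210 k n = 8 * cm10 k n := by
  simp only [am310, am200, am311, am210, cm10]
  ring

set_option maxHeartbeats 2000000 in
lemma sC11 (k n : ℤ) : am310 k n * am201 k n + am311 k n * am211 k n = 8 * cm11 k n := by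
  simp only [am310, am201, am311, am211, cm11]
  ring

set_option maxHeartbeats 2000000 in
lemma sW00 (k n : ℤ) : cm00 k n * bm00 k n + cm01 k n * bm10 k n = 2 * wm00 k n := by
  simp only [cm00, bm00, cm01, bm10, wm00]
  ring

set_option maxHeartbeats 2000000 in
lemma sW01 (k n : ℤ) : cm00 k n * bm01 k n + cm01 k n * bm11 k n = 2 * wm01 k n := by
  simp only [cm00, bm01, cm01, bm11, wm01]
  ring

set_option maxHeartbeats 2000000 in
lemma sW10 (k n : ℤ) : cm10 k n * bm00 k n + cm11 k n * bm10 k n = 2 * wm10 k n := by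
  simp only [cm10, bm00, cm11, bm10, wm10]
  ring

set_option maxHeartbeats 2000000 in
lemma sW11 (k n : ℤ) : cm10 k n * bm01 k n + cm11 k n * bm11 k n = 2 * wm11 k n := by
  simp only [cm10, bm01, cm11, bm11, wm11]
  ring

lemma hB (k n : ℤ) : Am1 k n * Am0 k n = (8 : ℤ) • Bm k n := by
  simp only [Am1, Am0, Bm, Matrix.mul_fin_two, smul2, sB00, sB01, sB10, sB11]

lemma hC (k n : ℤ) : Am3 k n * Am2 k n = (8 : ℤ) • Cm k n := by
  simp only [Am3, Am2, Cm, Matrix.mul_fin_two, smul2, sC00, sC01, sC10, sC11]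

lemma hW (k n : ℤ) : Cm k n * Bm k n = (2 : ℤ) • Wm k n := by
  simp only [Cm, Bm, Wm, Matrix.mul_fin_two, smul2, sW00, sW01, sW10, sW11]

/-- Let `t` be an odd integer.  Then for every integer `n ≥ 0`, all four entries of the
product `A_{4n+3}·A_{4n+2}·A_{4n+1}·A_{4n}` are divisible by `2⁷`. -/
theorem transfer_matrix_divisibility (t : ℤ) (ht : Odd t) (n : ℕ) (i j : Fin 2) :
    (2 ^ 7 : ℤ) ∣
      (Amat t (4 * n + 3) * Amat t (4 * n + 2) * Amat t (4 * n + 1) * Amat t (4 * n)) i j := by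
  obtain ⟨k, hk⟩ := ht
  subst hk
  have h0 : Amat (2*k+1) (4*n) = Am0 k n := by simpa using hAm0 k n
  rw [h0, hAm1, hAm2, hAm3, mul_assoc (Am3 k (n:ℤ) * Am2 k (n:ℤ)), hB, hC, Matrix.smul_mul,
    Matrix.mul_smul, hW, smul_smul, smul_smul]
  norm_num [Matrix.smul_apply]
end

section
/- There is a constant c₁ = (1/(√3·e))·exp(−∑_{p prime, p≥5} (ln p)/(p(p−1))) ≈ 0.16948 such that for all integers k ≥ 2, the product g(k) = ∏_{p prime, p≥5} p^{⌊2k/p⌋} satisfies g(k) ≥ √(4πk)·(c₁k)^{2k}. -/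
/-!
Legendre's formula gives `v_p((2k)!) = ⌊2k/p⌋ + v_p(⌊2k/p⌋!)` with `v_p(m!) ≤ m/(p-1)`, so the
prime factorization of `(2k)!` yields
`(2k)! ≤ 2^{2k} · 3^k · g(k) · exp(2k ∑_{p ≥ 5} log p / (p(p-1)))`.
Comparing with Stirling's lower bound `(2k)! ≥ √(4πk) (2k/e)^{2k}` gives the claim, the
constant `c₁` collecting `1/(√3 e)` and the exponential of the prime sum.
-/

open scoped Classical

/-- The constant `c₁ = (1/(√3·e))·exp(−∑_{p prime, p≥5} (ln p)/(p(p−1))) ≈ 0.16948`. -/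
noncomputable def c₁ : ℝ :=
  (1 / (Real.sqrt 3 * Real.exp 1)) *
    Real.exp (-(∑' p : ℕ, if p.Prime ∧ 5 ≤ p then Real.log p / (p * ((p : ℝ) - 1)) else 0))

open Finset Real
open scoped Nat

noncomputable def logWeight (x : ℝ) : ℝ := log x / (x * (x - 1))

lemma logWeight_nonneg {x : ℝ} (hx : 1 ≤ x) : 0 ≤ logWeight x :=
  div_nonneg (log_nonneg hx) (mul_nonneg (by linarith) (by linarith))

lemma logWeight_le_rpow {x : ℝ} (hx : 2 ≤ x) : logWeight x ≤ 4 * x ^ (-(3 / 2) : ℝ) := by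
  have hx0 : 0 < x := by linarith
  have hlog : log x ≤ 2 * x ^ (1 / 2 : ℝ) := by
    have := log_le_rpow_div hx0.le (by norm_num : (0 : ℝ) < 1 / 2)
    linarith
  have hden : x ^ 2 / 2 ≤ x * (x - 1) := by nlinarith
  calc logWeight x ≤ 2 * x ^ (1 / 2 : ℝ) / (x ^ 2 / 2) :=
        div_le_div₀ (by positivity) hlog (by positivity) hden
    _ = 4 * x ^ (-(3 / 2) : ℝ) := by
      rw [show (-(3 / 2) : ℝ) = 1 / 2 - 2 by norm_num, rpow_sub hx0, rpow_two]
      field_simp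
      ring

noncomputable def primeLogTerm (p : ℕ) : ℝ := if p.Prime ∧ 5 ≤ p then logWeight p else 0

noncomputable def primeLogSum : ℝ := ∑' p, primeLogTerm p

lemma primeLogTerm_nonneg (p : ℕ) : 0 ≤ primeLogTerm p := by
  unfold primeLogTerm
  split_ifs with hp
  · exact logWeight_nonneg (by exact_mod_cast hp.1.one_le)
  · rfl

lemma summable_primeLogTerm : Summable primeLogTerm := by
  refine .of_nonneg_of_le primeLogTerm_nonneg (fun p => ?_)
    ((summable_nat_rpow.2 (by norm_num : (-(3 / 2) : ℝ) < -1)).mul_left 4)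
  unfold primeLogTerm
  split_ifs with hp
  · exact logWeight_le_rpow (by exact_mod_cast hp.1.two_le)
  · positivity

lemma sum_logWeight_le_primeLogSum {s : Finset ℕ} (hs : ∀ p ∈ s, p.Prime ∧ 5 ≤ p) :
    ∑ p ∈ s, logWeight p ≤ primeLogSum :=
  calc ∑ p ∈ s, logWeight p = ∑ p ∈ s, primeLogTerm p :=
        sum_congr rfl fun p hp => (if_pos (hs p hp)).symm
    _ ≤ primeLogSum := summable_primeLogTerm.sum_le_tsum s fun p _ => primeLogTerm_nonneg p

lemma c₁_eq : c₁ = (√3 * exp 1 * exp primeLogSum)⁻¹ := by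
  rw [show c₁ = 1 / (√3 * exp 1) * exp (-primeLogSum) from rfl, exp_neg]
  field_simp

lemma sqrt_mul_c₁_mul_pow_mul_eq (k : ℕ) :
    √(4 * π * k) * (c₁ * k) ^ (2 * k) * (2 ^ (2 * k) * 3 ^ k * exp (2 * k * primeLogSum)) =
      √(2 * π * (2 * k)) * (2 * k / exp 1) ^ (2 * k) := by
  have h3 : (3 : ℝ) ^ k = √3 ^ (2 * k) := by rw [pow_mul, sq_sqrt (by norm_num)]
  have hexp : exp (2 * k * primeLogSum) = exp primeLogSum ^ (2 * k) := by
    rw [← exp_nat_mul]; push_cast; rfl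
  rw [h3, hexp, mul_assoc, ← mul_pow, ← mul_pow, ← mul_pow, c₁_eq]
  congr 2
  · ring_nf
  · field_simp

section Legendre

variable {p : ℕ} [hp : Fact p.Prime]

lemma padicValNat_factorial_eq_div_add (n : ℕ) :
    padicValNat p n ! = n / p + padicValNat p (n / p)! := by
  rw [← padicValNat_mul_div_factorial, padicValNat_factorial_mul, add_comm]

lemma padicValNat_factorial_le_div_pred (n : ℕ) : padicValNat p n ! ≤ n / (p - 1) := by
  rw [Nat.le_div_iff_mul_le (Nat.sub_pos_of_lt hp.out.one_lt), mul_comm,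
    sub_one_mul_padicValNat_factorial]
  exact Nat.sub_le _ _

lemma padicValNat_factorial_div_le (n : ℕ) :
    (padicValNat p (n / p)! : ℝ) ≤ n / (p * (p - 1)) :=
  calc (padicValNat p (n / p)! : ℝ) ≤ (n / p / (p - 1) : ℕ) := by
        exact_mod_cast padicValNat_factorial_le_div_pred _
    _ = (n / (p * (p - 1)) : ℕ) := by rw [Nat.div_div_eq_div_mul]
    _ ≤ n / ((p * (p - 1) : ℕ) : ℝ) := Nat.cast_div_le
    _ = n / (p * (p - 1)) := by rw [Nat.cast_mul, Nat.cast_pred hp.out.pos]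

lemma pow_padicValNat_factorial_le (n : ℕ) :
    (p : ℝ) ^ padicValNat p n ! ≤ (p : ℝ) ^ (n / p) * exp (n * logWeight p) := by
  have hp0 : (0 : ℝ) < p := by exact_mod_cast hp.out.pos
  rw [padicValNat_factorial_eq_div_add, pow_add]
  gcongr
  rw [← rpow_natCast, rpow_def_of_pos hp0, exp_le_exp, logWeight]
  calc log p * (padicValNat p (n / p)! : ℝ) ≤ log p * (n / (p * (p - 1))) :=
        mul_le_mul_of_nonneg_left (padicValNat_factorial_div_le n)
          (log_nonneg (by exact_mod_cast hp.out.one_le))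
    _ = n * (log p / (p * (p - 1))) := by ring

end Legendre

lemma prod_pow_padicValNat_eq_self {m : ℕ} (hm : m ≠ 0) {s : Finset ℕ}
    (hs : ∀ p ∈ s, p.Prime) (hsub : m.primeFactors ⊆ s) :
    ∏ p ∈ s, p ^ padicValNat p m = m :=
  calc ∏ p ∈ s, p ^ padicValNat p m = ∏ p ∈ s, p ^ m.factorization p :=
        prod_congr rfl fun p hp => by rw [Nat.factorization_def m (hs p hp)]
    _ = m := by
      rw [← Finsupp.prod_of_support_subset _ (by rwa [Nat.support_factorization]) _
        fun _ _ => pow_zero _, Nat.prod_factorization_pow_eq_self hm]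

def primesFromFive (n : ℕ) : Finset ℕ := {p ∈ range (n + 1) | p.Prime ∧ 5 ≤ p}

lemma factorial_eq_mul_prod_primesFromFive (n : ℕ) :
    n ! = 2 ^ padicValNat 2 n ! * 3 ^ padicValNat 3 n ! *
      ∏ p ∈ primesFromFive n, p ^ padicValNat p n ! := by
  have hsub : (n !).primeFactors ⊆ insert 2 (insert 3 (primesFromFive n)) := by
    intro p hp
    have hpp := Nat.prime_of_mem_primeFactors hp
    have hpn := (hpp.dvd_factorial).1 (Nat.dvd_of_mem_primeFactors hp)
    have h4 : p ≠ 4 := by rintro rfl; norm_num at hpp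
    have := hpp.two_le
    simp only [primesFromFive, mem_insert, mem_filter, mem_range, hpp, true_and]
    omega
  have hprime : ∀ p ∈ insert 2 (insert 3 (primesFromFive n)), p.Prime := by
    simp only [primesFromFive, mem_insert, mem_filter]
    rintro p (rfl | rfl | ⟨-, hp, -⟩) <;> norm_num [*]
  nth_rw 1 [← prod_pow_padicValNat_eq_self (Nat.factorial_ne_zero n) hprime hsub]
  rw [prod_insert (by simp [primesFromFive]), prod_insert (by simp [primesFromFive]), mul_assoc]

lemma factorial_le_mul_prod_primesFromFive (n : ℕ) :
    (n ! : ℝ) ≤ 2 ^ n * 3 ^ (n / 2) * exp (n * primeLogSum) *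
      ∏ p ∈ primesFromFive n, (p : ℝ) ^ (n / p) := by
  have h2 : (2 : ℝ) ^ padicValNat 2 n ! ≤ 2 ^ n :=
    pow_le_pow_right₀ one_le_two (by simpa using padicValNat_factorial_le_div_pred (p := 2) n)
  have h3 : (3 : ℝ) ^ padicValNat 3 n ! ≤ 3 ^ (n / 2) :=
    pow_le_pow_right₀ (by norm_num) (padicValNat_factorial_le_div_pred (p := 3) n)
  have hmem : ∀ p ∈ primesFromFive n, p.Prime ∧ 5 ≤ p := fun p hp => (mem_filter.1 hp).2
  have hlarge : ∏ p ∈ primesFromFive n, (p : ℝ) ^ padicValNat p n ! ≤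
      exp (n * primeLogSum) * ∏ p ∈ primesFromFive n, (p : ℝ) ^ (n / p) :=
    calc ∏ p ∈ primesFromFive n, (p : ℝ) ^ padicValNat p n !
        ≤ ∏ p ∈ primesFromFive n, ((p : ℝ) ^ (n / p) * exp (n * logWeight p)) :=
          prod_le_prod (fun _ _ => by positivity) fun p hp =>
            have := Fact.mk (hmem p hp).1
            pow_padicValNat_factorial_le n
      _ = exp (n * ∑ p ∈ primesFromFive n, logWeight p) *
            ∏ p ∈ primesFromFive n, (p : ℝ) ^ (n / p) := by
          rw [prod_mul_distrib, mul_sum, exp_sum, mul_comm]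
      _ ≤ exp (n * primeLogSum) * ∏ p ∈ primesFromFive n, (p : ℝ) ^ (n / p) := by
          gcongr
          exact sum_logWeight_le_primeLogSum hmem
  rw [factorial_eq_mul_prod_primesFromFive n]
  push_cast
  calc (2 : ℝ) ^ padicValNat 2 n ! * 3 ^ padicValNat 3 n ! *
        ∏ p ∈ primesFromFive n, (p : ℝ) ^ padicValNat p n !
      ≤ 2 ^ n * 3 ^ (n / 2) *
          (exp (n * primeLogSum) * ∏ p ∈ primesFromFive n, (p : ℝ) ^ (n / p)) := by
        gcongr
    _ = _ := by ring

theorem product_primes_lower_bound_general (k : ℕ) :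
    Real.sqrt (4 * Real.pi * k) * (c₁ * k) ^ (2 * k) ≤
      ∏ p ∈ (Finset.range (2 * k + 1)).filter (fun p => p.Prime ∧ 5 ≤ p),
        (p : ℝ) ^ (2 * k / p) := by
  have hD : 0 < (2 : ℝ) ^ (2 * k) * 3 ^ k * exp (2 * k * primeLogSum) := by positivity
  have hfac := factorial_le_mul_prod_primesFromFive (2 * k)
  rw [show 2 * k / 2 = k by omega] at hfac
  push_cast at hfac
  refine le_of_mul_le_mul_right ?_ hD
  calc √(4 * π * k) * (c₁ * k) ^ (2 * k) * (2 ^ (2 * k) * 3 ^ k * exp (2 * k * primeLogSum))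
      = √(2 * π * (2 * k)) * (2 * k / exp 1) ^ (2 * k) := sqrt_mul_c₁_mul_pow_mul_eq k
    _ ≤ (2 * k)! := mod_cast Stirling.le_factorial_stirling (2 * k)
    _ ≤ _ := hfac
    _ = _ := mul_comm _ _

/-- For all integers `k ≥ 2`, the product `g(k) = ∏_{p prime, p≥5} p^{⌊2k/p⌋}`
(a finite product, since the exponent vanishes for `p > 2k`) satisfies
`g(k) ≥ √(4πk)·(c₁k)^{2k}`. -/
theorem product_primes_lower_bound (k : ℕ) (hk : 2 ≤ k) :
    Real.sqrt (4 * Real.pi * k) * (c₁ * k) ^ (2 * k) ≤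
      ∏ p ∈ (Finset.range (2 * k + 1)).filter (fun p => p.Prime ∧ 5 ≤ p),
        (p : ℝ) ^ (2 * k / p) :=
  product_primes_lower_bound_general k
end

section
/- Let a ∈ ℤ be positive and t ∈ ℝ with 12a ≤ |t|³. For the continued fraction of family №4 with partial quotients a_{4k+1} = (8k+3)t², β_{4k+1} = 3(12k+1)(3k+1)a; a_{4k+2} = (8k+5)t, β_{4k+2} = 3(12k+5)(3k+2)a; a_{4k+3} = 2(8k+7)t², β_{4k+3} = 3(12k+7)(6k+5)a; a_{4k+4} = (8k+9)t, β_{4k+4} = 3(12k+11)(6k+7)a, the denominators of the convergents satisfy q_{4k+4} > (8k+3)(8k+5)(8k+7)(8k+9)(t³+2a)²·q_{4k} for all k ≥ 0. -/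
set_option maxHeartbeats 1000000 in
lemma poly_P1 (K a s : ℝ) (hK : 0 ≤ K) (ha : 0 ≤ a) (hs : 0 ≤ s) :
    (0:ℝ) ≤ 630*s + 5460*a + 2288*K*s + 19764*K*a + 2688*K^2*s + 23184*K^2*a + 1024*K^3*s + 8832*K^3*a := by
  linarith [hs, ha, (mul_nonneg hK hs), (mul_nonneg hK ha), (mul_nonneg (pow_nonneg hK 2) hs), (mul_nonneg (pow_nonneg hK 2) ha), (mul_nonneg (pow_nonneg hK 3) hs), (mul_nonneg (pow_nonneg hK 3) ha)]

set_option maxHeartbeats 1000000 in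
lemma poly_P2 (K a s : ℝ) (hK : 0 ≤ K) (ha : 0 ≤ a) (hs : 0 ≤ s) :
    (0:ℝ) ≤ 1890*s^2 + 26460*a*s + 11904*K*s^2 + 171612*K*a*s + 412044*K*a^2 + 26368*K^2*s^2 + 387920*K^2*a*s + 983416*K^2*a^2 + 24576*K^3*s^2 + 367104*K^3*a*s + 965184*K^3*a^2 + 8192*K^4*s^2 + 123904*K^4*a*s + 334976*K^4*a^2 := by
  linarith [(pow_nonneg hs 2), (mul_nonneg ha hs), (mul_nonneg hK (pow_nonneg hs 2)), (mul_nonneg (mul_nonneg hK ha) hs), (mul_nonneg hK (pow_nonneg ha 2)), (mul_nonneg (pow_nonneg hK 2) (pow_nonneg hs 2)), (mul_nonneg (mul_nonneg (pow_nonneg hK 2) ha) hs), (mul_nonneg (pow_nonneg hK 2) (pow_nonneg ha 2)), (mul_nonneg (pow_nonneg hK 3) (pow_nonneg hs 2)), (mul_nonneg (mul_nonneg (pow_nonneg hK 3) ha) hs), (mul_nonneg (pow_nonneg hK 3) (pow_nonneg ha 2)), (mul_nonneg (pow_nonneg hK 4) (pow_nonneg hs 2)), (mul_nonneg (mul_nonneg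 (pow_nonneg hK 4) ha) hs), (mul_nonneg (pow_nonneg hK 4) (pow_nonneg ha 2))]

set_option maxHeartbeats 1000000 in
lemma poly_P3 (K a s : ℝ) (hK : 0 ≤ K) (ha : 0 ≤ a) (hs : 0 ≤ s) :
    (0:ℝ) ≤ 6930*s^2 + 99540*a*s + 262080*a^2 + 30208*K*s^2 + 430692*K*a*s + 1118916*K*a^2 + 47872*K^2*s^2 + 677040*K^2*a*s + 1730520*K^2*a^2 + 32768*K^3*s^2 + 459264*K^3*a*s + 1150272*K^3*a^2 + 8192*K^4*s^2 + 113664*K^4*a*s + 277632*K^4*a^2 := by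
  linarith [(pow_nonneg hs 2), (mul_nonneg ha hs), (pow_nonneg ha 2), (mul_nonneg hK (pow_nonneg hs 2)), (mul_nonneg (mul_nonneg hK ha) hs), (mul_nonneg hK (pow_nonneg ha 2)), (mul_nonneg (pow_nonneg hK 2) (pow_nonneg hs 2)), (mul_nonneg (mul_nonneg (pow_nonneg hK 2) ha) hs), (mul_nonneg (pow_nonneg hK 2) (pow_nonneg ha 2)), (mul_nonneg (pow_nonneg hK 3) (pow_nonneg hs 2)), (mul_nonneg (mul_nonneg (pow_nonneg hK 3) ha) hs), (mul_nonneg (pow_nonneg hK 3) (pow_nonneg ha 2)), (mul_nonneg (pow_nonneg hK 4) (pow_nonneg hs 2)), (mul_nonneg (mul_nonneg (pow_nonneg hK 4) ha) hs), (mul_nonneg (pow_nonneg hK 4) (pow_nonneg ha 2))]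

set_option maxHeartbeats 1000000 in
lemma poly_P4 (K a s : ℝ) (hK : 0 ≤ K) (ha : 0 ≤ a) (hs : 0 ≤ s) :
    (0:ℝ) ≤ 62370*s^3 + 1477980*a*s^2 + 10470600*a^2*s + 20593440*a^3 + 438192*K*s^3 + 10415964*K*a*s^2 + 74007144*K*a^2*s + 145382688*K*a^3 + 1155840*K^2*s^3 + 27496944*K^2*a*s^2 + 195327072*K^2*a^2*s + 381656448*K^2*a^3 + 1443840*K^3*s^3 + 34316160*K^3*a*s^2 + 243104256*K^3*a^2*s + 470679552*K^3*a^3 + 860160*K^4*s^3 + 20395008*K^4*a*s^2 + 143769600*K^4*a^2*s + 274710528*K^4*a^3 + 196608*K^5*s^3 + 4644864*K^5*a*s^2 + 32514048*K^5*a^2*s + 61046784*K^5*a^3 := by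
  linarith [(pow_nonneg hs 3), (mul_nonneg ha (pow_nonneg hs 2)), (mul_nonneg (pow_nonneg ha 2) hs), (pow_nonneg ha 3), (mul_nonneg hK (pow_nonneg hs 3)), (mul_nonneg (mul_nonneg hK ha) (pow_nonneg hs 2)), (mul_nonneg (mul_nonneg hK (pow_nonneg ha 2)) hs), (mul_nonneg hK (pow_nonneg ha 3)), (mul_nonneg (pow_nonneg hK 2) (pow_nonneg hs 3)), (mul_nonneg (mul_nonneg (pow_nonneg hK 2) ha) (pow_nonneg hs 2)), (mul_nonneg (mul_nonneg (pow_nonneg hK 2) (pow_nonneg ha 2)) hs), (mul_nonneg (pow_nonneg hK 2) (pow_nonneg ha 3)), (mul_nonneg (pow_nonneg hK 3) (pow_nonneg hs 3)), (mul_nonneg (mul_nonneg (pow_nonneg hK 3) ha) (pow_nonneg hs 2)), (mul_nonneg (mul_nonneg (pow_nonneg hK 3) (pow_nonneg ha 2)) hs), (mul_nonneg (pow_nonneg hK 3) (pow_nonneg ha 3)), (mul_nonneg (pow_nonneg hK 4) (pow_nonneg hs 3)), (mul_nonneg (mul_nonneg (pow_nonneg hK 4) ha) (pow_nonneg hs 2)),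 (mul_nonneg (mul_nonneg (pow_nonneg hK 4) (pow_nonneg ha 2)) hs), (mul_nonneg (pow_nonneg hK 4) (pow_nonneg ha 3)), (mul_nonneg (pow_nonneg hK 5) (pow_nonneg hs 3)), (mul_nonneg (mul_nonneg (pow_nonneg hK 5) ha) (pow_nonneg hs 2)), (mul_nonneg (mul_nonneg (pow_nonneg hK 5) (pow_nonneg ha 2)) hs), (mul_nonneg (pow_nonneg hK 5) (pow_nonneg ha 3))]

set_option maxHeartbeats 1000000 in
lemma poly_P5 (K a s : ℝ) (hK : 0 ≤ K) (ha : 0 ≤ a) (hs : 0 ≤ s) :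
    (0:ℝ) ≤ 945*s^2 + 28980*a*s + 5952*K*s^2 + 181338*K*a*s + 1335687*K*a^2 + 13184*K^2*s^2 + 399832*K^2*a*s + 2930830*K^2*a^2 + 12288*K^3*s^2 + 371328*K^3*a*s + 2711184*K^3*a^2 + 4096*K^4*s^2 + 123392*K^4*a*s + 897824*K^4*a^2 := by
  linarith [(pow_nonneg hs 2), (mul_nonneg ha hs), (mul_nonneg hK (pow_nonneg hs 2)), (mul_nonneg (mul_nonneg hK ha) hs), (mul_nonneg hK (pow_nonneg ha 2)), (mul_nonneg (pow_nonneg hK 2) (pow_nonneg hs 2)), (mul_nonneg (mul_nonneg (pow_nonneg hK 2) ha) hs), (mul_nonneg (pow_nonneg hK 2) (pow_nonneg ha 2)), (mul_nonneg (pow_nonneg hK 3) (pow_nonneg hs 2)), (mul_nonneg (mul_nonneg (pow_nonneg hK 3) ha) hs), (mul_nonneg (pow_nonneg hK 3) (pow_nonneg ha 2)), (mul_nonneg (pow_nonneg hK 4) (pow_nonneg hs 2)), (mul_nonneg (mul_nonneg (pow_nonneg hK 4) ha) hs), (mul_nonneg (pow_nonneg hK 4) (pow_nonneg ha 2))]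

set_option maxHeartbeats 1000000 in
lemma poly_P6 (K a s : ℝ) (hK : 0 ≤ K) (ha : 0 ≤ a) (hs : 0 ≤ s) :
    (0:ℝ) ≤ 630*s + 9660*a + 2288*K*s + 35148*K*a + 2688*K^2*s + 41328*K^2*a + 1024*K^3*s + 15744*K^3*a := by
  linarith [hs, ha, (mul_nonneg hK hs), (mul_nonneg hK ha), (mul_nonneg (pow_nonneg hK 2) hs), (mul_nonneg (pow_nonneg hK 2) ha), (mul_nonneg (pow_nonneg hK 3) hs), (mul_nonneg (pow_nonneg hK 3) ha)]

set_option maxHeartbeats 1000000 in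
lemma poly_P7 (K a s : ℝ) (hK : 0 ≤ K) (ha : 0 ≤ a) (hs : 0 ≤ s) :
    (0:ℝ) ≤ 3780*a*s + 52290*a^2 + 22422*K*a*s + 309591*K*a^2 + 47400*K^2*a*s + 652878*K^2*a^2 + 42624*K^3*a*s + 585360*K^3*a^2 + 13824*K^4*a*s + 189216*K^4*a^2 := by
  linarith [(mul_nonneg ha hs), (pow_nonneg ha 2), (mul_nonneg (mul_nonneg hK ha) hs), (mul_nonneg hK (pow_nonneg ha 2)), (mul_nonneg (mul_nonneg (pow_nonneg hK 2) ha) hs), (mul_nonneg (pow_nonneg hK 2) (pow_nonneg ha 2)), (mul_nonneg (mul_nonneg (pow_nonneg hK 3) ha) hs), (mul_nonneg (pow_nonneg hK 3) (pow_nonneg ha 2)), (mul_nonneg (mul_nonneg (pow_nonneg hK 4) ha) hs), (mul_nonneg (pow_nonneg hK 4) (pow_nonneg ha 2))]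

set_option maxHeartbeats 4000000 in
lemma aux_neg (K a t u v u' v' : ℝ) (hK : 0 ≤ K) (ha : 0 < a)
    (ht : t^3 ≤ -(12*a)) (hu : 0 < u) (hx : 4*(t*v) ≤ 3*(8*K+3)*t^3*u)
    (hu' : u' = t*(2*(8*K+5)*(8*K+7)*(8*K+9)*t^3 + ((8*K+5)*(3*(12*K+11)*(6*K+7)) + (3*(12*K+7)*(6*K+5))*(8*K+9))*a)*v + ((3*(12*K+5)*(3*K+2))*a*(2*(8*K+7)*(8*K+9)*t^3 + (3*(12*K+11)*(6*K+7))*a))*u)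
    (hv' : v' = (8*K+11)*t^2*u' + (3*(12*K+13)*(3*K+4))*a*(2*(8*K+5)*(8*K+7)*t^3*v + 2*(3*(12*K+5)*(3*K+2))*(8*K+7)*a*t^2*u + (3*(12*K+7)*(6*K+5))*a*v)) :
    (8*K+3)*(8*K+5)*(8*K+7)*(8*K+9)*(t^3+2*a)^2*u < u' ∧ 0 < u' ∧
      4*(t*v') ≤ 3*(8*(K+1)+3)*t^3*u' := by
  have hs : 0 ≤ -(t^3) - 12*a := by linarith
  have hP1 := poly_P1 K a (-(t^3)-12*a) hK ha.le hs
  have hM : (2*(8*K+5)*(8*K+7)*(8*K+9)*t^3 + ((8*K+5)*(3*(12*K+11)*(6*K+7)) + (3*(12*K+7)*(6*K+5))*(8*K+9))*a) ≤ 0 := by nlinarith [hP1]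
  have hMv : (2*(8*K+5)*(8*K+7)*(8*K+9)*t^3 + ((8*K+5)*(3*(12*K+11)*(6*K+7)) + (3*(12*K+7)*(6*K+5))*(8*K+9))*a)*(3*(8*K+3)*t^3*u) ≤ (2*(8*K+5)*(8*K+7)*(8*K+9)*t^3 + ((8*K+5)*(3*(12*K+11)*(6*K+7)) + (3*(12*K+7)*(6*K+5))*(8*K+9))*a)*(4*(t*v)) := mul_le_mul_of_nonpos_left hx hM
  have hP2 := poly_P2 K a (-(t^3)-12*a) hK ha.le hs
  have hc1 : 4*((8*K+3)*(8*K+5)*(8*K+7)*(8*K+9)*(t^3+2*a)^2) < 3*(8*K+3)*t^3*(2*(8*K+5)*(8*K+7)*(8*K+9)*t^3 + ((8*K+5)*(3*(12*K+11)*(6*K+7)) + (3*(12*K+7)*(6*K+5))*(8*K+9))*a) + 4*((3*(12*K+5)*(3*K+2))*a*(2*(8*K+7)*(8*K+9)*t^3 + (3*(12*K+11)*(6*K+7))*a)) := by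
    nlinarith [hP2, mul_pos ha ha]
  have hc1u := mul_lt_mul_of_pos_right hc1 hu
  have hgoal1 : (8*K+3)*(8*K+5)*(8*K+7)*(8*K+9)*(t^3+2*a)^2*u < u' := by nlinarith [hMv, hc1u, hu']
  have h83 : (0:ℝ) ≤ 8*K+3 := by linarith
  have h85 : (0:ℝ) ≤ 8*K+5 := by linarith
  have h87 : (0:ℝ) ≤ 8*K+7 := by linarith
  have h89 : (0:ℝ) ≤ 8*K+9 := by linarith
  have hsq : 0 ≤ (8*K+3)*(8*K+5)*(8*K+7)*(8*K+9)*(t^3+2*a)^2*u :=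
    mul_nonneg (mul_nonneg (mul_nonneg (mul_nonneg (mul_nonneg h83 h85) h87) h89)
      (sq_nonneg _)) hu.le
  refine ⟨hgoal1, lt_of_le_of_lt hsq hgoal1, ?_⟩
  have hP3 := poly_P3 K a (-(t^3)-12*a) hK ha.le hs
  have hcv : 0 ≤ ((8*K+11)*t^3*(2*(8*K+5)*(8*K+7)*(8*K+9)*t^3 + ((8*K+5)*(3*(12*K+11)*(6*K+7)) + (3*(12*K+7)*(6*K+5))*(8*K+9))*a) + 4*(3*(12*K+13)*(3*K+4))*a*(2*(8*K+5)*(8*K+7)*t^3 + (3*(12*K+7)*(6*K+5))*a)) := by nlinarith [hP3]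
  have hcvx : ((8*K+11)*t^3*(2*(8*K+5)*(8*K+7)*(8*K+9)*t^3 + ((8*K+5)*(3*(12*K+11)*(6*K+7)) + (3*(12*K+7)*(6*K+5))*(8*K+9))*a) + 4*(3*(12*K+13)*(3*K+4))*a*(2*(8*K+5)*(8*K+7)*t^3 + (3*(12*K+7)*(6*K+5))*a))*(4*(t*v)) ≤ ((8*K+11)*t^3*(2*(8*K+5)*(8*K+7)*(8*K+9)*t^3 + ((8*K+5)*(3*(12*K+11)*(6*K+7)) + (3*(12*K+7)*(6*K+5))*(8*K+9))*a) + 4*(3*(12*K+13)*(3*K+4))*a*(2*(8*K+5)*(8*K+7)*t^3 + (3*(12*K+7)*(6*K+5))*a))*(3*(8*K+3)*t^3*u) := mul_le_mul_of_nonneg_left hx hcv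
  have hP4 := poly_P4 K a (-(t^3)-12*a) hK ha.le hs
  have htot0 : 3*(8*K+3)*t^3*((8*K+11)*t^3*(2*(8*K+5)*(8*K+7)*(8*K+9)*t^3 + ((8*K+5)*(3*(12*K+11)*(6*K+7)) + (3*(12*K+7)*(6*K+5))*(8*K+9))*a) + 4*(3*(12*K+13)*(3*K+4))*a*(2*(8*K+5)*(8*K+7)*t^3 + (3*(12*K+7)*(6*K+5))*a)) + 4*(8*K+11)*t^3*((3*(12*K+5)*(3*K+2))*a*(2*(8*K+7)*(8*K+9)*t^3 + (3*(12*K+11)*(6*K+7))*a)) + 32*(3*(12*K+13)*(3*K+4))*(3*(12*K+5)*(3*K+2))*(8*K+7)*a^2*t^3 ≤ 0 := by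
    nlinarith [hP4]
  have htot := mul_nonpos_of_nonpos_of_nonneg htot0 hu.le
  rw [hv', hu']
  nlinarith [hcvx, htot]

set_option maxHeartbeats 4000000 in
lemma aux_pos (K a t u v u' v' : ℝ) (hK : 0 ≤ K) (ha : 0 < a) (ht0 : 0 < t)
    (ht : 12*a ≤ t^3) (hu : 0 < u) (hv : (8*K+3)*t^2*u ≤ v)
    (hu' : u' = t*(2*(8*K+5)*(8*K+7)*(8*K+9)*t^3 + ((8*K+5)*(3*(12*K+11)*(6*K+7)) + (3*(12*K+7)*(6*K+5))*(8*K+9))*a)*v + ((3*(12*K+5)*(3*K+2))*a*(2*(8*K+7)*(8*K+9)*t^3 + (3*(12*K+11)*(6*K+7))*a))*u)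
    (hv' : v' = (8*K+11)*t^2*u' + (3*(12*K+13)*(3*K+4))*a*(2*(8*K+5)*(8*K+7)*t^3*v + 2*(3*(12*K+5)*(3*K+2))*(8*K+7)*a*t^2*u + (3*(12*K+7)*(6*K+5))*a*v)) :
    (8*K+3)*(8*K+5)*(8*K+7)*(8*K+9)*(t^3+2*a)^2*u < u' ∧ 0 < u' ∧
      (8*(K+1)+3)*t^2*u' ≤ v' := by
  have hs : 0 ≤ t^3 - 12*a := by linarith
  have hP6 := poly_P6 K a (t^3-12*a) hK ha.le hs
  have hM : 0 ≤ (2*(8*K+5)*(8*K+7)*(8*K+9)*t^3 + ((8*K+5)*(3*(12*K+11)*(6*K+7)) + (3*(12*K+7)*(6*K+5))*(8*K+9))*a) := by nlinarith [hP6]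
  have htM : 0 ≤ t*(2*(8*K+5)*(8*K+7)*(8*K+9)*t^3 + ((8*K+5)*(3*(12*K+11)*(6*K+7)) + (3*(12*K+7)*(6*K+5))*(8*K+9))*a) := mul_nonneg ht0.le hM
  have htMv : (t*(2*(8*K+5)*(8*K+7)*(8*K+9)*t^3 + ((8*K+5)*(3*(12*K+11)*(6*K+7)) + (3*(12*K+7)*(6*K+5))*(8*K+9))*a))*((8*K+3)*t^2*u) ≤ (t*(2*(8*K+5)*(8*K+7)*(8*K+9)*t^3 + ((8*K+5)*(3*(12*K+11)*(6*K+7)) + (3*(12*K+7)*(6*K+5))*(8*K+9))*a))*v := mul_le_mul_of_nonneg_left hv htM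
  have hP5 := poly_P5 K a (t^3-12*a) hK ha.le hs
  have hc1 : (8*K+3)*(8*K+5)*(8*K+7)*(8*K+9)*(t^3+2*a)^2 < (8*K+3)*t^3*(2*(8*K+5)*(8*K+7)*(8*K+9)*t^3 + ((8*K+5)*(3*(12*K+11)*(6*K+7)) + (3*(12*K+7)*(6*K+5))*(8*K+9))*a) + ((3*(12*K+5)*(3*K+2))*a*(2*(8*K+7)*(8*K+9)*t^3 + (3*(12*K+11)*(6*K+7))*a)) := by
    nlinarith [hP5, mul_pos ha ha]
  have hc1u := mul_lt_mul_of_pos_right hc1 hu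
  have hgoal1 : (8*K+3)*(8*K+5)*(8*K+7)*(8*K+9)*(t^3+2*a)^2*u < u' := by nlinarith [htMv, hc1u, hu']
  have h83 : (0:ℝ) ≤ 8*K+3 := by linarith
  have h85 : (0:ℝ) ≤ 8*K+5 := by linarith
  have h87 : (0:ℝ) ≤ 8*K+7 := by linarith
  have h89 : (0:ℝ) ≤ 8*K+9 := by linarith
  have hsq : 0 ≤ (8*K+3)*(8*K+5)*(8*K+7)*(8*K+9)*(t^3+2*a)^2*u :=
    mul_nonneg (mul_nonneg (mul_nonneg (mul_nonneg (mul_nonneg h83 h85) h87) h89)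
      (sq_nonneg _)) hu.le
  refine ⟨hgoal1, lt_of_le_of_lt hsq hgoal1, ?_⟩
  have ht3 : 0 < t^3 := pow_pos ht0 3
  have hv0 : 0 ≤ v := le_trans (mul_nonneg (mul_nonneg h83 (sq_nonneg t)) hu.le) hv
  have hw : 0 ≤ 2*(8*K+5)*(8*K+7)*t^3*v + 2*(3*(12*K+5)*(3*K+2))*(8*K+7)*a*t^2*u + (3*(12*K+7)*(6*K+5))*a*v := by
    have h1 : 0 ≤ 2*(8*K+5)*(8*K+7)*t^3*v := by positivity
    have h2 : 0 ≤ 2*(3*(12*K+5)*(3*K+2))*(8*K+7)*a*t^2*u := by positivity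
    have h3 : 0 ≤ (3*(12*K+7)*(6*K+5))*a*v := by positivity
    linarith
  have hKc : (0:ℝ) ≤ (3*(12*K+13)*(3*K+4)) := by positivity
  have := mul_nonneg (mul_nonneg hKc ha.le) hw
  rw [hv']
  nlinarith [this]

set_option maxHeartbeats 1000000 in
/-- Let `a ∈ ℤ` be positive and `t ∈ ℝ` with `12a ≤ |t|³`.  For the continued fraction of
family №4 with partial quotients `a_{4k+1} = (8k+3)t²`, `β_{4k+1} = 3(12k+1)(3k+1)a`;
`a_{4k+2} = (8k+5)t`, `β_{4k+2} = 3(12k+5)(3k+2)a`; `a_{4k+3} = 2(8k+7)t²`,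
`β_{4k+3} = 3(12k+7)(6k+5)a`; `a_{4k+4} = (8k+9)t`, `β_{4k+4} = 3(12k+11)(6k+7)a`,
the denominators of the convergents (given by `qₙ = aₙq_{n−1} + βₙq_{n−2}`, `q₀ = 1`,
`q₁ = a₁ = 3t²`) satisfy `q_{4k+4} > (8k+3)(8k+5)(8k+7)(8k+9)(t³+2a)²·q_{4k}`
for all `k ≥ 0`. -/
theorem denominators_growth_no4 (a : ℤ) (ha : 0 < a) (t : ℝ) (ht : 12 * (a : ℝ) ≤ |t| ^ 3)
    (q : ℕ → ℝ) (h0 : q 0 = 1) (h1 : q 1 = 3 * t ^ 2)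
    (h2 : ∀ k : ℕ, q (4 * k + 2) =
      (8 * (k : ℝ) + 5) * t * q (4 * k + 1)
        + 3 * (12 * (k : ℝ) + 5) * (3 * (k : ℝ) + 2) * a * q (4 * k))
    (h3 : ∀ k : ℕ, q (4 * k + 3) =
      2 * (8 * (k : ℝ) + 7) * t ^ 2 * q (4 * k + 2)
        + 3 * (12 * (k : ℝ) + 7) * (6 * (k : ℝ) + 5) * a * q (4 * k + 1))
    (h4 : ∀ k : ℕ, q (4 * k + 4) =
      (8 * (k : ℝ) + 9) * t * q (4 * k + 3)
        + 3 * (12 * (k : ℝ) + 11) * (6 * (k : ℝ) + 7) * a * q (4 * k + 2))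
    (h5 : ∀ k : ℕ, q (4 * k + 5) =
      (8 * (k : ℝ) + 11) * t ^ 2 * q (4 * k + 4)
        + 3 * (12 * (k : ℝ) + 13) * (3 * (k : ℝ) + 4) * a * q (4 * k + 3)) :
    ∀ k : ℕ,
      (8 * (k : ℝ) + 3) * (8 * (k : ℝ) + 5) * (8 * (k : ℝ) + 7) * (8 * (k : ℝ) + 9)
          * (t ^ 3 + 2 * a) ^ 2 * q (4 * k) < q (4 * k + 4) := by
  have ha' : (0:ℝ) < (a:ℝ) := by exact_mod_cast ha
  have htne : t ≠ 0 := by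
    intro h
    rw [h] at ht
    simp at ht
    nlinarith [ha', ht]
  have hident : ∀ k : ℕ, q (4*k+4) = t*(2*(8*(k : ℝ)+5)*(8*(k : ℝ)+7)*(8*(k : ℝ)+9)*t^3 + ((8*(k : ℝ)+5)*(3*(12*(k : ℝ)+11)*(6*(k : ℝ)+7)) + (3*(12*(k : ℝ)+7)*(6*(k : ℝ)+5))*(8*(k : ℝ)+9))*a)*q (4*k+1) + ((3*(12*(k : ℝ)+5)*(3*(k : ℝ)+2))*a*(2*(8*(k : ℝ)+7)*(8*(k : ℝ)+9)*t^3 + (3*(12*(k : ℝ)+11)*(6*(k : ℝ)+7))*a))*q (4*k) := by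
    intro k
    rw [h4 k, h3 k, h2 k]; ring
  have hident5 : ∀ k : ℕ, q (4*k+5) = (8*(k : ℝ)+11)*t^2*q (4*k+4) + (3*(12*(k : ℝ)+13)*(3*(k : ℝ)+4))*a*(2*(8*(k : ℝ)+5)*(8*(k : ℝ)+7)*t^3*q (4*k+1) + 2*(3*(12*(k : ℝ)+5)*(3*(k : ℝ)+2))*(8*(k : ℝ)+7)*a*t^2*q (4*k) + (3*(12*(k : ℝ)+7)*(6*(k : ℝ)+5))*a*q (4*k+1)) := by
    intro k
    rw [h5 k, h3 k, h2 k]; ring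
  rcases htne.lt_or_gt with htneg | htpos
  · -- t < 0
    rw [abs_of_neg htneg] at ht
    have ht' : t^3 ≤ -(12*(a:ℝ)) := by nlinarith [ht]
    have ht3neg : t^3 < 0 := by nlinarith [mul_pos (mul_pos (neg_pos.2 htneg) (neg_pos.2 htneg)) (neg_pos.2 htneg)]
    have main : ∀ k : ℕ, 0 < q (4*k) ∧ 4*(t*q (4*k+1)) ≤ 3*(8*(k:ℝ)+3)*t^3*q (4*k) := by
      intro k
      induction k with
      | zero =>
        constructor
        · norm_num [h0]
        · norm_num [h0, h1]
          nlinarith [ht3neg]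
      | succ k ih =>
        obtain ⟨hu, hx⟩ := ih
        obtain ⟨hg1, hg2, hg3⟩ := aux_neg (k:ℝ) (a:ℝ) t (q (4*k)) (q (4*k+1)) (q (4*k+4)) (q (4*k+5))
          (Nat.cast_nonneg k) ha' ht' hu hx (hident k) (hident5 k)
        have e : 4*(k+1) = 4*k+4 := by ring
        have e2 : 4*(k+1)+1 = 4*k+5 := by ring
        rw [e2, e]
        push_cast
        exact ⟨hg2, by linarith [hg3]⟩
    intro k
    obtain ⟨hu, hx⟩ := main k
    exact (aux_neg (k:ℝ) (a:ℝ) t (q (4*k)) (q (4*k+1)) (q (4*k+4)) (q (4*k+5))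
      (Nat.cast_nonneg k) ha' ht' hu hx (hident k) (hident5 k)).1
  · -- t > 0
    rw [abs_of_pos htpos] at ht
    have main : ∀ k : ℕ, 0 < q (4*k) ∧ (8*(k:ℝ)+3)*t^2*q (4*k) ≤ q (4*k+1) := by
      intro k
      induction k with
      | zero =>
        constructor
        · norm_num [h0]
        · norm_num [h0, h1]
      | succ k ih =>
        obtain ⟨hu, hv⟩ := ih
        obtain ⟨hg1, hg2, hg3⟩ := aux_pos (k:ℝ) (a:ℝ) t (q (4*k)) (q (4*k+1)) (q (4*k+4)) (q (4*k+5))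
          (Nat.cast_nonneg k) ha' htpos ht hu hv (hident k) (hident5 k)
        have e : 4*(k+1) = 4*k+4 := by ring
        have e2 : 4*(k+1)+1 = 4*k+5 := by ring
        rw [e2, e]
        push_cast
        exact ⟨hg2, by linarith [hg3]⟩
    intro k
    obtain ⟨hu, hv⟩ := main k
    exact (aux_pos (k:ℝ) (a:ℝ) t (q (4*k)) (q (4*k+1)) (q (4*k+4)) (q (4*k+5))
      (Nat.cast_nonneg k) ha' htpos ht hu hv (hident k) (hident5 k)).1
end
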